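/- arXiv:2504.09637 — 9 statements merged into one kernel-verified Lean document; each statement's English description precedes it below -/
import Mathlib

section
/- For every real exponent q with 1 < q ≤ 2, the inequality ||a+b|^q − |a|^q − q·|a|^{q−2}·a·b| ≤ B_q·|b|^q holds for all real numbers a, b (with the convention that |a|^{q−2}·a·b = 0 when a = 0), for some constant B_q > 0 depending only on q. -/
open Real Set

private lemma add_rpow_le' (x y p : ℝ) (hx : 0 ≤ x) (hy : 0 ≤ y) (hp : 0 ≤ p) (hp1 : p ≤ 1) :
    (x + y) ^ p ≤ x ^ p + y ^ p := by
  have h := NNReal.rpow_add_le_add_rpow x.toNNReal y.toNNReal hp hp1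
  have h2 := NNReal.coe_le_coe.2 h
  rw [← Real.toNNReal_add hx hy] at h2
  simpa [NNReal.coe_rpow, Real.coe_toNNReal _ hx, Real.coe_toNNReal _ hy,
    Real.coe_toNNReal _ (by linarith : (0:ℝ) ≤ x + y)] using h2

private lemma rpow_sub_rpow_le' {x y p : ℝ} (hy : 0 ≤ y) (hxy : y ≤ x) (hp : 0 ≤ p) (hp1 : p ≤ 1) :
    x ^ p - y ^ p ≤ (x - y) ^ p := by
  have h := add_rpow_le' y (x - y) p hy (by linarith) hp hp1
  have : (y + (x - y)) = x := by ring
  rw [this] at h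
  linarith

private lemma key_mvt (q : ℝ) (hq1 : 1 < q) (hq2 : q ≤ 2) (a b : ℝ) (ha : 0 < a)
    (hb : 2 * |b| ≤ a) :
    |(a + b) ^ q - a ^ q - q * a ^ (q - 1) * b| ≤ q * |b| ^ q := by
  rcases eq_or_ne b 0 with rfl | hb0
  · simp [Real.zero_rpow (by positivity : q ≠ 0)]
  set s : Set ℝ := Set.uIcc (0:ℝ) b with hs
  have habs : ∀ x ∈ s, |x| ≤ |b| := by
    intro x hx
    rw [Set.mem_uIcc] at hx
    rcases hx with ⟨h1, h2⟩ | ⟨h1, h2⟩ <;> rw [abs_le] <;>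
      constructor <;> nlinarith [neg_abs_le b, le_abs_self b]
  have hmem : ∀ x ∈ s, 0 < a + x := by
    intro x hx
    have := habs x hx
    nlinarith [neg_abs_le x]
  set F : ℝ → ℝ := fun x => (a + x) ^ q - q * a ^ (q - 1) * x with hF
  set F' : ℝ → ℝ := fun x => q * (a + x) ^ (q - 1) - q * a ^ (q - 1) with hF'
  have hderiv : ∀ x ∈ s, HasDerivWithinAt F (F' x) s x := by
    intro x hx
    have h1 : HasDerivAt (fun y : ℝ => (a + y) ^ q) (q * (a + x) ^ (q - 1)) x := by
      have h2 := (Real.hasDerivAt_rpow_const (p := q) (x := a + x)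
        (Or.inl (hmem x hx).ne')).comp x (((hasDerivAt_id x).const_add a))
      simpa [Function.comp_def] using h2
    have h3 : HasDerivAt (fun y : ℝ => q * a ^ (q - 1) * y) (q * a ^ (q - 1)) x := by
      simpa using (hasDerivAt_id x).const_mul (q * a ^ (q - 1))
    exact (h1.sub h3).hasDerivWithinAt
  have hbound : ∀ x ∈ s, ‖F' x‖ ≤ q * |b| ^ (q - 1) := by
    intro x hx
    have hax : 0 < a + x := hmem x hx
    have hxb : |x| ≤ |b| := habs x hx
    have hp0 : (0:ℝ) ≤ q - 1 := by linarith
    have hp1 : q - 1 ≤ 1 := by linarith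
    have key2 : |(a + x) ^ (q - 1) - a ^ (q - 1)| ≤ |x| ^ (q - 1) := by
      rcases le_total a (a + x) with h | h
      · have h4 := rpow_sub_rpow_le' (x := a + x) (y := a) ha.le h hp0 hp1
        have hx0 : 0 ≤ x := by linarith
        have h5 : a ^ (q - 1) ≤ (a + x) ^ (q - 1) :=
          Real.rpow_le_rpow ha.le h hp0
        rw [abs_of_nonneg (by linarith), abs_of_nonneg hx0]
        simpa using h4
      · have h4 := rpow_sub_rpow_le' (x := a) (y := a + x) hax.le h hp0 hp1
        have hx0 : x ≤ 0 := by linarith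
        have h5 : (a + x) ^ (q - 1) ≤ a ^ (q - 1) :=
          Real.rpow_le_rpow hax.le h hp0
        rw [abs_of_nonpos (by linarith), abs_of_nonpos hx0]
        have : a - (a + x) = -x := by ring
        rw [this] at h4
        linarith
    have h6 : |x| ^ (q - 1) ≤ |b| ^ (q - 1) :=
      Real.rpow_le_rpow (abs_nonneg x) hxb hp0
    have : ‖F' x‖ = q * |(a + x) ^ (q - 1) - a ^ (q - 1)| := by
      rw [Real.norm_eq_abs]
      show |q * (a + x) ^ (q - 1) - q * a ^ (q - 1)| = _
      rw [← mul_sub, abs_mul, abs_of_nonneg (by linarith : (0:ℝ) ≤ q)]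
    rw [this]
    have hq0 : (0:ℝ) ≤ q := by linarith
    nlinarith
  have hmvt := (convex_uIcc (0:ℝ) b).norm_image_sub_le_of_norm_hasDerivWithin_le
    hderiv hbound (Set.left_mem_uIcc) (Set.right_mem_uIcc)
  have hF0 : F 0 = a ^ q := by simp [hF]
  have hFb : F b = (a + b) ^ q - q * a ^ (q - 1) * b := rfl
  rw [hF0, hFb, Real.norm_eq_abs, Real.norm_eq_abs, sub_zero] at hmvt
  have hrw : q * |b| ^ (q - 1) * |b| = q * |b| ^ q := by
    rw [mul_assoc, ← Real.rpow_add_one (abs_ne_zero.2 hb0)]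
    ring_nf
  calc |(a + b) ^ q - a ^ q - q * a ^ (q - 1) * b|
      = |(a + b) ^ q - q * a ^ (q - 1) * b - a ^ q| := by ring_nf
    _ ≤ q * |b| ^ (q - 1) * |b| := hmvt
    _ = q * |b| ^ q := hrw

/-- For every `1 < q ≤ 2` there is a constant `B_q > 0` such that
`||a+b|^q − |a|^q − q·|a|^{q−2}·a·b| ≤ B_q·|b|^q` for all real `a, b`,
where `|a|^{q-2}·a` is interpreted as `sign a * |a|^{q-1}` (so `0` when `a = 0`). -/
theorem stmt_0 (q : ℝ) (hq1 : 1 < q) (hq2 : q ≤ 2) :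
    ∃ B : ℝ, 0 < B ∧ ∀ a b : ℝ,
      |(|a + b| ^ q - |a| ^ q - q * (Real.sign a * |a| ^ (q - 1)) * b)| ≤ B * |b| ^ q := by
  refine ⟨17, by norm_num, fun a b => ?_⟩
  rcases eq_or_ne b 0 with rfl | hb0
  · simp [Real.zero_rpow (by positivity : q ≠ 0)]
  have hb' : 0 < |b| := abs_pos.2 hb0
  have hbq : (0:ℝ) < |b| ^ q := Real.rpow_pos_of_pos hb' q
  by_cases hcase : 2 * |b| ≤ |a|
  · have ha0 : a ≠ 0 := by
      intro h; rw [h, abs_zero] at hcase; linarith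
    have hfin : q * |b| ^ q ≤ 17 * |b| ^ q := by nlinarith
    rcases ha0.lt_or_gt with ha | ha
    · have habs : |a| = -a := abs_of_neg ha
      have hsign : Real.sign a = -1 := Real.sign_of_neg ha
      have hab : a + b < 0 := by
        have := le_abs_self b; have := neg_abs_le b; rw [habs] at hcase; nlinarith
      have h := key_mvt q hq1 hq2 (-a) (-b) (by linarith)
        (by rw [abs_neg]; rw [habs] at hcase; linarith)
      rw [abs_of_neg hab, habs, hsign]
      have e1 : -(a + b) = -a + -b := by ring
      have e2 : q * (-1 * (-a) ^ (q - 1)) * b = q * (-a) ^ (q - 1) * (-b) := by ring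
      rw [e1, e2] at *
      calc |(-a + -b) ^ q - (-a) ^ q - q * (-a) ^ (q - 1) * (-b)|
          ≤ q * |(-b)| ^ q := h
        _ = q * |b| ^ q := by rw [abs_neg]
        _ ≤ 17 * |b| ^ q := hfin
    · have habs : |a| = a := abs_of_pos ha
      have hsign : Real.sign a = 1 := Real.sign_of_pos ha
      have hab : 0 < a + b := by
        have := neg_abs_le b; rw [habs] at hcase; nlinarith
      have h := key_mvt q hq1 hq2 a b ha (by rw [habs] at hcase; linarith)
      rw [abs_of_pos hab, habs, hsign]
      calc |(a + b) ^ q - a ^ q - q * (1 * a ^ (q - 1)) * b|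
          = |(a + b) ^ q - a ^ q - q * a ^ (q - 1) * b| := by ring_nf
        _ ≤ q * |b| ^ q := h
        _ ≤ 17 * |b| ^ q := hfin
  · push_neg at hcase
    have hX : |a + b| ^ q ≤ 9 * |b| ^ q := by
      have h1 : |a + b| ≤ 3 * |b| := (abs_add_le a b).trans (by linarith)
      calc |a + b| ^ q ≤ (3 * |b|) ^ q :=
            Real.rpow_le_rpow (abs_nonneg _) h1 (by linarith)
        _ = 3 ^ q * |b| ^ q := Real.mul_rpow (by norm_num) (abs_nonneg b)
        _ ≤ 9 * |b| ^ q := by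
            have h2 : (3:ℝ) ^ q ≤ 3 ^ (2:ℝ) :=
              Real.rpow_le_rpow_of_exponent_le (by norm_num) hq2
            have h3 : (3:ℝ) ^ (2:ℝ) = 9 := by
              rw [show (2:ℝ) = ((2:ℕ):ℝ) by norm_num, Real.rpow_natCast]; norm_num
            nlinarith
    have hY : |a| ^ q ≤ 4 * |b| ^ q := by
      calc |a| ^ q ≤ (2 * |b|) ^ q :=
            Real.rpow_le_rpow (abs_nonneg _) hcase.le (by linarith)
        _ = 2 ^ q * |b| ^ q := Real.mul_rpow (by norm_num) (abs_nonneg b)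
        _ ≤ 4 * |b| ^ q := by
            have h2 : (2:ℝ) ^ q ≤ 2 ^ (2:ℝ) :=
              Real.rpow_le_rpow_of_exponent_le (by norm_num) hq2
            have h3 : (2:ℝ) ^ (2:ℝ) = 4 := by
              rw [show (2:ℝ) = ((2:ℕ):ℝ) by norm_num, Real.rpow_natCast]; norm_num
            nlinarith
    have hZ : q * |a| ^ (q - 1) * |b| ≤ 4 * |b| ^ q := by
      have h1 : |a| ^ (q - 1) ≤ (2 * |b|) ^ (q - 1) :=
        Real.rpow_le_rpow (abs_nonneg _) hcase.le (by linarith)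
      have h2 : (2 * |b|) ^ (q - 1) = 2 ^ (q - 1) * |b| ^ (q - 1) :=
        Real.mul_rpow (by norm_num) (abs_nonneg b)
      have h3 : (2:ℝ) ^ (q - 1) ≤ 2 ^ (1:ℝ) :=
        Real.rpow_le_rpow_of_exponent_le (by norm_num) (by linarith)
      have h4 : (2:ℝ) ^ (1:ℝ) = 2 := Real.rpow_one 2
      have h5 : |b| ^ (q - 1) * |b| = |b| ^ q := by
        rw [← Real.rpow_add_one (abs_ne_zero.2 hb0)]; ring_nf
      have h6 : (0:ℝ) < |b| ^ (q - 1) := Real.rpow_pos_of_pos hb' _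
      have h8 : (0:ℝ) ≤ |a| ^ (q - 1) := Real.rpow_nonneg (abs_nonneg a) _
      have h7 : |a| ^ (q - 1) ≤ 2 * |b| ^ (q - 1) := by
        rw [h2] at h1; nlinarith
      have hA : |a| ^ (q - 1) * |b| ≤ 2 * |b| ^ (q - 1) * |b| := by nlinarith [abs_nonneg b]
      have hB : q * (|a| ^ (q - 1) * |b|) ≤ 2 * (2 * |b| ^ (q - 1) * |b|) := by
        nlinarith [mul_nonneg h8 (abs_nonneg b)]
      calc q * |a| ^ (q - 1) * |b| = q * (|a| ^ (q - 1) * |b|) := by ring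
        _ ≤ 2 * (2 * |b| ^ (q - 1) * |b|) := hB
        _ = 4 * (|b| ^ (q - 1) * |b|) := by ring
        _ = 4 * |b| ^ q := by rw [h5]
    have hsgn : |Real.sign a| ≤ 1 := by
      rcases lt_trichotomy a 0 with h | h | h <;>
        simp [Real.sign_of_neg, Real.sign_of_pos, h]
    have hZ' : |q * (Real.sign a * |a| ^ (q - 1)) * b| ≤ q * |a| ^ (q - 1) * |b| := by
      rw [abs_mul, abs_mul, abs_mul]
      have h8 : (0:ℝ) ≤ |a| ^ (q - 1) := Real.rpow_nonneg (abs_nonneg a) _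
      have hq0 : |q| = q := abs_of_pos (by linarith)
      have ha8 : |(|a| ^ (q - 1))| = |a| ^ (q - 1) := abs_of_nonneg h8
      rw [hq0, ha8]
      nlinarith [mul_nonneg (mul_nonneg (sub_nonneg.2 hsgn) h8) (abs_nonneg b),
        abs_nonneg (Real.sign a)]
    have hXa : |(|a + b| ^ q)| = |a + b| ^ q :=
      abs_of_nonneg (Real.rpow_nonneg (abs_nonneg _) _)
    have hYa : |(|a| ^ q)| = |a| ^ q :=
      abs_of_nonneg (Real.rpow_nonneg (abs_nonneg _) _)
    have htri : |(|a + b| ^ q - |a| ^ q - q * (Real.sign a * |a| ^ (q - 1)) * b)| ≤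
        |(|a + b| ^ q)| + |(|a| ^ q)| + |q * (Real.sign a * |a| ^ (q - 1)) * b| := by
      have t1 := abs_add_le (|a + b| ^ q - |a| ^ q) (-(q * (Real.sign a * |a| ^ (q - 1)) * b))
      have t2 := abs_sub (|a + b| ^ q) (|a| ^ q)
      rw [abs_neg] at t1
      have e : |a + b| ^ q - |a| ^ q - q * (Real.sign a * |a| ^ (q - 1)) * b =
        (|a + b| ^ q - |a| ^ q) + -(q * (Real.sign a * |a| ^ (q - 1)) * b) := by ring
      rw [e]
      linarith
    rw [hXa, hYa] at htri
    have := hZ'.trans hZ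
    linarith
end

section
/- For every real exponent q ≥ 2, there exist positive constants A_q and B_q such that for all real numbers a, b one has ||a+b|^q − |a|^q − q·|a|^{q−2}·a·b| ≤ A_q·|a|^{q−2}·|b|^2 + B_q·|b|^q. -/
open Real

/-- Key estimate for positive `a` and small `b`, Taylor with double MVT. -/
lemma key_pos (q : ℝ) (hq : 2 ≤ q) (a b : ℝ) (ha : 0 < a) (hb : |b| ≤ a / 2) :
    |(a + b) ^ q - a ^ q - q * a ^ (q - 1) * b| ≤
      q * (q - 1) * (3 / 2 * a) ^ (q - 2) * b ^ 2 := by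
  set s : Set ℝ := Set.Icc (a - |b|) (a + |b|) with hs
  have hconv : Convex ℝ s := convex_Icc _ _
  have hmem : ∀ x ∈ s, a / 2 ≤ x ∧ x ≤ 3 / 2 * a := by
    intro x hx
    obtain ⟨h1, h2⟩ := hx
    constructor <;> nlinarith
  have hpos : ∀ x ∈ s, 0 < x := fun x hx => lt_of_lt_of_le (by linarith) (hmem x hx).1
  have has : a ∈ s := ⟨by linarith [abs_nonneg b], by linarith [abs_nonneg b]⟩
  have habs : a + b ∈ s := by
    constructor
    · linarith [neg_abs_le b]
    · linarith [le_abs_self b]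
  set C2 : ℝ := q * (q - 1) * (3 / 2 * a) ^ (q - 2) with hC2
  -- Step A : derivative of f' is bounded, so f' is Lipschitz on s
  have stepA : ∀ x ∈ s, |q * x ^ (q - 1) - q * a ^ (q - 1)| ≤ C2 * |x - a| := by
    intro x hx
    have := hconv.norm_image_sub_le_of_norm_hasDerivWithin_le
      (f := fun y => q * y ^ (q - 1)) (f' := fun y => q * ((q - 1) * y ^ (q - 1 - 1)))
      (C := C2)
      (fun y hy => ((Real.hasDerivAt_rpow_const (p := q - 1)
        (Or.inl (hpos y hy).ne')).const_mul q).hasDerivWithinAt)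
      (fun y hy => by
        have hy0 : 0 < y := hpos y hy
        have hle : y ^ (q - 1 - 1) ≤ (3 / 2 * a) ^ (q - 1 - 1) :=
          Real.rpow_le_rpow hy0.le (hmem y hy).2 (by linarith)
        have h1 : q - 1 - 1 = q - 2 := by ring
        rw [h1] at hle
        rw [Real.norm_eq_abs, abs_mul, abs_mul, abs_of_nonneg (by linarith : (0:ℝ) ≤ q),
          abs_of_nonneg (by linarith : (0:ℝ) ≤ q - 1),
          abs_of_nonneg (Real.rpow_nonneg hy0.le _), h1]
        rw [hC2]
        have hq1 : (0:ℝ) ≤ q * (q - 1) := by nlinarith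
        nlinarith [mul_le_mul_of_nonneg_left hle hq1])
      has hx
    simpa [Real.norm_eq_abs] using this
  -- Step B : bound derivative of the Taylor remainder on s
  have stepB := hconv.norm_image_sub_le_of_norm_hasDerivWithin_le
    (f := fun y => y ^ q - a ^ q - q * a ^ (q - 1) * (y - a))
    (f' := fun y => q * y ^ (q - 1) - q * a ^ (q - 1))
    (C := C2 * |b|)
    (fun y hy => by
      have h1 : HasDerivAt (fun y : ℝ => y ^ q) (q * y ^ (q - 1)) y :=
        Real.hasDerivAt_rpow_const (Or.inl (hpos y hy).ne')
      have h2 : HasDerivAt (fun y : ℝ => y ^ q - a ^ q - q * a ^ (q - 1) * (y - a))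
          (q * y ^ (q - 1) - q * a ^ (q - 1)) y := by
        have := (h1.sub_const (a ^ q)).sub
          (((hasDerivAt_id y).sub_const a).const_mul (q * a ^ (q - 1)))
        simp only [mul_one] at this; exact this
      exact h2.hasDerivWithinAt)
    (fun y hy => by
      have h1 : |y - a| ≤ |b| := by
        rw [abs_sub_le_iff]
        obtain ⟨hy1, hy2⟩ := hy
        constructor <;> linarith
      have h2 := stepA y hy
      have hC2nn : 0 ≤ C2 := by
        rw [hC2]
        have h := Real.rpow_nonneg (by linarith : (0:ℝ) ≤ 3 / 2 * a) (q - 2)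
        have hq1 : (0:ℝ) ≤ q * (q - 1) := by nlinarith
        exact mul_nonneg hq1 h
      calc ‖q * y ^ (q - 1) - q * a ^ (q - 1)‖ ≤ C2 * |y - a| := by
            simpa [Real.norm_eq_abs] using h2
        _ ≤ C2 * |b| := by nlinarith)
    has habs
  have : |(a + b) ^ q - a ^ q - q * a ^ (q - 1) * b| ≤ C2 * |b| * |b| := by
    simpa [Real.norm_eq_abs, add_sub_cancel_left] using stepB
  calc |(a + b) ^ q - a ^ q - q * a ^ (q - 1) * b| ≤ C2 * |b| * |b| := this
    _ = C2 * b ^ 2 := by rw [mul_assoc, ← abs_mul, ← sq, abs_of_nonneg (sq_nonneg b)]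

/-- For every `q ≥ 2` there exist positive constants `A_q, B_q` such that
`||a+b|^q − |a|^q − q·|a|^{q−2}·a·b| ≤ A_q·|a|^{q−2}·|b|² + B_q·|b|^q` for all real `a, b`,
where `|a|^{q-2}·a` means `sign a * |a|^{q-1}` (so `0` when `a = 0`). -/
theorem stmt_1 (q : ℝ) (hq : 2 ≤ q) :
    ∃ A B : ℝ, 0 < A ∧ 0 < B ∧ ∀ a b : ℝ,
      |(|a + b| ^ q - |a| ^ q - q * (Real.sign a * |a| ^ (q - 1)) * b)| ≤
        A * |a| ^ (q - 2) * |b| ^ 2 + B * |b| ^ q := by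
  refine ⟨q * (q - 1) * (3 / 2) ^ (q - 2), 3 ^ q + 2 ^ q + q * 2 ^ (q - 1), ?_, ?_, ?_⟩
  · have h := Real.rpow_pos_of_pos (by norm_num : (0:ℝ) < 3/2) (q - 2)
    have hq1 : (0:ℝ) < q * (q - 1) := by nlinarith
    exact mul_pos hq1 h
  · have h3 := Real.rpow_pos_of_pos (by norm_num : (0:ℝ) < 3) q
    have h2 := Real.rpow_pos_of_pos (by norm_num : (0:ℝ) < 2) q
    have h2' := Real.rpow_pos_of_pos (by norm_num : (0:ℝ) < 2) (q - 1)
    have := mul_pos (show (0:ℝ) < q by linarith) h2'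
    linarith
  intro a b
  -- the claimed bound for positive a, small b, in the |·| / sign formulation
  have main : ∀ a b : ℝ, 0 < a → |b| ≤ |a| / 2 →
      |(|a + b| ^ q - |a| ^ q - q * (Real.sign a * |a| ^ (q - 1)) * b)| ≤
        q * (q - 1) * (3 / 2) ^ (q - 2) * |a| ^ (q - 2) * |b| ^ 2 := by
    intro a b ha hb
    have habs : |a| = a := abs_of_pos ha
    rw [habs] at hb ⊢
    have hab : 0 < a + b := by
      have := neg_abs_le b; linarith
    rw [abs_of_pos hab, Real.sign_of_pos ha, one_mul]
    have key := key_pos q hq a b ha hb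
    have hmul : (3 / 2 * a) ^ (q - 2) = (3 / 2 : ℝ) ^ (q - 2) * a ^ (q - 2) :=
      Real.mul_rpow (by norm_num) ha.le
    rw [sq_abs]
    calc |(a + b) ^ q - a ^ q - q * a ^ (q - 1) * b| ≤
        q * (q - 1) * (3 / 2 * a) ^ (q - 2) * b ^ 2 := key
      _ = q * (q - 1) * (3 / 2) ^ (q - 2) * a ^ (q - 2) * b ^ 2 := by rw [hmul]; ring
  rcases le_or_gt (|b|) (|a| / 2) with hb | hb
  · -- small b case
    have hA : 0 ≤ q * (q - 1) * (3 / 2) ^ (q - 2) * |a| ^ (q - 2) * |b| ^ 2 := by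
      have h1 := Real.rpow_nonneg (by norm_num : (0:ℝ) ≤ 3/2) (q - 2)
      have h2 := Real.rpow_nonneg (abs_nonneg a) (q - 2)
      have hq1 : (0:ℝ) ≤ q * (q - 1) := by nlinarith
      exact mul_nonneg (mul_nonneg (mul_nonneg hq1 h1) h2) (sq_nonneg _)
    have hBterm : 0 ≤ (3 ^ q + 2 ^ q + q * 2 ^ (q - 1)) * |b| ^ q := by
      have h3 := Real.rpow_pos_of_pos (by norm_num : (0:ℝ) < 3) q
      have h2 := Real.rpow_pos_of_pos (by norm_num : (0:ℝ) < 2) q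
      have h2' := Real.rpow_pos_of_pos (by norm_num : (0:ℝ) < 2) (q - 1)
      have hb := Real.rpow_nonneg (abs_nonneg b) q
      have := mul_pos (show (0:ℝ) < q by linarith) h2'
      exact mul_nonneg (by linarith) hb
    rcases lt_trichotomy a 0 with hneg | hzero | hpos
    · -- a < 0 : apply main to (-a, -b)
      have h := main (-a) (-b) (by linarith) (by simpa using hb)
      have e1 : |(-a) + (-b)| = |a + b| := by rw [show (-a) + (-b) = -(a+b) by ring, abs_neg]
      have e2 : |(-a)| = |a| := abs_neg a
      have e3 : Real.sign (-a) = - Real.sign a := Real.sign_neg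
      rw [e1, e2, e3] at h
      have e4 : |a + b| ^ q - |a| ^ q - q * (-Real.sign a * |a| ^ (q - 1)) * (-b)
          = |a + b| ^ q - |a| ^ q - q * (Real.sign a * |a| ^ (q - 1)) * b := by ring
      rw [e4, abs_neg] at h
      linarith
    · -- a = 0 forces b = 0
      have hb0 : b = 0 := by
        have h : |b| ≤ 0 := by rw [hzero] at hb; simpa using hb
        exact abs_eq_zero.mp (le_antisymm h (abs_nonneg b))
      subst hzero; subst hb0
      have hq0 : q ≠ 0 := by intro h; rw [h] at hq; norm_num at hq
      simp [Real.zero_rpow hq0]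
    · have h := main a b hpos hb
      linarith
  · -- large b case : b ≠ 0, bound termwise
    have hbpos : 0 < |b| := lt_of_le_of_lt (by positivity) hb
    have ha2b : |a| ≤ 2 * |b| := by linarith
    have hAterm : 0 ≤ q * (q - 1) * (3 / 2) ^ (q - 2) * |a| ^ (q - 2) * |b| ^ 2 := by
      have h1 := Real.rpow_nonneg (by norm_num : (0:ℝ) ≤ 3/2) (q - 2)
      have h2 := Real.rpow_nonneg (abs_nonneg a) (q - 2)
      have hq1 : (0:ℝ) ≤ q * (q - 1) := by nlinarith
      exact mul_nonneg (mul_nonneg (mul_nonneg hq1 h1) h2) (sq_nonneg _)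
    have t1 : |a + b| ^ q ≤ 3 ^ q * |b| ^ q := by
      have : |a + b| ≤ 3 * |b| := by
        calc |a + b| ≤ |a| + |b| := abs_add_le a b
          _ ≤ 3 * |b| := by linarith
      calc |a + b| ^ q ≤ (3 * |b|) ^ q :=
          Real.rpow_le_rpow (abs_nonneg _) this (by linarith)
        _ = 3 ^ q * |b| ^ q := Real.mul_rpow (by norm_num) (abs_nonneg b)
    have t2 : |a| ^ q ≤ 2 ^ q * |b| ^ q := by
      calc |a| ^ q ≤ (2 * |b|) ^ q :=
          Real.rpow_le_rpow (abs_nonneg _) ha2b (by linarith)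
        _ = 2 ^ q * |b| ^ q := Real.mul_rpow (by norm_num) (abs_nonneg b)
    have t3 : |q * (Real.sign a * |a| ^ (q - 1)) * b| ≤ q * 2 ^ (q - 1) * |b| ^ q := by
      have hsign : |Real.sign a| ≤ 1 := by
        rcases lt_trichotomy a 0 with h | h | h
        · rw [Real.sign_of_neg h]; norm_num
        · subst h; simp
        · rw [Real.sign_of_pos h]; norm_num
      have h1 : |a| ^ (q - 1) ≤ 2 ^ (q - 1) * |b| ^ (q - 1) := by
        calc |a| ^ (q - 1) ≤ (2 * |b|) ^ (q - 1) :=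
            Real.rpow_le_rpow (abs_nonneg _) ha2b (by linarith)
          _ = 2 ^ (q - 1) * |b| ^ (q - 1) := Real.mul_rpow (by norm_num) (abs_nonneg b)
      have h2 : |b| ^ (q - 1) * |b| = |b| ^ q := by
        rw [← Real.rpow_add_one hbpos.ne' (q - 1)]; norm_num
      have e : |q * (Real.sign a * |a| ^ (q - 1)) * b|
          = q * |Real.sign a| * |a| ^ (q - 1) * |b| := by
        rw [abs_mul, abs_mul, abs_mul, abs_of_nonneg (by linarith : (0:ℝ) ≤ q),
          abs_of_nonneg (Real.rpow_nonneg (abs_nonneg a) _)]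
        ring
      rw [e, ← h2]
      have hbq1 := Real.rpow_nonneg (abs_nonneg b) (q - 1)
      have haq1 := Real.rpow_nonneg (abs_nonneg a) (q - 1)
      have h2q1 := Real.rpow_nonneg (by norm_num : (0:ℝ) ≤ 2) (q - 1)
      have habs := abs_nonneg (Real.sign a)
      nlinarith [mul_le_mul_of_nonneg_right h1 (abs_nonneg b),
        mul_le_mul_of_nonneg_right hsign (mul_nonneg haq1 (abs_nonneg b))]
    have tri : |(|a + b| ^ q - |a| ^ q - q * (Real.sign a * |a| ^ (q - 1)) * b)| ≤
        |a + b| ^ q + |a| ^ q + |q * (Real.sign a * |a| ^ (q - 1)) * b| := by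
      have h1 := abs_sub (|a + b| ^ q - |a| ^ q) (q * (Real.sign a * |a| ^ (q - 1)) * b)
      have h2 := abs_sub (|a + b| ^ q) (|a| ^ q)
      have h3 : |(|a + b| ^ q)| = |a + b| ^ q := abs_of_nonneg (Real.rpow_nonneg (abs_nonneg _) q)
      have h4 : |(|a| ^ q)| = |a| ^ q := abs_of_nonneg (Real.rpow_nonneg (abs_nonneg _) q)
      linarith
    have : |(|a + b| ^ q - |a| ^ q - q * (Real.sign a * |a| ^ (q - 1)) * b)| ≤
        (3 ^ q + 2 ^ q + q * 2 ^ (q - 1)) * |b| ^ q := by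
      have := tri
      nlinarith
    linarith
end

section
/- For every real exponent q > 1 and dimension N ≥ 1, there exist constants A_q, B_q > 0 (with A_q = 0 allowed when 1 < q ≤ 2) such that for all vectors x, y ∈ ℝ^N one has |x+y|^q ≤ |x|^q + q·|x|^{q−2}⟨x, y⟩ + A_q·|x|^{q−2}·|y|^2 + B_q·|y|^q. -/
open Real

private lemma rpow_mul_self {c e : ℝ} (hc : 0 ≤ c) (he : e + 1 ≠ 0) :
    c ^ e * c = c ^ (e + 1) := by
  rw [Real.rpow_add' hc he, Real.rpow_one]

private lemma rpow_mvt_hi {β a b : ℝ} (hβ : 1 ≤ β) (hb : 0 ≤ b) (hab : b ≤ a) :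
    a ^ β - b ^ β ≤ β * a ^ (β - 1) * (a - b) := by
  have hβ0 : (0:ℝ) < β := lt_of_lt_of_le one_pos hβ
  rcases eq_or_lt_of_le (hb.trans hab) with ha | ha
  · have ha0 : a = 0 := ha.symm
    have hb0 : b = 0 := le_antisymm (ha0 ▸ hab) hb
    simp [ha0, hb0, Real.zero_rpow hβ0.ne']
  · have hs : -1 ≤ b / a - 1 := by
      have : 0 ≤ b / a := div_nonneg hb ha.le
      linarith
    have key := one_add_mul_self_le_rpow_one_add hs hβ
    rw [show 1 + (b / a - 1) = b / a by ring] at key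
    have hdiv : (b / a) ^ β = b ^ β / a ^ β := Real.div_rpow hb ha.le β
    have hapow : 0 < a ^ β := Real.rpow_pos_of_pos ha β
    have hone : a ^ (β - 1) * a = a ^ β := by
      rw [rpow_mul_self ha.le (by rw [sub_add_cancel]; exact hβ0.ne'), sub_add_cancel]
    have key2 : a ^ β * (1 + β * (b / a - 1)) ≤ b ^ β := by
      calc a ^ β * (1 + β * (b / a - 1)) ≤ a ^ β * ((b / a) ^ β) := by nlinarith
        _ = b ^ β := by rw [hdiv]; field_simp
    have h2 : a ^ β * (b / a) = a ^ (β - 1) * b := by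
      rw [← hone]; field_simp
    have key3 : a ^ β + β * (a ^ (β - 1) * b) - β * a ^ β ≤ b ^ β := by
      calc a ^ β + β * (a ^ (β - 1) * b) - β * a ^ β
          = a ^ β * (1 + β * (b / a - 1)) := by rw [← h2]; ring
        _ ≤ b ^ β := key2
    have goal2 : β * a ^ (β - 1) * (a - b) = β * a ^ β - β * (a ^ (β - 1) * b) := by
      rw [← hone]; ring
    linarith

private lemma rpow_mvt_lo {β a b : ℝ} (hβ0 : 0 < β) (hβ1 : β ≤ 1) (hb : 0 < b) (hab : b ≤ a) :
    a ^ β - b ^ β ≤ β * b ^ (β - 1) * (a - b) := by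
  have hs : -1 ≤ a / b - 1 := by
    have : 0 ≤ a / b := div_nonneg (hb.le.trans hab) hb.le
    linarith
  have key := rpow_one_add_le_one_add_mul_self hs hβ0.le hβ1
  rw [show 1 + (a / b - 1) = a / b by ring] at key
  have hdiv : (a / b) ^ β = a ^ β / b ^ β := Real.div_rpow (hb.le.trans hab) hb.le β
  have hbpow : 0 < b ^ β := Real.rpow_pos_of_pos hb β
  have hone : b ^ (β - 1) * b = b ^ β := by
    rw [rpow_mul_self hb.le (by rw [sub_add_cancel]; exact hβ0.ne'), sub_add_cancel]
  have key2 : a ^ β ≤ b ^ β * (1 + β * (a / b - 1)) := by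
    calc a ^ β = b ^ β * ((a / b) ^ β) := by rw [hdiv]; field_simp
      _ ≤ b ^ β * (1 + β * (a / b - 1)) := by nlinarith
  have h2 : b ^ β * (a / b) = b ^ (β - 1) * a := by
    rw [← hone]; field_simp
  have key3 : a ^ β ≤ b ^ β + β * (b ^ (β - 1) * a) - β * b ^ β := by
    calc a ^ β ≤ b ^ β * (1 + β * (a / b - 1)) := key2
      _ = b ^ β + β * (b ^ (β - 1) * a) - β * b ^ β := by rw [← h2]; ring
  have goal2 : β * b ^ (β - 1) * (a - b) = β * (b ^ (β - 1) * a) - β * b ^ β := by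
    rw [← hone]; ring
  linarith

section Vec
variable {E : Type*} [NormedAddCommGroup E] [InnerProductSpace ℝ E]

private lemma norm_rpow_smul {α : ℝ} (hα : α ≠ 0) (v : E) :
    ‖‖v‖ ^ (α - 1) • v‖ = ‖v‖ ^ α := by
  rw [norm_smul, Real.norm_eq_abs, abs_of_nonneg (Real.rpow_nonneg (norm_nonneg v) _),
    rpow_mul_self (norm_nonneg v) (by rw [sub_add_cancel]; exact hα), sub_add_cancel]

private lemma holder_core {α : ℝ} (h0 : 0 < α) (h1 : α ≤ 1) {z w : E} (hwz : ‖w‖ ≤ ‖z‖) :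
    ‖‖z‖ ^ (α - 1) • z - ‖w‖ ^ (α - 1) • w‖ ≤ 2 * ‖z - w‖ ^ α := by
  have hd0 : 0 ≤ ‖z - w‖ := norm_nonneg _
  rcases le_or_gt ‖z‖ ‖z - w‖ with hcase | hcase
  · calc ‖‖z‖ ^ (α - 1) • z - ‖w‖ ^ (α - 1) • w‖
        ≤ ‖‖z‖ ^ (α - 1) • z‖ + ‖‖w‖ ^ (α - 1) • w‖ := norm_sub_le _ _
      _ = ‖z‖ ^ α + ‖w‖ ^ α := by rw [norm_rpow_smul h0.ne', norm_rpow_smul h0.ne']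
      _ ≤ ‖z - w‖ ^ α + ‖z - w‖ ^ α :=
          add_le_add (Real.rpow_le_rpow (norm_nonneg z) hcase h0.le)
            (Real.rpow_le_rpow (norm_nonneg w) (hwz.trans hcase) h0.le)
      _ = 2 * ‖z - w‖ ^ α := by ring
  · rcases eq_or_lt_of_le hd0 with hd0' | hd0'
    · have hzw : z = w := by
        rw [← sub_eq_zero, ← norm_eq_zero]; exact hd0'.symm
      simp [hzw, Real.zero_rpow h0.ne']
    have hz0 : 0 < ‖z‖ := hd0'.trans hcase
    have decomp : ‖z‖ ^ (α - 1) • z - ‖w‖ ^ (α - 1) • w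
        = ‖z‖ ^ (α - 1) • (z - w) + (‖z‖ ^ (α - 1) - ‖w‖ ^ (α - 1)) • w := by
      rw [smul_sub, sub_smul]; abel
    have hzd : ‖z‖ ^ (α - 1) ≤ ‖z - w‖ ^ (α - 1) :=
      Real.rpow_le_rpow_of_nonpos hd0' hcase.le (by linarith)
    have hda : ‖z - w‖ ^ (α - 1) * ‖z - w‖ = ‖z - w‖ ^ α := by
      rw [rpow_mul_self hd0 (by rw [sub_add_cancel]; exact h0.ne'), sub_add_cancel]
    have t1 : ‖‖z‖ ^ (α - 1) • (z - w)‖ ≤ ‖z - w‖ ^ α := by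
      rw [norm_smul, Real.norm_eq_abs, abs_of_nonneg (Real.rpow_nonneg (norm_nonneg z) _)]
      calc ‖z‖ ^ (α - 1) * ‖z - w‖ ≤ ‖z - w‖ ^ (α - 1) * ‖z - w‖ :=
            mul_le_mul_of_nonneg_right hzd hd0
        _ = ‖z - w‖ ^ α := hda
    have t2 : ‖(‖z‖ ^ (α - 1) - ‖w‖ ^ (α - 1)) • w‖ ≤ ‖z - w‖ ^ α := by
      rcases eq_or_lt_of_le (norm_nonneg w) with hw0 | hw0
      · rw [norm_smul, ← hw0, mul_zero]
        positivity
      · have h1' : ‖z‖ ^ (α - 1) ≤ ‖w‖ ^ (α - 1) :=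
          Real.rpow_le_rpow_of_nonpos hw0 hwz (by linarith)
        rw [norm_smul, Real.norm_eq_abs, abs_of_nonpos (by linarith)]
        have e1 : ‖w‖ ^ (α - 1) * ‖w‖ = ‖w‖ ^ α := by
          rw [rpow_mul_self (norm_nonneg w) (by rw [sub_add_cancel]; exact h0.ne'), sub_add_cancel]
        have e2 : ‖z‖ ^ (α - 1) * ‖z‖ = ‖z‖ ^ α := by
          rw [rpow_mul_self (norm_nonneg z) (by rw [sub_add_cancel]; exact h0.ne'), sub_add_cancel]
        have h3 : ‖w‖ ^ α ≤ ‖z‖ ^ α := Real.rpow_le_rpow hw0.le hwz h0.le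
        have h4 : ‖z‖ - ‖w‖ ≤ ‖z - w‖ := norm_sub_norm_le z w
        have h6 : ‖z‖ ^ (α - 1) * (‖z‖ - ‖w‖) ≤ ‖z - w‖ ^ (α - 1) * ‖z - w‖ :=
          mul_le_mul hzd h4 (by linarith) (Real.rpow_nonneg hd0 _)
        have expand : -(‖z‖ ^ (α - 1) - ‖w‖ ^ (α - 1)) * ‖w‖
            = (‖w‖ ^ α - ‖z‖ ^ α) + ‖z‖ ^ (α - 1) * (‖z‖ - ‖w‖) := by
          rw [← e1, ← e2]; ring
        rw [expand]
        linarith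
    calc ‖‖z‖ ^ (α - 1) • z - ‖w‖ ^ (α - 1) • w‖
        ≤ ‖‖z‖ ^ (α - 1) • (z - w)‖ + ‖(‖z‖ ^ (α - 1) - ‖w‖ ^ (α - 1)) • w‖ := by
          rw [decomp]; exact norm_add_le _ _
      _ ≤ ‖z - w‖ ^ α + ‖z - w‖ ^ α := add_le_add t1 t2
      _ = 2 * ‖z - w‖ ^ α := by ring

private lemma holder_vec {α : ℝ} (h0 : 0 < α) (h1 : α ≤ 1) (z w : E) :
    ‖‖z‖ ^ (α - 1) • z - ‖w‖ ^ (α - 1) • w‖ ≤ 2 * ‖z - w‖ ^ α := by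
  rcases le_total ‖w‖ ‖z‖ with h | h
  · exact holder_core h0 h1 h
  · rw [norm_sub_rev, norm_sub_rev z w]
    exact holder_core h0 h1 h

private lemma lip_core {β : ℝ} (h0 : 0 < β) {z w : E} (hwz : ‖w‖ ≤ ‖z‖) :
    ‖‖z‖ ^ β • z - ‖w‖ ^ β • w‖ ≤ (1 + β) * ‖z‖ ^ β * ‖z - w‖ := by
  rcases eq_or_lt_of_le (norm_nonneg z) with hz0 | hz0
  · have hz : z = 0 := norm_eq_zero.mp hz0.symm
    have hw : w = 0 := norm_le_zero_iff.mp (hz0 ▸ hwz)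
    simp [hz, hw]
  have decomp : ‖z‖ ^ β • z - ‖w‖ ^ β • w
      = ‖z‖ ^ β • (z - w) + (‖z‖ ^ β - ‖w‖ ^ β) • w := by
    rw [smul_sub, sub_smul]; abel
  have hd4 : ‖z‖ - ‖w‖ ≤ ‖z - w‖ := norm_sub_norm_le z w
  have hd0 : 0 ≤ ‖z - w‖ := norm_nonneg _
  have t1 : ‖‖z‖ ^ β • (z - w)‖ ≤ ‖z‖ ^ β * ‖z - w‖ := by
    rw [norm_smul, Real.norm_eq_abs, abs_of_nonneg (Real.rpow_nonneg (norm_nonneg z) _)]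
  have hmono : ‖w‖ ^ β ≤ ‖z‖ ^ β := Real.rpow_le_rpow (norm_nonneg w) hwz h0.le
  have t2 : ‖(‖z‖ ^ β - ‖w‖ ^ β) • w‖ ≤ β * ‖z‖ ^ β * ‖z - w‖ := by
    rw [norm_smul, Real.norm_eq_abs, abs_of_nonneg (by linarith)]
    rcases le_or_gt 1 β with hβ1 | hβ1
    · have key := rpow_mvt_hi hβ1 (norm_nonneg w) hwz
      have e2 : ‖z‖ ^ (β - 1) * ‖z‖ = ‖z‖ ^ β := by
        rw [rpow_mul_self hz0.le (by rw [sub_add_cancel]; exact h0.ne'), sub_add_cancel]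
      have c1 : (‖z‖ ^ β - ‖w‖ ^ β) * ‖w‖ ≤ (β * ‖z‖ ^ (β - 1) * (‖z‖ - ‖w‖)) * ‖z‖ :=
        mul_le_mul key hwz (norm_nonneg w)
          (mul_nonneg (by positivity) (by linarith))
      calc (‖z‖ ^ β - ‖w‖ ^ β) * ‖w‖ ≤ (β * ‖z‖ ^ (β - 1) * (‖z‖ - ‖w‖)) * ‖z‖ := c1
        _ = β * (‖z‖ ^ (β - 1) * ‖z‖) * (‖z‖ - ‖w‖) := by ring
        _ = β * ‖z‖ ^ β * (‖z‖ - ‖w‖) := by rw [e2]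
        _ ≤ β * ‖z‖ ^ β * ‖z - w‖ := by
            apply mul_le_mul_of_nonneg_left hd4
            positivity
    · rcases eq_or_lt_of_le (norm_nonneg w) with hw0 | hw0
      · rw [← hw0, mul_zero]
        positivity
      · have key := rpow_mvt_lo h0 hβ1.le hw0 hwz
        have e1 : ‖w‖ ^ (β - 1) * ‖w‖ = ‖w‖ ^ β := by
          rw [rpow_mul_self hw0.le (by rw [sub_add_cancel]; exact h0.ne'), sub_add_cancel]
        have c1 : (‖z‖ ^ β - ‖w‖ ^ β) * ‖w‖ ≤ (β * ‖w‖ ^ (β - 1) * (‖z‖ - ‖w‖)) * ‖w‖ :=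
          mul_le_mul_of_nonneg_right key (norm_nonneg w)
        calc (‖z‖ ^ β - ‖w‖ ^ β) * ‖w‖ ≤ (β * ‖w‖ ^ (β - 1) * (‖z‖ - ‖w‖)) * ‖w‖ := c1
          _ = β * (‖w‖ ^ (β - 1) * ‖w‖) * (‖z‖ - ‖w‖) := by ring
          _ = β * ‖w‖ ^ β * (‖z‖ - ‖w‖) := by rw [e1]
          _ ≤ β * ‖z‖ ^ β * ‖z - w‖ := by
              apply mul_le_mul (by nlinarith [Real.rpow_nonneg (norm_nonneg w) β]) hd4
                (by linarith) (by positivity)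
  calc ‖‖z‖ ^ β • z - ‖w‖ ^ β • w‖
      ≤ ‖‖z‖ ^ β • (z - w)‖ + ‖(‖z‖ ^ β - ‖w‖ ^ β) • w‖ := by
        rw [decomp]; exact norm_add_le _ _
    _ ≤ ‖z‖ ^ β * ‖z - w‖ + β * ‖z‖ ^ β * ‖z - w‖ := add_le_add t1 t2
    _ = (1 + β) * ‖z‖ ^ β * ‖z - w‖ := by ring

end Vec

private lemma two_add_rpow_le {β a b : ℝ} (hβ : 0 ≤ β) (ha : 0 ≤ a) (hb : 0 ≤ b) :
    (a + b) ^ β ≤ 2 ^ β * (a ^ β + b ^ β) := by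
  have h1 : a + b ≤ 2 * max a b := by
    rcases le_total a b with h | h
    · have := le_max_right a b; have := le_max_left a b; linarith
    · have := le_max_right a b; have := le_max_left a b; linarith
  calc (a + b) ^ β ≤ (2 * max a b) ^ β :=
        Real.rpow_le_rpow (by positivity) h1 hβ
    _ = 2 ^ β * (max a b) ^ β := Real.mul_rpow (by norm_num) (le_max_of_le_left ha)
    _ ≤ 2 ^ β * (a ^ β + b ^ β) := by
        apply mul_le_mul_of_nonneg_left _ (Real.rpow_nonneg (by norm_num) β)
        rcases max_cases a b with ⟨h, _⟩ | ⟨h, _⟩ <;> rw [h] <;>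
          nlinarith [Real.rpow_nonneg ha β, Real.rpow_nonneg hb β]

private lemma hasDerivAt_phi {E : Type*} [NormedAddCommGroup E] [InnerProductSpace ℝ E]
    {q : ℝ} (hq : 1 < q) (x y : E) (t : ℝ) :
    HasDerivAt (fun s : ℝ => ‖x + s • y‖ ^ q)
      (q * ‖x + t • y‖ ^ (q - 2) * (inner ℝ (x + t • y) y : ℝ)) t := by
  have hc : HasDerivAt (fun s : ℝ => x + s • y) y t := by
    simpa using ((hasDerivAt_id t).smul_const y).const_add x
  have hF := (hasFDerivAt_norm_rpow (x + t • y) hq).comp_hasDerivAt t hc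
  exact hF

private lemma mono_helper {φ S s φ' : ℝ → ℝ} {L : ℝ}
    (hφ : ∀ t, HasDerivAt φ (φ' t) t)
    (hScont : ContinuousOn S (Set.Icc 0 1))
    (hS : ∀ t ∈ Set.Ioo (0:ℝ) 1, HasDerivAt S (s t) t)
    (hbound : ∀ t ∈ Set.Ioo (0:ℝ) 1, φ' t ≤ L + s t) :
    φ 1 ≤ φ 0 + L + (S 1 - S 0) := by
  set ψ : ℝ → ℝ := fun t => t * L + S t - φ t with hψ
  have hψd : ∀ t ∈ Set.Ioo (0:ℝ) 1, HasDerivAt ψ (L + s t - φ' t) t := by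
    intro t ht
    have h1 : HasDerivAt (fun t : ℝ => t * L) L t := by
      simpa using (hasDerivAt_id t).mul_const L
    exact (h1.add (hS t ht)).sub (hφ t)
  have hmono : MonotoneOn ψ (Set.Icc 0 1) := by
    apply monotoneOn_of_deriv_nonneg (convex_Icc 0 1)
    · exact ((continuousOn_id.mul continuousOn_const).add hScont).sub
        (fun t _ => (hφ t).continuousAt.continuousWithinAt)
    · rw [interior_Icc]
      exact fun t ht => ((hψd t ht).differentiableAt).differentiableWithinAt
    · rw [interior_Icc]
      intro t ht
      rw [(hψd t ht).deriv]
      have := hbound t ht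
      linarith
  have h01 := hmono (Set.left_mem_Icc.mpr zero_le_one) (Set.right_mem_Icc.mpr zero_le_one)
    zero_le_one
  simp only [hψ, zero_mul, one_mul] at h01
  linarith

/-- For every `q > 1` and every dimension `N ≥ 1`, there exist constants `A_q ≥ 0`, `B_q > 0`
(with `A_q = 0` when `1 < q ≤ 2`) such that for all `x, y ∈ ℝ^N`:
`|x+y|^q ≤ |x|^q + q·|x|^{q−2}⟨x,y⟩ + A_q·|x|^{q−2}·|y|² + B_q·|y|^q`. -/
theorem stmt_2 (N : ℕ) (hN : 1 ≤ N) (q : ℝ) (hq : 1 < q) :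
    ∃ A B : ℝ, 0 ≤ A ∧ 0 < B ∧ (q ≤ 2 → A = 0) ∧
      ∀ x y : EuclideanSpace ℝ (Fin N),
        ‖x + y‖ ^ q ≤ ‖x‖ ^ q + q * ‖x‖ ^ (q - 2) * (inner ℝ x y : ℝ)
          + A * ‖x‖ ^ (q - 2) * ‖y‖ ^ 2 + B * ‖y‖ ^ q := by
  have hq0 : (0:ℝ) < q := lt_trans one_pos hq
  rcases le_or_gt q 2 with hq2 | hq2
  · -- case 1 < q ≤ 2 : A = 0, B = 2
    refine ⟨0, 2, le_refl 0, two_pos, fun _ => rfl, ?_⟩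
    intro x y
    set L : ℝ := q * ‖x‖ ^ (q - 2) * (inner ℝ x y : ℝ) with hL
    have hφ : ∀ t : ℝ, HasDerivAt (fun s : ℝ => ‖x + s • y‖ ^ q)
        (q * ‖x + t • y‖ ^ (q - 2) * (inner ℝ (x + t • y) y : ℝ)) t :=
      fun t => hasDerivAt_phi hq x y t
    have hScont : ContinuousOn (fun t : ℝ => 2 * ‖y‖ ^ q * t ^ q) (Set.Icc 0 1) := by
      apply continuousOn_const.mul
      intro t _
      exact (Real.continuousAt_rpow_const t q (Or.inr hq0.le)).continuousWithinAt
    have hS : ∀ t ∈ Set.Ioo (0:ℝ) 1,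
        HasDerivAt (fun t : ℝ => 2 * ‖y‖ ^ q * t ^ q) (2 * ‖y‖ ^ q * (q * t ^ (q - 1))) t := by
      intro t ht
      exact (Real.hasDerivAt_rpow_const (Or.inl ht.1.ne')).const_mul _
    have hbound : ∀ t ∈ Set.Ioo (0:ℝ) 1,
        q * ‖x + t • y‖ ^ (q - 2) * (inner ℝ (x + t • y) y : ℝ)
          ≤ L + 2 * ‖y‖ ^ q * (q * t ^ (q - 1)) := by
      intro t ht
      set z := x + t • y with hz
      have hip : q * ‖z‖ ^ (q - 2) * (inner ℝ z y : ℝ) - L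
          = q * (inner ℝ (‖z‖ ^ (q - 2) • z - ‖x‖ ^ (q - 2) • x) y : ℝ) := by
        rw [hL, inner_sub_left, real_inner_smul_left, real_inner_smul_left]; ring
      have key := holder_vec (α := q - 1) (by linarith) (by linarith) z x
      rw [show q - 1 - 1 = q - 2 by ring] at key
      have hzx : z - x = t • y := by rw [hz]; abel
      rw [hzx] at key
      have hn : ‖t • y‖ = t * ‖y‖ := by
        rw [norm_smul, Real.norm_eq_abs, abs_of_pos ht.1]
      rw [hn] at key
      have hmul : (t * ‖y‖) ^ (q - 1) = t ^ (q - 1) * ‖y‖ ^ (q - 1) :=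
        Real.mul_rpow ht.1.le (norm_nonneg y)
      have hyq : ‖y‖ ^ (q - 1) * ‖y‖ = ‖y‖ ^ q := by
        rw [rpow_mul_self (norm_nonneg y) (by rw [sub_add_cancel]; exact hq0.ne'),
          sub_add_cancel]
      have hCS : (inner ℝ (‖z‖ ^ (q - 2) • z - ‖x‖ ^ (q - 2) • x) y : ℝ)
          ≤ ‖‖z‖ ^ (q - 2) • z - ‖x‖ ^ (q - 2) • x‖ * ‖y‖ := real_inner_le_norm _ _
      have step : (inner ℝ (‖z‖ ^ (q - 2) • z - ‖x‖ ^ (q - 2) • x) y : ℝ)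
          ≤ 2 * t ^ (q - 1) * ‖y‖ ^ q := by
        calc (inner ℝ (‖z‖ ^ (q - 2) • z - ‖x‖ ^ (q - 2) • x) y : ℝ)
            ≤ ‖‖z‖ ^ (q - 2) • z - ‖x‖ ^ (q - 2) • x‖ * ‖y‖ := hCS
          _ ≤ (2 * (t * ‖y‖) ^ (q - 1)) * ‖y‖ :=
              mul_le_mul_of_nonneg_right key (norm_nonneg y)
          _ = 2 * t ^ (q - 1) * (‖y‖ ^ (q - 1) * ‖y‖) := by rw [hmul]; ring
          _ = 2 * t ^ (q - 1) * ‖y‖ ^ q := by rw [hyq]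
      have := mul_le_mul_of_nonneg_left step hq0.le
      linarith [hip.symm ▸ this]
    have hfin := mono_helper hφ hScont hS hbound
    simp only [one_smul, zero_smul, add_zero, Real.one_rpow, Real.zero_rpow hq0.ne',
      mul_zero, mul_one, sub_zero] at hfin
    have : (0:ℝ) * ‖x‖ ^ (q - 2) * ‖y‖ ^ 2 = 0 := by ring
    linarith
  · -- case q > 2
    have hq2' : (0:ℝ) < q - 2 := by linarith
    set C : ℝ := q * (q - 1) * (2:ℝ) ^ (q - 2) with hC
    have hCpos : 0 < C := by
      have : (0:ℝ) < (2:ℝ) ^ (q - 2) := Real.rpow_pos_of_pos two_pos _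
      have h1 : (0:ℝ) < q - 1 := by linarith
      positivity
    refine ⟨C, C, hCpos.le, hCpos, fun h => absurd h (not_le.mpr hq2), ?_⟩
    intro x y
    set K : ℝ := ‖x‖ ^ (q - 2) * ‖y‖ ^ 2 + ‖y‖ ^ q with hK
    have hKnn : 0 ≤ K := by positivity
    set L : ℝ := q * ‖x‖ ^ (q - 2) * (inner ℝ x y : ℝ) with hL
    have hφ : ∀ t : ℝ, HasDerivAt (fun s : ℝ => ‖x + s • y‖ ^ q)
        (q * ‖x + t • y‖ ^ (q - 2) * (inner ℝ (x + t • y) y : ℝ)) t :=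
      fun t => hasDerivAt_phi hq x y t
    have hScont : ContinuousOn (fun t : ℝ => C * K * t ^ 2) (Set.Icc 0 1) := by
      fun_prop
    have hS : ∀ t ∈ Set.Ioo (0:ℝ) 1,
        HasDerivAt (fun t : ℝ => C * K * t ^ 2) (C * K * (2 * t)) t := by
      intro t _
      have := (hasDerivAt_pow 2 t).const_mul (C * K)
      simpa using this
    have hbound : ∀ t ∈ Set.Ioo (0:ℝ) 1,
        q * ‖x + t • y‖ ^ (q - 2) * (inner ℝ (x + t • y) y : ℝ)
          ≤ L + C * K * (2 * t) := by
      intro t ht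
      set z := x + t • y with hz
      have hip : q * ‖z‖ ^ (q - 2) * (inner ℝ z y : ℝ) - L
          = q * (inner ℝ (‖z‖ ^ (q - 2) • z - ‖x‖ ^ (q - 2) • x) y : ℝ) := by
        rw [hL, inner_sub_left, real_inner_smul_left, real_inner_smul_left]; ring
      have hzx : z - x = t • y := by rw [hz]; abel
      have hn : ‖t • y‖ = t * ‖y‖ := by
        rw [norm_smul, Real.norm_eq_abs, abs_of_pos ht.1]
      have hzle : ‖z‖ ≤ ‖x‖ + ‖y‖ := by
        calc ‖z‖ ≤ ‖x‖ + ‖t • y‖ := norm_add_le x (t • y)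
          _ = ‖x‖ + t * ‖y‖ := by rw [hn]
          _ ≤ ‖x‖ + ‖y‖ := by nlinarith [norm_nonneg y, ht.1, ht.2]
      have hxle : ‖x‖ ≤ ‖x‖ + ‖y‖ := by linarith [norm_nonneg y]
      have hΔ : ‖‖z‖ ^ (q - 2) • z - ‖x‖ ^ (q - 2) • x‖
          ≤ (1 + (q - 2)) * (‖x‖ + ‖y‖) ^ (q - 2) * ‖z - x‖ := by
        rcases le_total ‖x‖ ‖z‖ with h | h
        · calc ‖‖z‖ ^ (q - 2) • z - ‖x‖ ^ (q - 2) • x‖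
              ≤ (1 + (q - 2)) * ‖z‖ ^ (q - 2) * ‖z - x‖ := lip_core hq2' h
            _ ≤ (1 + (q - 2)) * (‖x‖ + ‖y‖) ^ (q - 2) * ‖z - x‖ := by
                apply mul_le_mul_of_nonneg_right _ (norm_nonneg _)
                apply mul_le_mul_of_nonneg_left _ (by linarith)
                exact Real.rpow_le_rpow (norm_nonneg z) hzle hq2'.le
        · rw [norm_sub_rev, norm_sub_rev z x]
          calc ‖‖x‖ ^ (q - 2) • x - ‖z‖ ^ (q - 2) • z‖
              ≤ (1 + (q - 2)) * ‖x‖ ^ (q - 2) * ‖x - z‖ := lip_core hq2' h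
            _ ≤ (1 + (q - 2)) * (‖x‖ + ‖y‖) ^ (q - 2) * ‖x - z‖ := by
                apply mul_le_mul_of_nonneg_right _ (norm_nonneg _)
                apply mul_le_mul_of_nonneg_left _ (by linarith)
                exact Real.rpow_le_rpow (norm_nonneg x) hxle hq2'.le
      rw [hzx, hn, show (1 : ℝ) + (q - 2) = q - 1 by ring] at hΔ
      have h2r := two_add_rpow_le hq2'.le (norm_nonneg x) (norm_nonneg y)
      have hyq2 : ‖y‖ ^ (q - 2) * ‖y‖ ^ 2 = ‖y‖ ^ q := by
        rw [show (‖y‖:ℝ) ^ (2:ℕ) = ‖y‖ ^ ((2:ℕ):ℝ) from (Real.rpow_natCast ‖y‖ 2).symm,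
          ← Real.rpow_add' (norm_nonneg y) (by push_cast; linarith)]
        congr 1
        push_cast
        ring
      have hCS : (inner ℝ (‖z‖ ^ (q - 2) • z - ‖x‖ ^ (q - 2) • x) y : ℝ)
          ≤ ‖‖z‖ ^ (q - 2) • z - ‖x‖ ^ (q - 2) • x‖ * ‖y‖ := real_inner_le_norm _ _
      have step : q * (inner ℝ (‖z‖ ^ (q - 2) • z - ‖x‖ ^ (q - 2) • x) y : ℝ)
          ≤ C * K * t := by
        have s1 : (inner ℝ (‖z‖ ^ (q - 2) • z - ‖x‖ ^ (q - 2) • x) y : ℝ)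
            ≤ (q - 1) * (‖x‖ + ‖y‖) ^ (q - 2) * (t * ‖y‖) * ‖y‖ := by
          calc (inner ℝ (‖z‖ ^ (q - 2) • z - ‖x‖ ^ (q - 2) • x) y : ℝ)
              ≤ ‖‖z‖ ^ (q - 2) • z - ‖x‖ ^ (q - 2) • x‖ * ‖y‖ := hCS
            _ ≤ ((q - 1) * (‖x‖ + ‖y‖) ^ (q - 2) * (t * ‖y‖)) * ‖y‖ :=
                mul_le_mul_of_nonneg_right hΔ (norm_nonneg y)
        have s2 : (q - 1) * (‖x‖ + ‖y‖) ^ (q - 2) * (t * ‖y‖) * ‖y‖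
            ≤ (q - 1) * (2 ^ (q - 2) * (‖x‖ ^ (q - 2) + ‖y‖ ^ (q - 2))) * (t * ‖y‖) * ‖y‖ := by
          have hq1 : (0:ℝ) ≤ q - 1 := by linarith
          have ht0 : (0:ℝ) ≤ t := ht.1.le
          apply mul_le_mul_of_nonneg_right _ (norm_nonneg y)
          apply mul_le_mul_of_nonneg_right _ (by positivity)
          exact mul_le_mul_of_nonneg_left h2r hq1
        have s3 : (q - 1) * (2 ^ (q - 2) * (‖x‖ ^ (q - 2) + ‖y‖ ^ (q - 2))) * (t * ‖y‖) * ‖y‖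
            = (q - 1) * 2 ^ (q - 2) * ((‖x‖ ^ (q - 2) + ‖y‖ ^ (q - 2)) * ‖y‖ ^ 2) * t := by
          rw [pow_two]; ring
        have s4 : (‖x‖ ^ (q - 2) + ‖y‖ ^ (q - 2)) * ‖y‖ ^ 2 = K := by
          rw [add_mul, hyq2, hK]
        calc q * (inner ℝ (‖z‖ ^ (q - 2) • z - ‖x‖ ^ (q - 2) • x) y : ℝ)
            ≤ q * ((q - 1) * (‖x‖ + ‖y‖) ^ (q - 2) * (t * ‖y‖) * ‖y‖) :=
              mul_le_mul_of_nonneg_left s1 hq0.le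
          _ ≤ q * ((q - 1) * (2 ^ (q - 2) * (‖x‖ ^ (q - 2) + ‖y‖ ^ (q - 2))) * (t * ‖y‖) * ‖y‖) :=
              mul_le_mul_of_nonneg_left s2 hq0.le
          _ = C * ((‖x‖ ^ (q - 2) + ‖y‖ ^ (q - 2)) * ‖y‖ ^ 2) * t := by
              rw [hC, pow_two]; ring
          _ = C * K * t := by rw [s4]
      have hCKt : C * K * t ≤ C * K * (2 * t) := by
        nlinarith [mul_nonneg hCpos.le hKnn, ht.1.le]
      linarith [hip.symm ▸ step]
    have hfin := mono_helper hφ hScont hS hbound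
    simp only [one_smul, zero_smul, add_zero, one_pow, mul_one] at hfin
    have h0 : C * K * (0:ℝ) ^ 2 = 0 := by ring
    rw [h0, sub_zero] at hfin
    -- hfin : ‖x + y‖ ^ q ≤ ‖x‖ ^ q + L + C * K
    rw [hK] at hfin
    linarith [hfin]
end

section
/- For every real exponent q > 1 and dimension N ≥ 1, there exists a constant C_q > 0 such that for all x, y ∈ ℝ^N (not both zero), |x+y|^q ≤ |x|^q + q·|x|^{q−2}⟨x, y⟩ + C_q · ((|x|+|y|)^q / (|x|^2 + |y|^2)) · |y|^2. -/
open Real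

section Helpers
open Set

lemma lip_nonneg (r : ℝ) (hr : 0 ≤ r) : ∃ L : ℝ, 0 ≤ L ∧ ∀ t : ℝ, 1/4 ≤ t → t ≤ 9/4 →
    |t ^ r - 1| ≤ L * |t - 1| := by
  refine ⟨(⌈r⌉₊ : ℝ) * (9/4 : ℝ) ^ (⌈r⌉₊ : ℕ), by positivity, ?_⟩
  intro t h1 h2
  set n := ⌈r⌉₊ with hn
  have hrn : r ≤ (n : ℝ) := Nat.le_ceil r
  have ht0 : (0:ℝ) < t := by linarith
  have hsum : (∑ i ∈ Finset.range n, t ^ i) ≤ (n : ℝ) * (9/4 : ℝ) ^ n := by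
    calc (∑ i ∈ Finset.range n, t ^ i) ≤ ∑ _i ∈ Finset.range n, (9/4:ℝ) ^ n := by
          refine Finset.sum_le_sum fun i hi => ?_
          calc t ^ i ≤ (9/4:ℝ) ^ i := pow_le_pow_left₀ ht0.le h2 i
            _ ≤ (9/4:ℝ) ^ n := pow_le_pow_right₀ (by norm_num) (Finset.mem_range.1 hi).le
      _ = (n : ℝ) * (9/4:ℝ) ^ n := by
          rw [Finset.sum_const, nsmul_eq_mul, Finset.card_range]
  have hgeom : (∑ i ∈ Finset.range n, t ^ i) * (t - 1) = t ^ n - 1 := geom_sum_mul t n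
  have hsumnn : 0 ≤ ∑ i ∈ Finset.range n, t ^ i :=
    Finset.sum_nonneg fun i _ => pow_nonneg ht0.le i
  rcases le_total 1 t with h | h
  · have h1' : 1 ≤ t ^ r := Real.one_le_rpow h hr
    have h2' : t ^ r ≤ t ^ (n : ℝ) := Real.rpow_le_rpow_of_exponent_le h hrn
    rw [Real.rpow_natCast] at h2'
    rw [abs_of_nonneg (by linarith), abs_of_nonneg (by linarith)]
    nlinarith [mul_le_mul_of_nonneg_right hsum (sub_nonneg.2 h)]
  · have h1' : t ^ r ≤ 1 := Real.rpow_le_one ht0.le h hr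
    have h2' : t ^ (n : ℝ) ≤ t ^ r := Real.rpow_le_rpow_of_exponent_ge ht0 h hrn
    rw [Real.rpow_natCast] at h2'
    rw [abs_of_nonpos (by linarith), abs_of_nonpos (by linarith)]
    have hsum1 : (∑ i ∈ Finset.range n, t ^ i) ≤ (n : ℝ) := by
      calc (∑ i ∈ Finset.range n, t ^ i) ≤ ∑ _i ∈ Finset.range n, (1:ℝ) :=
            Finset.sum_le_sum fun i _ => pow_le_one₀ ht0.le h
        _ = (n : ℝ) := by simp
    have h94 : (1:ℝ) ≤ (9/4:ℝ) ^ n := one_le_pow₀ (by norm_num)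
    nlinarith [mul_le_mul_of_nonneg_right hsum1 (sub_nonneg.2 h),
      mul_le_mul_of_nonneg_left h94 (mul_nonneg (Nat.cast_nonneg n) (sub_nonneg.2 h))]

lemma lip (r : ℝ) : ∃ L : ℝ, 0 ≤ L ∧ ∀ t : ℝ, 1/4 ≤ t → t ≤ 9/4 →
    |t ^ r - 1| ≤ L * |t - 1| := by
  rcases le_total 0 r with hr | hr
  · exact lip_nonneg r hr
  · obtain ⟨L, hL0, hL⟩ := lip_nonneg (-r) (by linarith)
    refine ⟨L * (4:ℝ) ^ (-r), by positivity, ?_⟩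
    intro t h1 h2
    have ht0 : (0:ℝ) < t := by linarith
    have htr : t ^ (-r) ≥ (1/4 : ℝ) ^ (-r) := Real.rpow_le_rpow (by norm_num) h1 (by linarith)
    have hpos : (0:ℝ) < (1/4 : ℝ) ^ (-r) := Real.rpow_pos_of_pos (by norm_num) _
    have htrpos : (0:ℝ) < t ^ (-r) := Real.rpow_pos_of_pos ht0 _
    have key : t ^ r - 1 = -(t ^ (-r) - 1) / t ^ (-r) := by
      rw [show r = -(-r) by ring, Real.rpow_neg ht0.le]
      field_simp
      ring
    rw [key, abs_div, abs_neg, abs_of_pos htrpos]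
    rw [div_le_iff₀ htrpos]
    calc |t ^ (-r) - 1| ≤ L * |t - 1| := hL t h1 h2
      _ = L * |t - 1| * ((1/4:ℝ) ^ (-r) * (4:ℝ) ^ (-r)) := by
          rw [← Real.mul_rpow (by norm_num) (by norm_num)]
          norm_num
      _ ≤ L * (4:ℝ) ^ (-r) * |t - 1| * t ^ (-r) := by
          nlinarith [abs_nonneg (t-1), Real.rpow_pos_of_pos (show (0:ℝ)<4 by norm_num) (-r),
            mul_le_mul_of_nonneg_left htr (mul_nonneg (mul_nonneg hL0 (abs_nonneg (t-1))) (Real.rpow_pos_of_pos (show (0:ℝ)<4 by norm_num) (-r)).le)]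

lemma key_quad (p : ℝ) (hp : 0 < p) : ∃ K : ℝ, 0 < K ∧ ∀ t : ℝ, 1/4 ≤ t → t ≤ 9/4 →
    t ^ p ≤ 1 + p * (t - 1) + K * (t - 1) ^ 2 := by
  obtain ⟨L, hL0, hL⟩ := lip (p - 1)
  refine ⟨p * L / 2 + 1, by positivity, ?_⟩
  set K := p * L / 2 + 1 with hK
  set g : ℝ → ℝ := fun t => 1 + p * (t - 1) + K * (t - 1) ^ 2 - t ^ p with hg
  have hderiv : ∀ t : ℝ, 0 < t →
      HasDerivAt g (p + K * (2 * (t - 1)) - p * t ^ (p - 1)) t := by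
    intro t ht
    have h1 : HasDerivAt (fun t : ℝ => t - 1) 1 t := (hasDerivAt_id t).sub_const 1
    have h2 : HasDerivAt (fun t : ℝ => 1 + p * (t - 1) + K * (t - 1) ^ 2)
        (p * 1 + K * (2 * (t - 1) ^ 1 * 1)) t :=
      ((h1.const_mul p).const_add 1).add ((h1.pow 2).const_mul K)
    have h3 : HasDerivAt (fun t : ℝ => t ^ p) (p * t ^ (p - 1)) t :=
      Real.hasDerivAt_rpow_const (Or.inl ht.ne')
    have h4 := h2.sub h3
    refine h4.congr_deriv ?_
    ring
  have hg1 : g 1 = 0 := by simp [hg, Real.one_rpow]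
  intro t h1 h2
  rcases le_total t 1 with h | h
  · have hA : AntitoneOn g (Icc (1/4 : ℝ) 1) := by
      refine antitoneOn_of_deriv_nonpos (convex_Icc _ _)
        (fun x hx => ((hderiv x (by linarith [hx.1])).continuousAt).continuousWithinAt)
        (fun x hx => by
          rw [interior_Icc] at hx
          exact ((hderiv x (by linarith [hx.1])).differentiableAt).differentiableWithinAt)
        (fun x hx => ?_)
      rw [interior_Icc] at hx
      obtain ⟨hx1, hx2⟩ := hx
      rw [(hderiv x (by linarith)).deriv]
      have hb := hL x hx1.le (by linarith)
      rw [show |x - 1| = 1 - x by rw [abs_of_nonpos] <;> [ring; linarith]] at hb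
      have hb' := abs_le.1 hb
      have hmul := mul_le_mul_of_nonneg_left hb'.1 hp.le
      simp only [hK]
      nlinarith [hmul]
    have := hA ⟨h1, h⟩ (by constructor <;> norm_num) h
    rw [hg1] at this
    simp only [hg] at this
    linarith
  · have hM : MonotoneOn g (Icc (1 : ℝ) (9/4)) := by
      refine monotoneOn_of_deriv_nonneg (convex_Icc _ _)
        (fun x hx => ((hderiv x (by linarith [hx.1])).continuousAt).continuousWithinAt)
        (fun x hx => by
          rw [interior_Icc] at hx
          exact ((hderiv x (by linarith [hx.1])).differentiableAt).differentiableWithinAt)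
        (fun x hx => ?_)
      rw [interior_Icc] at hx
      obtain ⟨hx1, hx2⟩ := hx
      rw [(hderiv x (by linarith)).deriv]
      have hb := hL x (by linarith) (by linarith)
      rw [show |x - 1| = x - 1 from abs_of_nonneg (by linarith)] at hb
      have hb' := abs_le.1 hb
      have hmul := mul_le_mul_of_nonneg_left hb'.2 hp.le
      simp only [hK]
      nlinarith [hmul]
    have := hM (by constructor <;> norm_num) ⟨h, h2⟩ h
    rw [hg1] at this
    simp only [hg] at this
    linarith

set_option maxHeartbeats 2000000 in
lemma stmt3_real (q K C : ℝ) (hq : 1 < q) (hK0 : 0 < K)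
    (hKey : ∀ t : ℝ, 1/4 ≤ t → t ≤ 9/4 → t ^ (q/2) ≤ 1 + q/2 * (t - 1) + K * (t - 1) ^ 2)
    (hC1 : 5*(q+1) ≤ C) (hC2 : (5/4)*(q/2 + 25*K/4) ≤ C) (hC0 : 0 < C)
    (a b s i : ℝ) (ha0 : 0 ≤ a) (hb0 : 0 ≤ b) (hs0 : 0 ≤ s)
    (hi : |i| ≤ a * b) (hs2 : s ^ 2 = a ^ 2 + 2 * i + b ^ 2)
    (hsub : a ≤ s + b) (hsup : s ≤ a + b) (hS : 0 < a ^ 2 + b ^ 2) :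
    s ^ q ≤ a ^ q + q * a ^ (q - 2) * i + C * ((a + b) ^ q / (a ^ 2 + b ^ 2)) * b ^ 2 := by
  have hq0 : (0:ℝ) ≤ q := by linarith
  rcases le_or_gt a (2*b) with hcase | hcase
  · -- Case 1 : a ≤ 2b
    have hb : 0 < b := by nlinarith
    have hab : 0 < a + b := by linarith
    have hP : 0 < (a+b) ^ q := Real.rpow_pos_of_pos hab q
    have hLHS : s ^ q ≤ (a+b) ^ q := Real.rpow_le_rpow hs0 hsup hq0
    have h1 : a ^ (q-2) * (a * b) ≤ (a+b) ^ q := by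
      rcases eq_or_lt_of_le ha0 with h0 | h0
      · rw [← h0]
        have hbq : (0:ℝ) ≤ b ^ q := Real.rpow_nonneg hb0 q
        simpa using hbq
      · have e1 : a ^ (q-2) * a = a ^ (q-1) := by
          nth_rewrite 2 [← Real.rpow_one a]
          rw [← Real.rpow_add h0]
          congr 1
          ring
        have e2 : (a+b) ^ (q-1) * (a+b) = (a+b) ^ q := by
          rw [Real.rpow_sub hab, Real.rpow_one]
          field_simp
        calc a ^ (q-2) * (a * b) = (a ^ (q-1)) * b := by rw [← e1]; ring
          _ ≤ (a+b) ^ (q-1) * (a+b) := by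
              apply mul_le_mul (Real.rpow_le_rpow h0.le (by linarith) (by linarith))
                (by linarith) hb0 (Real.rpow_nonneg (by linarith) _)
          _ = (a+b) ^ q := e2
    have h2 : -((a+b) ^ q) ≤ a ^ (q-2) * i := by
      have habs : |a ^ (q-2) * i| ≤ a ^ (q-2) * (a * b) := by
        rw [abs_mul, abs_of_nonneg (Real.rpow_nonneg ha0 _)]
        exact mul_le_mul_of_nonneg_left hi (Real.rpow_nonneg ha0 _)
      have := neg_abs_le (a ^ (q-2) * i)
      linarith
    have h3 : (a+b) ^ q / 5 ≤ (a+b) ^ q / (a^2 + b^2) * b^2 := by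
      rw [div_mul_eq_mul_div, div_le_div_iff₀ (by norm_num) hS]
      nlinarith [mul_le_mul_of_nonneg_left (show a^2 + b^2 ≤ 5*b^2 by nlinarith) hP.le]
    have h4 := mul_le_mul_of_nonneg_left h2 hq0
    have h5 := mul_le_mul_of_nonneg_left h3 hC0.le
    have haq : 0 ≤ a ^ q := Real.rpow_nonneg ha0 q
    have h6 := mul_le_mul_of_nonneg_right hC1 hP.le
    linarith [h4, h5, haq, hP.le, hLHS, h6]
  · -- Case 2 : 2b < a
    have ha : 0 < a := by linarith
    have haq : 0 < a ^ q := Real.rpow_pos_of_pos ha q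
    set t := s^2 / a^2 with htdef
    have ht1 : 1/4 ≤ t := by
      rw [htdef, le_div_iff₀ (by positivity)]
      nlinarith [mul_nonneg (show (0:ℝ) ≤ s - a/2 by linarith) (show (0:ℝ) ≤ s + a/2 by linarith)]
    have ht2 : t ≤ 9/4 := by
      rw [htdef, div_le_iff₀ (by positivity)]
      nlinarith [mul_le_mul hsup hsup hs0 (by linarith : (0:ℝ) ≤ a + b), hcase, hb0]
    have hkey := hKey t ht1 ht2
    have epow : ∀ c : ℝ, 0 ≤ c → ((c^2 : ℝ)) ^ (q/2) = c ^ q := by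
      intro c hc
      rw [← Real.rpow_natCast c 2, ← Real.rpow_mul hc,
        show ((2:ℕ):ℝ) * (q/2) = q by push_cast; ring]
    have ht_mul : t ^ (q/2) * a ^ q = s ^ q := by
      rw [htdef, Real.div_rpow (sq_nonneg s) (sq_nonneg a), epow s hs0, epow a ha.le]
      field_simp
    have haq2 : a ^ (q-2) * a ^ 2 = a ^ q := by
      rw [← Real.rpow_natCast a 2, ← Real.rpow_add ha]
      norm_num
    have ht_sub : t - 1 = (2*i + b^2) / a^2 := by
      rw [htdef, hs2]
      field_simp
      ring
    -- multiply key inequality by a^q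
    have h := mul_le_mul_of_nonneg_right hkey haq.le
    rw [ht_mul] at h
    have e2 : (t - 1) * a ^ q = (2*i + b^2) * a ^ (q-2) := by
      rw [ht_sub, ← haq2]
      field_simp
    have e2' : (q/2) * ((t - 1) * a ^ q) = (q/2) * ((2*i + b^2) * a ^ (q-2)) := by rw [e2]
    have hu1 : 2*i + b^2 ≤ 5/2 * (a*b) := by nlinarith [abs_le.1 hi]
    have hu2 : -(5/2 * (a*b)) ≤ 2*i + b^2 := by nlinarith [abs_le.1 hi]
    have h25 : (2*i + b^2)^2 ≤ 25/4 * (a^2 * b^2) := by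
      nlinarith [mul_nonneg (sub_nonneg.2 hu1) (by linarith : (0:ℝ) ≤ 5/2*(a*b) + (2*i + b^2))]
    have e3 : (t - 1)^2 * a ^ q ≤ 25/4 * b^2 * a ^ (q-2) := by
      have rpnn : (0:ℝ) ≤ a ^ (q-2) := Real.rpow_nonneg ha0 _
      calc (t - 1)^2 * a ^ q = (2*i + b^2)^2 / a^2 * a ^ (q-2) := by
            rw [ht_sub, ← haq2]
            field_simp
        _ ≤ 25/4 * b^2 * a ^ (q-2) := by
            apply mul_le_mul_of_nonneg_right _ rpnn
            rw [div_le_iff₀ (by positivity)]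
            nlinarith [h25]
    have e3' := mul_le_mul_of_nonneg_left e3 hK0.le
    have main : s ^ q ≤ a ^ q + q * a ^ (q-2) * i + (q/2 + 25*K/4) * (a ^ (q-2) * b^2) := by
      nlinarith [h, e2', e3']
    -- final absorption
    have hq' : a ^ q ≤ (a+b) ^ q := Real.rpow_le_rpow ha0 (by linarith) hq0
    have habs2 : a ^ (q-2) * (a^2 + b^2) ≤ 5/4 * a ^ q := by
      have rpnn : (0:ℝ) ≤ a ^ (q-2) := Real.rpow_nonneg ha0 _
      nlinarith [haq2, mul_le_mul_of_nonneg_left (show b^2 ≤ a^2/4 by nlinarith) rpnn]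
    have hD0 : (0:ℝ) ≤ q/2 + 25*K/4 := by positivity
    have hstep : (q/2 + 25*K/4) * a ^ (q-2) ≤ C * ((a+b) ^ q / (a^2 + b^2)) := by
      rw [show C * ((a+b) ^ q / (a^2 + b^2)) = C * (a+b) ^ q / (a^2 + b^2) by ring,
        le_div_iff₀ hS]
      nlinarith [mul_le_mul_of_nonneg_left habs2 hD0,
        mul_le_mul_of_nonneg_left hq' hC0.le,
        mul_nonneg (show (0:ℝ) ≤ C - 5/4*(q/2 + 25*K/4) by linarith) haq.le]
    have hfin := mul_le_mul_of_nonneg_right hstep (sq_nonneg b)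
    linarith [main, hfin]

end Helpers

/-- For every `q > 1` and dimension `N ≥ 1`, there is `C_q > 0` such that for all
`x, y ∈ ℝ^N` not both zero:
`|x+y|^q ≤ |x|^q + q·|x|^{q−2}⟨x,y⟩ + C_q·((|x|+|y|)^q / (|x|² + |y|²))·|y|²`. -/
theorem stmt_3 (N : ℕ) (hN : 1 ≤ N) (q : ℝ) (hq : 1 < q) :
    ∃ C : ℝ, 0 < C ∧
      ∀ x y : EuclideanSpace ℝ (Fin N), (x ≠ 0 ∨ y ≠ 0) →
        ‖x + y‖ ^ q ≤ ‖x‖ ^ q + q * ‖x‖ ^ (q - 2) * (inner ℝ x y : ℝ)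
          + C * ((‖x‖ + ‖y‖) ^ q / (‖x‖ ^ 2 + ‖y‖ ^ 2)) * ‖y‖ ^ 2 := by
  obtain ⟨K, hK0, hKey⟩ := key_quad (q/2) (by linarith)
  obtain ⟨C, hC1, hC2, hC0⟩ : ∃ C : ℝ, 5*(q+1) ≤ C ∧ (5/4)*(q/2 + 25*K/4) ≤ C ∧ 0 < C :=
    ⟨5*(q+1) + (5/4)*(q/2 + 25*K/4) + 1, by nlinarith, by nlinarith, by nlinarith⟩
  refine ⟨C, hC0, ?_⟩
  intro x y hxy
  have hS : (0:ℝ) < ‖x‖ ^ 2 + ‖y‖ ^ 2 := by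
    rcases hxy with h | h
    · have : 0 < ‖x‖ := norm_pos_iff.2 h
      positivity
    · have : 0 < ‖y‖ := norm_pos_iff.2 h
      positivity
  have hsub : ‖x‖ ≤ ‖x + y‖ + ‖y‖ := by
    have h := norm_add_le (x + y) (-y)
    simpa using h
  exact stmt3_real q K C hq hK0 hKey hC1 hC2 hC0 ‖x‖ ‖y‖ ‖x + y‖ (inner ℝ x y)
    (norm_nonneg x) (norm_nonneg y) (norm_nonneg (x + y))
    (abs_real_inner_le_norm x y) (norm_add_sq_real x y) hsub (norm_add_le x y) hS
end

section
/- Let a < b be real numbers, p ∈ (1, ∞), and u ∈ C²([a,b]). Then there exists a constant C(p) > 0, depending only on p, such that for every A ∈ ℝ, ∫_a^b |u'(r) − A|^p dr ≥ C(p) · (b−a)^{p+1} · (inf_{r∈[a,b]} |u''(r)|)^p. -/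
open Real Set

/-- Auxiliary: lower bound an integral by a constant lower bound on a subinterval. -/
lemma aux_finish (p : ℝ) (hp : 0 ≤ p) (a b s t K : ℝ) (has : a ≤ s) (hst : s ≤ t) (htb : t ≤ b)
    (hK : 0 ≤ K) (g : ℝ → ℝ) (hg : ContinuousOn g (Set.Icc a b)) (hg0 : ∀ r, 0 ≤ g r)
    (hKg : ∀ r ∈ Set.Icc s t, K ≤ g r) :
    (t - s) * K ^ p ≤ ∫ r in a..b, g r ^ p := by
  have hab : a ≤ b := le_trans has (le_trans hst htb)
  have hcont : ContinuousOn (fun r => g r ^ p) (Set.Icc a b) :=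
    hg.rpow_const (fun x _ => Or.inr hp)
  have hint1 : IntervalIntegrable (fun r => g r ^ p) MeasureTheory.volume a s :=
    ContinuousOn.intervalIntegrable (hcont.mono (by
      rw [Set.uIcc_of_le has]; exact Set.Icc_subset_Icc le_rfl (le_trans hst htb)))
  have hint2 : IntervalIntegrable (fun r => g r ^ p) MeasureTheory.volume s t :=
    ContinuousOn.intervalIntegrable (hcont.mono (by
      rw [Set.uIcc_of_le hst]; exact Set.Icc_subset_Icc has htb))
  have hint3 : IntervalIntegrable (fun r => g r ^ p) MeasureTheory.volume t b :=
    ContinuousOn.intervalIntegrable (hcont.mono (by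
      rw [Set.uIcc_of_le htb]; exact Set.Icc_subset_Icc (le_trans has hst) le_rfl))
  have hs1 := intervalIntegral.integral_add_adjacent_intervals hint1 hint2
  have hs2 := intervalIntegral.integral_add_adjacent_intervals (hint1.trans hint2) hint3
  have hsplit : (∫ r in a..b, g r ^ p)
      = (∫ r in a..s, g r ^ p) + (∫ r in s..t, g r ^ p) + (∫ r in t..b, g r ^ p) := by
    rw [← hs2, ← hs1]
  have h1 : 0 ≤ ∫ r in a..s, g r ^ p :=
    intervalIntegral.integral_nonneg has (fun r _ => Real.rpow_nonneg (hg0 r) p)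
  have h3 : 0 ≤ ∫ r in t..b, g r ^ p :=
    intervalIntegral.integral_nonneg htb (fun r _ => Real.rpow_nonneg (hg0 r) p)
  have h2 : (t - s) * K ^ p ≤ ∫ r in s..t, g r ^ p := by
    have := intervalIntegral.integral_mono_on (μ := MeasureTheory.volume)
      (f := fun _ => K ^ p) (g := fun r => g r ^ p) hst intervalIntegrable_const hint2
      (fun r hr => Real.rpow_le_rpow hK (hKg r hr) hp)
    simpa using this
  linarith [hsplit, h1, h2, h3]

/-- Auxiliary key lemma: if `u'' ≥ m ≥ 0` on `[a,b]`, then for any `A` the claimed bound holds. -/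
lemma aux_key (p : ℝ) (hp : 1 < p) (a b : ℝ) (hab : a < b) (u' u'' : ℝ → ℝ)
    (hd : ∀ r ∈ Set.Icc a b, HasDerivAt u' (u'' r) r) (m : ℝ) (hm : 0 ≤ m)
    (hlb : ∀ r ∈ Set.Icc a b, m ≤ u'' r) (A : ℝ) :
    ((b - a) / 4) * (m * ((b - a) / 4)) ^ p ≤ ∫ r in a..b, |u' r - A| ^ p := by
  have hp0 : (0:ℝ) ≤ p := by linarith
  have hu'cont : ContinuousOn u' (Set.Icc a b) :=
    fun r hr => (hd r hr).continuousAt.continuousWithinAt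
  have hdiff : DifferentiableOn ℝ u' (interior (Set.Icc a b)) := by
    rw [interior_Icc]
    exact fun x hx => ((hd x (Set.Ioo_subset_Icc_self hx)).differentiableAt).differentiableWithinAt
  have hderiv_ge : ∀ x ∈ interior (Set.Icc a b), m ≤ deriv u' x := by
    rw [interior_Icc]
    intro x hx
    rw [(hd x (Set.Ioo_subset_Icc_self hx)).deriv]
    exact hlb x (Set.Ioo_subset_Icc_self hx)
  have hmvt := (convex_Icc a b).mul_sub_le_image_sub_of_le_deriv hu'cont hdiff hderiv_ge
  set c : ℝ := (a + b) / 2 with hc_def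
  set q : ℝ := (b - a) / 4 with hq_def
  have hq0 : 0 < q := by simp only [hq_def]; linarith
  have hc : c ∈ Set.Icc a b := ⟨by simp only [hc_def]; linarith, by simp only [hc_def]; linarith⟩
  have hgcont : ContinuousOn (fun r => |u' r - A|) (Set.Icc a b) :=
    (hu'cont.sub continuousOn_const).abs
  have hg0 : ∀ r, (0:ℝ) ≤ |u' r - A| := fun r => abs_nonneg _
  have hK : 0 ≤ m * q := mul_nonneg hm hq0.le
  by_cases hA : A ≤ u' c
  · have hgoal : (b:ℝ) - (c + q) = q := by simp only [hc_def, hq_def]; ring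
    have := aux_finish p hp0 a b (c + q) b (m * q)
      (by simp only [hc_def, hq_def]; linarith) (by simp only [hc_def, hq_def]; linarith)
      le_rfl hK (fun r => |u' r - A|) hgcont hg0 ?_
    · rw [hgoal] at this; exact this
    · intro r hr
      have hrab : r ∈ Set.Icc a b :=
        ⟨le_trans (by simp only [hc_def, hq_def]; linarith) hr.1, hr.2⟩
      have hcr : c ≤ r := le_trans (by linarith) hr.1
      have h1 : m * (r - c) ≤ u' r - u' c := hmvt c hc r hrab hcr
      have h2 : m * q ≤ m * (r - c) :=
        mul_le_mul_of_nonneg_left (by linarith [hr.1]) hm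
      calc m * q ≤ m * (r - c) := h2
        _ ≤ u' r - u' c := h1
        _ ≤ u' r - A := by linarith
        _ ≤ |u' r - A| := le_abs_self _
  · push_neg at hA
    have hgoal : (c - q) - a = q := by simp only [hc_def, hq_def]; ring
    have := aux_finish p hp0 a b a (c - q) (m * q)
      le_rfl (by simp only [hc_def, hq_def]; linarith) (by simp only [hc_def, hq_def]; linarith)
      hK (fun r => |u' r - A|) hgcont hg0 ?_
    · rw [hgoal] at this; exact this
    · intro r hr
      have hrab : r ∈ Set.Icc a b :=
        ⟨hr.1, le_trans hr.2 (by simp only [hc_def, hq_def]; linarith)⟩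
      have hrc : r ≤ c := le_trans hr.2 (by linarith)
      have h1 : m * (c - r) ≤ u' c - u' r := hmvt r hrab c hc hrc
      have h2 : m * q ≤ m * (c - r) :=
        mul_le_mul_of_nonneg_left (by linarith [hr.2]) hm
      calc m * q ≤ m * (c - r) := h2
        _ ≤ u' c - u' r := h1
        _ ≤ A - u' r := by linarith
        _ ≤ |u' r - A| := by rw [abs_sub_comm]; exact le_abs_self _

/-- One-dimensional lower interpolation bound: for `p ∈ (1,∞)` there is `C(p) > 0` such that
for every interval `[a,b]`, every `C²` function `u` on `[a,b]` (with derivative `u'` and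
continuous second derivative `u''`) and every `A ∈ ℝ`,
`∫_a^b |u'(r) − A|^p dr ≥ C(p)·(b−a)^{p+1}·(inf_{[a,b]} |u''|)^p`. -/
theorem stmt_5 (p : ℝ) (hp : 1 < p) :
    ∃ C : ℝ, 0 < C ∧
      ∀ (a b : ℝ), a < b → ∀ (u u' u'' : ℝ → ℝ),
        (∀ r ∈ Set.Icc a b, HasDerivAt u (u' r) r) →
        (∀ r ∈ Set.Icc a b, HasDerivAt u' (u'' r) r) →
        ContinuousOn u'' (Set.Icc a b) →
        ∀ A : ℝ,
          C * (b - a) ^ (p + 1) * (sInf ((fun r => |u'' r|) '' Set.Icc a b)) ^ p ≤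
            ∫ r in a..b, |u' r - A| ^ p := by
  refine ⟨(1/4 : ℝ) ^ (p + 1), Real.rpow_pos_of_pos (by norm_num) _, ?_⟩
  intro a b hab u u' u'' hu hd hcont A
  set m : ℝ := sInf ((fun r => |u'' r|) '' Set.Icc a b) with hm_def
  have hne : ((fun r => |u'' r|) '' Set.Icc a b).Nonempty :=
    ⟨|u'' a|, a, ⟨le_refl a, hab.le⟩, rfl⟩
  have hbdd : BddBelow ((fun r => |u'' r|) '' Set.Icc a b) := by
    refine ⟨0, ?_⟩
    rintro x ⟨r, _, rfl⟩
    exact abs_nonneg _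
  have hm0 : 0 ≤ m := le_csInf hne (by rintro x ⟨r, _, rfl⟩; exact abs_nonneg _)
  have hmle : ∀ r ∈ Set.Icc a b, m ≤ |u'' r| := fun r hr => csInf_le hbdd ⟨r, hr, rfl⟩
  rcases eq_or_lt_of_le hm0 with h0 | hmpos
  · rw [← h0, Real.zero_rpow (by positivity), mul_zero]
    exact intervalIntegral.integral_nonneg hab.le
      (fun r _ => Real.rpow_nonneg (abs_nonneg _) p)
  · -- algebra to relate the key-lemma LHS to the goal LHS
    have hba : (0:ℝ) < (b - a) / 4 := by linarith
    have halg : (1/4 : ℝ) ^ (p + 1) * (b - a) ^ (p + 1) * m ^ p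
        = ((b - a) / 4) * (m * ((b - a) / 4)) ^ p := by
      rw [Real.mul_rpow hm0 hba.le, ← Real.mul_rpow (by norm_num) (by linarith)]
      have h14 : (1/4 : ℝ) * (b - a) = (b - a) / 4 := by ring
      rw [h14, Real.rpow_add hba p 1, Real.rpow_one]
      ring
    rw [halg]
    -- determine the sign of u''
    have hsign : (∀ r ∈ Set.Icc a b, m ≤ u'' r) ∨ (∀ r ∈ Set.Icc a b, m ≤ -u'' r) := by
      by_cases hposall : ∀ r ∈ Set.Icc a b, 0 < u'' r
      · left
        intro r hr
        have := hmle r hr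
        rwa [abs_of_pos (hposall r hr)] at this
      · right
        push_neg at hposall
        obtain ⟨r₀, hr₀, h0'⟩ := hposall
        have hr₀neg : m ≤ -u'' r₀ := by
          have := hmle r₀ hr₀
          rwa [abs_of_nonpos h0'] at this
        intro r hr
        by_contra hcon
        push_neg at hcon
        have hrpos : m ≤ u'' r := by
          have := hmle r hr
          rcases abs_cases (u'' r) with ⟨he, _⟩ | ⟨he, _⟩
          · rwa [he] at this
          · exfalso; rw [he] at this; linarith
        -- intermediate value: u'' vanishes somewhere, contradiction
        have hsub : Set.uIcc r₀ r ⊆ Set.Icc a b := Set.uIcc_subset_Icc hr₀ hr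
        have hIVT := intermediate_value_uIcc (hcont.mono hsub)
        have h0mem : (0:ℝ) ∈ Set.uIcc (u'' r₀) (u'' r) := by
          rw [Set.mem_uIcc]
          left
          constructor <;> linarith
        obtain ⟨z, hz, hz0⟩ := hIVT h0mem
        have := hmle z (hsub hz)
        rw [hz0] at this
        simp at this
        linarith
    rcases hsign with hpos | hneg
    · exact aux_key p hp a b hab u' u'' hd m hm0 hpos A
    · have hd' : ∀ r ∈ Set.Icc a b, HasDerivAt (fun r => -u' r) (-u'' r) r :=
        fun r hr => (hd r hr).neg
      have := aux_key p hp a b hab (fun r => -u' r) (fun r => -u'' r) hd' m hm0 hneg (-A)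
      have heq : (∫ r in a..b, |(-u' r) - (-A)| ^ p) = ∫ r in a..b, |u' r - A| ^ p := by
        apply intervalIntegral.integral_congr
        intro r _
        show |(-u' r) - (-A)| ^ p = |u' r - A| ^ p
        have h : (-u' r) - (-A) = -(u' r - A) := by ring
        rw [h, abs_neg]
      rwa [heq] at this
end

section
/- Let p ∈ (1, ∞), ρ > 0, let B_ρ ⊂ ℝ^N be a ball of radius ρ contained in a compact convex set T, and let u ∈ C²(T). Then there exists C(p) > 0 depending only on p (and N) such that for every A ∈ ℝ^N and every unit vector ξ ∈ ℝ^N, ∫_{B_ρ} |Du(x) − A|^p dx ≥ C(p) · ρ^{N+p} · (min_{x ∈ B_ρ} |ξᵀ D²u(x) ξ|)^p. -/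
open Real Set MeasureTheory

open Metric in
lemma pointwise_claim (N : ℕ) (p : ℝ) (hp : 1 < p) (x₀ ξ : EuclideanSpace ℝ (Fin N)) (hξ : ‖ξ‖ = 1)
    (ρ m : ℝ) (hρ : 0 < ρ) (hm : 0 < m)
    (u : EuclideanSpace ℝ (Fin N) → ℝ)
    (hu : ContDiffOn ℝ 2 u (Metric.ball x₀ ρ))
    (hq : ∀ x ∈ Metric.ball x₀ ρ, m ≤ fderiv ℝ (fderiv ℝ u) x ξ ξ)
    (A : EuclideanSpace ℝ (Fin N))
    (c : EuclideanSpace ℝ (Fin N)) (hc : c = (3*ρ/2) • ξ)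
    (z₁ : EuclideanSpace ℝ (Fin N)) (hz₁ : z₁ = x₀ + (3*ρ/4) • ξ)
    (x : EuclideanSpace ℝ (Fin N)) (hx : x ∈ Metric.ball z₁ (ρ/8)) :
    ((3:ℝ)/4 * ρ * m) ^ p ≤ ‖gradient u x - A‖ ^ p + ‖gradient u (x - c) - A‖ ^ p := by
  have hxz : ‖x - z₁‖ < ρ/8 := by rwa [Metric.mem_ball, dist_eq_norm] at hx
  -- the segment stays in the ball
  have seg : ∀ t ∈ Icc (-(3*ρ/2)) 0, x + t • ξ ∈ Metric.ball x₀ ρ := by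
    intro t ht
    have h1 : x + t • ξ - x₀ = (x - z₁) + (3*ρ/4 + t) • ξ := by rw [hz₁]; module
    rw [Metric.mem_ball, dist_eq_norm, h1]
    calc ‖(x - z₁) + (3*ρ/4 + t) • ξ‖ ≤ ‖x - z₁‖ + ‖(3*ρ/4 + t) • ξ‖ := norm_add_le _ _
      _ = ‖x - z₁‖ + |3*ρ/4 + t| := by rw [norm_smul, hξ, Real.norm_eq_abs, mul_one]
      _ < ρ/8 + 3*ρ/4 := by
          have : |3*ρ/4 + t| ≤ 3*ρ/4 := abs_le.mpr ⟨by simpa using by linarith [ht.1, ht.2], by linarith [ht.1, ht.2]⟩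
          linarith
      _ < ρ := by linarith
  -- derivative of the directional derivative along the line
  have hF1 : ContDiffOn ℝ 1 (fderiv ℝ u) (Metric.ball x₀ ρ) :=
    hu.fderiv_of_isOpen Metric.isOpen_ball (by norm_num)
  set g : ℝ → ℝ := fun t => fderiv ℝ u (x + t • ξ) ξ with hgdef
  have hg : ∀ t ∈ Icc (-(3*ρ/2)) 0,
      HasDerivAt g (fderiv ℝ (fderiv ℝ u) (x + t • ξ) ξ ξ) t := by
    intro t ht
    have hmem := seg t ht
    have hFd : DifferentiableAt ℝ (fderiv ℝ u) (x + t • ξ) :=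
      (hF1.differentiableOn one_ne_zero).differentiableAt (Metric.isOpen_ball.mem_nhds hmem)
    have hL : HasDerivAt (fun t : ℝ => x + t • ξ) ξ t := by
      simpa using ((hasDerivAt_id t).smul_const ξ).const_add x
    have hcomp : HasDerivAt (fun t => fderiv ℝ u (x + t • ξ))
        (fderiv ℝ (fderiv ℝ u) (x + t • ξ) ξ) t :=
      hFd.hasFDerivAt.comp_hasDerivAt t hL
    have := hcomp.clm_apply (hasDerivAt_const t ξ)
    simpa using this
  have hIccL : (-(3*ρ/2) : ℝ) ∈ Icc (-(3*ρ/2)) 0 := ⟨le_rfl, by linarith⟩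
  have hIccR : (0 : ℝ) ∈ Icc (-(3*ρ/2) : ℝ) 0 := ⟨by linarith, le_rfl⟩
  -- mean value inequality
  have hmvt := (convex_Icc (-(3*ρ/2) : ℝ) 0).mul_sub_le_image_sub_of_le_deriv
    (f := g) (fun t ht => (hg t ht).continuousAt.continuousWithinAt)
    (fun t ht => ((hg t (interior_subset ht)).differentiableAt).differentiableWithinAt)
    (C := m) (fun t ht => by
      rw [(hg t (interior_subset ht)).deriv]
      exact hq _ (seg t (interior_subset ht)))
    _ hIccL _ hIccR (by linarith)
  have hg0 : g 0 = fderiv ℝ u x ξ := by simp [hgdef]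
  have hgc : g (-(3*ρ/2)) = fderiv ℝ u (x - c) ξ := by
    have : x + (-(3*ρ/2)) • ξ = x - c := by rw [hc]; module
    simp only [hgdef, this]
  have hdiff : 3/2 * ρ * m ≤ fderiv ℝ u x ξ - fderiv ℝ u (x - c) ξ := by
    rw [← hg0, ← hgc]
    calc 3/2 * ρ * m = m * (0 - (-(3*ρ/2))) := by ring
      _ ≤ g 0 - g (-(3*ρ/2)) := hmvt
  -- relate to the gradient
  have bound : ∀ y ∈ Metric.ball x₀ ρ,
      |fderiv ℝ u y ξ - @inner ℝ _ _ A ξ| ≤ ‖gradient u y - A‖ := by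
    intro y hy
    have h1 : @inner ℝ _ _ (gradient u y - A) ξ = fderiv ℝ u y ξ - @inner ℝ _ _ A ξ := by
      rw [inner_sub_left]
      congr 1
      exact InnerProductSpace.toDual_symm_apply
    calc |fderiv ℝ u y ξ - @inner ℝ _ _ A ξ| = |@inner ℝ _ _ (gradient u y - A) ξ| := by rw [h1]
      _ ≤ ‖gradient u y - A‖ * ‖ξ‖ := abs_real_inner_le_norm _ _
      _ = ‖gradient u y - A‖ := by rw [hξ, mul_one]
  set a := fderiv ℝ u x ξ - @inner ℝ _ _ A ξ with ha
  set b := fderiv ℝ u (x - c) ξ - @inner ℝ _ _ A ξ with hb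
  have hab : 3/2 * ρ * m ≤ a - b := by rw [ha, hb]; linarith [hdiff]
  have hmax : 3/4 * ρ * m ≤ |a| ∨ 3/4 * ρ * m ≤ |b| := by
    by_contra hcon
    push_neg at hcon
    obtain ⟨h1, h2⟩ := hcon
    rw [abs_lt] at h1 h2
    nlinarith [h1.1, h1.2, h2.1, h2.2, hab]
  have hxball : x ∈ Metric.ball x₀ ρ := by
    have := seg 0 ⟨by linarith, le_rfl⟩
    simpa using this
  have hxcball : x - c ∈ Metric.ball x₀ ρ := by
    have := seg (-(3*ρ/2)) ⟨le_rfl, by linarith⟩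
    have hxc : x + (-(3*ρ/2)) • ξ = x - c := by rw [hc]; module
    rwa [hxc] at this
  have hpm : (0:ℝ) < 3/4 * ρ * m := by positivity
  have hp0 : 0 ≤ p := by linarith
  rcases hmax with h | h
  · have h2 : |a| ≤ ‖gradient u x - A‖ := bound x hxball
    calc (3/4 * ρ * m) ^ p ≤ ‖gradient u x - A‖ ^ p :=
          Real.rpow_le_rpow hpm.le (le_trans h h2) hp0
      _ ≤ ‖gradient u x - A‖ ^ p + ‖gradient u (x - c) - A‖ ^ p := by
          have := Real.rpow_nonneg (norm_nonneg (gradient u (x - c) - A)) p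
          linarith
  · have h2 : |b| ≤ ‖gradient u (x - c) - A‖ := bound _ hxcball
    calc (3/4 * ρ * m) ^ p ≤ ‖gradient u (x - c) - A‖ ^ p :=
          Real.rpow_le_rpow hpm.le (le_trans h h2) hp0
      _ ≤ ‖gradient u x - A‖ ^ p + ‖gradient u (x - c) - A‖ ^ p := by
          have := Real.rpow_nonneg (norm_nonneg (gradient u x - A)) p
          linarith

open Metric in
set_option maxHeartbeats 2000000 in
lemma key_lemma (N : ℕ) (p : ℝ) (hp : 1 < p) (x₀ ξ : EuclideanSpace ℝ (Fin N)) (hξ : ‖ξ‖ = 1)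
    (ρ m : ℝ) (hρ : 0 < ρ) (hm : 0 < m)
    (u : EuclideanSpace ℝ (Fin N) → ℝ)
    (hu : ContDiffOn ℝ 2 u (Metric.ball x₀ ρ))
    (hq : ∀ x ∈ Metric.ball x₀ ρ, m ≤ fderiv ℝ (fderiv ℝ u) x ξ ξ)
    (A : EuclideanSpace ℝ (Fin N))
    (hint : IntegrableOn (fun x => ‖gradient u x - A‖ ^ p) (Metric.ball x₀ ρ)) :
    (volume (Metric.ball (0 : EuclideanSpace ℝ (Fin N)) 1)).toReal * (1/8 : ℝ)^N * (1/2 : ℝ)^p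
      * ρ ^ ((N : ℝ) + p) * m ^ p ≤ ∫ x in Metric.ball x₀ ρ, ‖gradient u x - A‖ ^ p := by
  haveI : Nontrivial (EuclideanSpace ℝ (Fin N)) := by
    refine nontrivial_of_ne ξ 0 ?_
    intro h; rw [h, norm_zero] at hξ; norm_num at hξ
  set G : EuclideanSpace ℝ (Fin N) → ℝ := fun x => ‖gradient u x - A‖ ^ p with hG
  set c : EuclideanSpace ℝ (Fin N) := (3*ρ/2) • ξ with hc
  set z₁ : EuclideanSpace ℝ (Fin N) := x₀ + (3*ρ/4) • ξ with hz₁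
  set z₂ : EuclideanSpace ℝ (Fin N) := x₀ - (3*ρ/4) • ξ with hz₂
  set B₁ := Metric.ball z₁ (ρ/8) with hB₁
  set B₂ := Metric.ball z₂ (ρ/8) with hB₂
  have hGnn : ∀ x, 0 ≤ G x := fun x => Real.rpow_nonneg (norm_nonneg _) p
  have hsub1 : B₁ ⊆ Metric.ball x₀ ρ := by
    apply Metric.ball_subset_ball'
    rw [hz₁, dist_eq_norm, add_sub_cancel_left, norm_smul, hξ]
    rw [Real.norm_eq_abs, abs_of_pos (by linarith)]
    linarith
  have hsub2 : B₂ ⊆ Metric.ball x₀ ρ := by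
    apply Metric.ball_subset_ball'
    rw [hz₂, dist_eq_norm, sub_sub_cancel_left, norm_neg, norm_smul, hξ]
    rw [Real.norm_eq_abs, abs_of_pos (by linarith)]
    linarith
  have hpre : B₁ = (fun x => x - c) ⁻¹' B₂ := by
    ext x
    have hxx : x - c - z₂ = x - z₁ := by rw [hc, hz₁, hz₂]; module
    simp only [hB₁, hB₂, Set.mem_preimage, Metric.mem_ball, dist_eq_norm, hxx]
  have hmp : MeasurePreserving (fun x : EuclideanSpace ℝ (Fin N) => x - c) volume volume :=
    measurePreserving_sub_right volume c
  have hemb : MeasurableEmbedding (fun x : EuclideanSpace ℝ (Fin N) => x - c) :=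
    (MeasurableEquiv.subRight c).measurableEmbedding
  have hint1 : IntegrableOn G B₁ volume := hint.mono_set hsub1
  have hint2 : IntegrableOn G B₂ volume := hint.mono_set hsub2
  have hintτ : IntegrableOn (fun x => G (x - c)) B₁ volume := by
    rw [hpre]
    exact (hmp.integrableOn_comp_preimage hemb).mpr hint2
  have htrans : ∫ x in B₂, G x = ∫ x in B₁, G (x - c) := by
    rw [hpre]
    exact (hmp.setIntegral_preimage_emb hemb G B₂).symm
  have hdisj : Disjoint B₁ B₂ := by
    apply Metric.ball_disjoint_ball
    have : z₁ - z₂ = (3*ρ/2) • ξ := by rw [hz₁, hz₂]; module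
    rw [dist_eq_norm, this, norm_smul, hξ, Real.norm_eq_abs, abs_of_pos (by linarith)]
    linarith
  have claim : ∀ x ∈ B₁, ((3:ℝ)/4 * ρ * m) ^ p ≤ G x + G (x - c) := fun x hx =>
    pointwise_claim N p hp x₀ ξ hξ ρ m hρ hm u hu hq A c hc z₁ hz₁ x hx
  have step1 : ∫ x in B₁ ∪ B₂, G x ≤ ∫ x in Metric.ball x₀ ρ, G x := by
    apply setIntegral_mono_set hint
    · exact Filter.Eventually.of_forall hGnn
    · exact HasSubset.Subset.eventuallyLE (union_subset hsub1 hsub2)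
  have step2 : ∫ x in B₁ ∪ B₂, G x = (∫ x in B₁, G x) + ∫ x in B₂, G x :=
    setIntegral_union hdisj measurableSet_ball hint1 hint2
  have step4 : (∫ x in B₁, G x) + (∫ x in B₁, G (x - c)) = ∫ x in B₁, (G x + G (x - c)) :=
    (integral_add hint1 hintτ).symm
  have step5 : ((3:ℝ)/4 * ρ * m) ^ p * (volume B₁).toReal ≤ ∫ x in B₁, (G x + G (x - c)) :=
    setIntegral_ge_of_const_le_real measurableSet_ball measure_ball_lt_top.ne claim (hint1.add hintτ)
  have hvol : (volume B₁).toReal = (ρ/8)^N * (volume (Metric.ball (0 : EuclideanSpace ℝ (Fin N)) 1)).toReal := by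
    rw [hB₁, Measure.addHaar_ball volume z₁ (show (0:ℝ) ≤ ρ/8 by positivity)]
    rw [ENNReal.toReal_mul, ENNReal.toReal_ofReal (by positivity), finrank_euclideanSpace_fin]
  set ω := (volume (Metric.ball (0 : EuclideanSpace ℝ (Fin N)) 1)).toReal with hω
  have hω0 : 0 ≤ ω := ENNReal.toReal_nonneg
  have harith : ω * (1/8 : ℝ)^N * (1/2 : ℝ)^p * ρ ^ ((N : ℝ) + p) * m ^ p
      ≤ ((3:ℝ)/4 * ρ * m) ^ p * ((ρ/8)^N * ω) := by
    have e1 : ρ ^ ((N : ℝ) + p) = ρ^N * ρ^p := by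
      rw [Real.rpow_add hρ, Real.rpow_natCast]
    have e2 : ((3:ℝ)/4 * ρ * m) ^ p = (3/4 : ℝ)^p * ρ^p * m^p := by
      rw [Real.mul_rpow (by positivity) hm.le, Real.mul_rpow (by norm_num) hρ.le]
    have e3 : ((ρ:ℝ)/8)^N = ρ^N * (1/8 : ℝ)^N := by
      rw [← mul_pow]; ring_nf
    have h12 : ((1:ℝ)/2)^p ≤ ((3:ℝ)/4)^p :=
      Real.rpow_le_rpow (by norm_num) (by norm_num) (by linarith)
    rw [e1, e2, e3]
    have hK : (0:ℝ) ≤ ρ^p * m^p * (ρ^N * (1/8:ℝ)^N * ω) := by positivity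
    nlinarith [mul_le_mul_of_nonneg_right h12 hK]
  calc ω * (1/8 : ℝ)^N * (1/2 : ℝ)^p * ρ ^ ((N : ℝ) + p) * m ^ p
      ≤ ((3:ℝ)/4 * ρ * m) ^ p * ((ρ/8)^N * ω) := harith
    _ = ((3:ℝ)/4 * ρ * m) ^ p * (volume B₁).toReal := by rw [hvol]
    _ ≤ ∫ x in B₁, (G x + G (x - c)) := step5
    _ = (∫ x in B₁, G x) + ∫ x in B₁, G (x - c) := step4.symm
    _ = (∫ x in B₁, G x) + ∫ x in B₂, G x := by rw [htrans]
    _ = ∫ x in B₁ ∪ B₂, G x := step2.symm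
    _ ≤ ∫ x in Metric.ball x₀ ρ, G x := step1

open Metric in
set_option maxHeartbeats 2000000 in
/-- Lower interpolation bound for gradients: for `p ∈ (1,∞)` (and dimension `N`) there is
`C(p) > 0` such that for every compact convex set `T` containing a closed ball `B(x₀,ρ)`,
every `u ∈ C²(T)`, every `A ∈ ℝ^N` and every unit vector `ξ`,
`∫_{B(x₀,ρ)} |Du(x) − A|^p dx ≥ C(p)·ρ^{N+p}·(min_{B(x₀,ρ)} |ξᵀ D²u(x) ξ|)^p`. -/
theorem stmt_6 (N : ℕ) (hN : 1 ≤ N) (p : ℝ) (hp : 1 < p) :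
    ∃ C : ℝ, 0 < C ∧
      ∀ (T : Set (EuclideanSpace ℝ (Fin N))), IsCompact T → Convex ℝ T →
      ∀ (x₀ : EuclideanSpace ℝ (Fin N)) (ρ : ℝ), 0 < ρ →
        Metric.closedBall x₀ ρ ⊆ T →
        ∀ u : EuclideanSpace ℝ (Fin N) → ℝ, ContDiffOn ℝ 2 u T →
        ∀ (A ξ : EuclideanSpace ℝ (Fin N)), ‖ξ‖ = 1 →
          C * ρ ^ ((N : ℝ) + p) *
            (sInf ((fun x => |iteratedFDerivWithin ℝ 2 u T x ![ξ, ξ]|) ''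
              Metric.closedBall x₀ ρ)) ^ p ≤
          ∫ x in Metric.ball x₀ ρ, ‖gradient u x - A‖ ^ p := by
  refine ⟨(volume (Metric.ball (0 : EuclideanSpace ℝ (Fin N)) 1)).toReal * (1/8 : ℝ)^N * (1/2 : ℝ)^p, ?_, ?_⟩
  · have h1 : 0 < (volume (Metric.ball (0 : EuclideanSpace ℝ (Fin N)) 1)).toReal :=
      ENNReal.toReal_pos (measure_ball_pos volume 0 one_pos).ne' measure_ball_lt_top.ne
    have h2 : (0:ℝ) < (1/8 : ℝ)^N := by positivity
    have h3 : (0:ℝ) < (1/2 : ℝ)^p := Real.rpow_pos_of_pos (by norm_num) p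
    positivity
  intro T hT hTconv x₀ ρ hρ hsub u hu A ξ hξ
  set m := sInf ((fun x => |iteratedFDerivWithin ℝ 2 u T x ![ξ, ξ]|) '' Metric.closedBall x₀ ρ) with hm_def
  have hm0 : 0 ≤ m := Real.sInf_nonneg (by rintro y ⟨x, hx, rfl⟩; exact abs_nonneg _)
  rcases hm0.eq_or_lt with h0 | hmpos
  · rw [← h0, Real.zero_rpow (by positivity : p ≠ 0), mul_zero]
    exact setIntegral_nonneg measurableSet_ball fun x _ => Real.rpow_nonneg (norm_nonneg _) _
  have hball_sub_T : Metric.ball x₀ ρ ⊆ T := Metric.ball_subset_closedBall.trans hsub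
  have hTnhds : ∀ x ∈ Metric.ball x₀ ρ, T ∈ nhds x := fun x hx =>
    Filter.mem_of_superset (Metric.isOpen_ball.mem_nhds hx) hball_sub_T
  -- identify the iterated derivative with the second fderiv on the open ball
  have hiter : ∀ x ∈ Metric.ball x₀ ρ,
      iteratedFDerivWithin ℝ 2 u T x ![ξ, ξ] = fderiv ℝ (fderiv ℝ u) x ξ ξ := by
    intro x hx
    have h1 : iteratedFDerivWithin ℝ 2 u (T ∩ Metric.ball x₀ ρ) x
        = iteratedFDerivWithin ℝ 2 u T x :=
      iteratedFDerivWithin_inter (Metric.isOpen_ball.mem_nhds hx)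
    have h2 : T ∩ Metric.ball x₀ ρ = Metric.ball x₀ ρ := inter_eq_right.mpr hball_sub_T
    have h3 : iteratedFDerivWithin ℝ 2 u (Metric.ball x₀ ρ) x = iteratedFDeriv ℝ 2 u x :=
      iteratedFDerivWithin_of_isOpen 2 Metric.isOpen_ball hx
    rw [← h1, h2, h3, iteratedFDeriv_two_apply]
    simp
  have hq_abs : ∀ x ∈ Metric.ball x₀ ρ, m ≤ |fderiv ℝ (fderiv ℝ u) x ξ ξ| := by
    intro x hx
    have h1 : m ≤ |iteratedFDerivWithin ℝ 2 u T x ![ξ, ξ]| := by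
      apply csInf_le
      · exact ⟨0, by rintro y ⟨z, hz, rfl⟩; exact abs_nonneg _⟩
      · exact ⟨x, Metric.ball_subset_closedBall hx, rfl⟩
    rwa [hiter x hx] at h1
  have huball : ContDiffOn ℝ 2 u (Metric.ball x₀ ρ) := hu.mono hball_sub_T
  set q : EuclideanSpace ℝ (Fin N) → ℝ := fun x => fderiv ℝ (fderiv ℝ u) x ξ ξ with hqdef
  have hF1 : ContDiffOn ℝ 1 (fderiv ℝ u) (Metric.ball x₀ ρ) :=
    huball.fderiv_of_isOpen Metric.isOpen_ball (by norm_num)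
  have hqc : ContinuousOn q (Metric.ball x₀ ρ) :=
    ((hF1.continuousOn_fderiv_of_isOpen Metric.isOpen_ball le_rfl).clm_apply
      continuousOn_const).clm_apply continuousOn_const
  have hx₀ : x₀ ∈ Metric.ball x₀ ρ := Metric.mem_ball_self hρ
  have hpc : OrdConnected (q '' Metric.ball x₀ ρ) :=
    ((convex_ball x₀ ρ).isPreconnected.image q hqc).ordConnected
  have key0 : ∀ x ∈ Metric.ball x₀ ρ, ∀ y ∈ Metric.ball x₀ ρ, q x < 0 → 0 < q y → False := by
    intro x hx y hy hx0 hy0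
    have h0 : (0:ℝ) ∈ q '' Metric.ball x₀ ρ :=
      hpc.out (mem_image_of_mem q hx) (mem_image_of_mem q hy) ⟨hx0.le, hy0.le⟩
    obtain ⟨z, hz, hz0⟩ := h0
    have h5 : m ≤ |q z| := hq_abs z hz
    rw [hz0] at h5
    simp only [abs_zero] at h5
    linarith
  have hsign : (∀ x ∈ Metric.ball x₀ ρ, m ≤ q x) ∨ (∀ x ∈ Metric.ball x₀ ρ, m ≤ -(q x)) := by
    rcases le_or_gt (q x₀) 0 with hneg | hpos
    · right
      intro x hx
      have habs := hq_abs x hx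
      have hx₀neg : q x₀ < 0 := by
        rcases lt_or_eq_of_le hneg with h | h
        · exact h
        · exfalso; have := hq_abs x₀ hx₀; rw [show fderiv ℝ (fderiv ℝ u) x₀ ξ ξ = q x₀ from rfl, h] at this; simp at this; linarith
      have hxneg : q x ≤ 0 := by
        by_contra hcon
        push_neg at hcon
        exact key0 x₀ hx₀ x hx hx₀neg hcon
      rwa [show fderiv ℝ (fderiv ℝ u) x ξ ξ = q x from rfl, abs_of_nonpos hxneg] at habs
    · left
      intro x hx
      have habs := hq_abs x hx
      have hxpos : 0 ≤ q x := by
        by_contra hcon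
        push_neg at hcon
        exact key0 x hx x₀ hx₀ hcon hpos
      rwa [show fderiv ℝ (fderiv ℝ u) x ξ ξ = q x from rfl, abs_of_nonneg hxpos] at habs
  -- integrability
  have hud : UniqueDiffOn ℝ T :=
    uniqueDiffOn_convex hTconv ⟨x₀, interior_maximal hball_sub_T Metric.isOpen_ball hx₀⟩
  have hFW : ContinuousOn (fderivWithin ℝ u T) T := hu.continuousOn_fderivWithin hud (by norm_num)
  obtain ⟨M, hM⟩ := hT.exists_bound_of_continuousOn hFW
  have hgball : ∀ x ∈ Metric.ball x₀ ρ, ‖gradient u x‖ ≤ M := by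
    intro x hx
    have h1 : gradient u x = (InnerProductSpace.toDual ℝ (EuclideanSpace ℝ (Fin N))).symm
        (fderivWithin ℝ u T x) := by
      show (InnerProductSpace.toDual ℝ (EuclideanSpace ℝ (Fin N))).symm (fderiv ℝ u x) = _
      rw [fderivWithin_of_mem_nhds (hTnhds x hx)]
    rw [h1, LinearIsometryEquiv.norm_map]
    exact hM x (hball_sub_T hx)
  have hmeas : AEStronglyMeasurable (fun x => ‖gradient u x - A‖ ^ p) (volume : Measure (EuclideanSpace ℝ (Fin N))) := by
    have h1 : Measurable (fun x => gradient u x) := by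
      exact ((InnerProductSpace.toDual ℝ (EuclideanSpace ℝ (Fin N))).symm.continuous.measurable).comp
        (measurable_fderiv ℝ u)
    exact (((h1.sub measurable_const).norm).pow measurable_const).aestronglyMeasurable
  have hint : IntegrableOn (fun x => ‖gradient u x - A‖ ^ p) (Metric.ball x₀ ρ) volume := by
    apply Measure.integrableOn_of_bounded (M := (|M| + ‖A‖) ^ p) measure_ball_lt_top.ne hmeas
    rw [ae_restrict_iff' measurableSet_ball]
    apply Filter.Eventually.of_forall
    intro x hx
    rw [Real.norm_eq_abs, abs_of_nonneg (Real.rpow_nonneg (norm_nonneg _) p)]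
    apply Real.rpow_le_rpow (norm_nonneg _) _ (by linarith)
    calc ‖gradient u x - A‖ ≤ ‖gradient u x‖ + ‖A‖ := norm_sub_le _ _
      _ ≤ |M| + ‖A‖ := by have := hgball x hx; have := le_abs_self M; linarith
  rcases hsign with hq' | hq'
  · exact key_lemma N p hp x₀ ξ hξ ρ m hρ hmpos u huball hq' A hint
  · -- apply to -u and -A
    have hgneg : ∀ x, gradient (fun y => -u y) x = -gradient u x := by
      intro x
      show (InnerProductSpace.toDual ℝ (EuclideanSpace ℝ (Fin N))).symm
          (fderiv ℝ (fun y => -u y) x) = _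
      rw [fderiv_fun_neg, map_neg]
      rfl
    have hfun : (fun x => ‖gradient (fun y => -u y) x - (-A)‖ ^ p)
        = fun x => ‖gradient u x - A‖ ^ p := by
      funext x
      rw [hgneg x, show -gradient u x - -A = -(gradient u x - A) by module, norm_neg]
    have hq'' : ∀ x ∈ Metric.ball x₀ ρ, m ≤ fderiv ℝ (fderiv ℝ (fun y => -u y)) x ξ ξ := by
      intro x hx
      have e1 : fderiv ℝ (fun y => -u y) = fun y => -(fderiv ℝ u y) := funext fun y => fderiv_fun_neg
      rw [e1]
      have e2 : fderiv ℝ (fun y => -(fderiv ℝ u y)) x = -(fderiv ℝ (fderiv ℝ u) x) := fderiv_fun_neg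
      rw [e2]
      simpa using hq' x hx
    have := key_lemma N p hp x₀ ξ hξ ρ m hρ hmpos (fun y => -u y) huball.neg hq'' (-A)
      (by rw [hfun]; exact hint)
    rwa [hfun] at this
end

section
/- Let N ≥ 2, 1 < p < N, and U(x) = k₀ (1 + |x|^{p/(p−1)})^{−(N−p)/p}. Then D²U ∈ L^p(ℝ^N), i.e., ∫_{ℝ^N} |D²U(x)|^p dx < ∞. -/
open Real MeasureTheory Set Metric Module

set_option maxHeartbeats 1000000
set_option synthInstance.maxHeartbeats 200000

section AuxBall

variable {E : Type*} [NormedAddCommGroup E] [NormedSpace ℝ E] [FiniteDimensional ℝ E]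
  [MeasurableSpace E] [BorelSpace E] {μ : Measure E} [μ.IsAddHaarMeasure]

lemma aux_integrableOn_rpow_ball {b : ℝ} (hb0 : 0 < b) (hbN : b < finrank ℝ E) :
    IntegrableOn (fun x : E => ‖x‖ ^ (-b)) (ball (0 : E) 1) μ := by
  have hmeas : Measurable fun x : E => ‖x‖ ^ (-b) := measurable_norm.pow_const _
  constructor
  · exact hmeas.aestronglyMeasurable
  · rw [HasFiniteIntegral,
      lintegral_enorm_of_nonneg (fun x => rpow_nonneg (norm_nonneg x) _),
      lintegral_eq_lintegral_meas_le _ (Filter.Eventually.of_forall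
        (fun x => rpow_nonneg (norm_nonneg x) _)) hmeas.aemeasurable]
    set ν := μ.restrict (ball (0 : E) 1)
    have key : ∀ t : ℝ, 1 < t →
        ν {a : E | t ≤ ‖a‖ ^ (-b)} ≤
          ENNReal.ofReal ((t ^ (-b⁻¹)) ^ finrank ℝ E) * μ (ball 0 1) := by
      intro t ht
      have h0t : (0 : ℝ) < t := lt_trans one_pos ht
      have hsub : {a : E | t ≤ ‖a‖ ^ (-b)} ⊆ closedBall (0 : E) (t ^ (-b⁻¹)) := by
        intro a ha
        simp only [mem_setOf_eq] at ha
        have hna : a ≠ 0 := by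
          rintro rfl
          rw [norm_zero, zero_rpow (neg_ne_zero.2 hb0.ne')] at ha
          linarith
        have hn : (0 : ℝ) < ‖a‖ := norm_pos_iff.2 hna
        rw [mem_closedBall_zero_iff]
        have h1 : (‖a‖ ^ (-b)) ^ (-b⁻¹) ≤ t ^ (-b⁻¹) :=
          rpow_le_rpow_of_nonpos h0t ha (neg_nonpos.2 (inv_nonneg.2 hb0.le))
        rwa [← Real.rpow_mul hn.le, neg_mul_neg, mul_inv_cancel₀ hb0.ne', rpow_one] at h1
      calc ν {a : E | t ≤ ‖a‖ ^ (-b)} ≤ ν (closedBall (0 : E) (t ^ (-b⁻¹))) :=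
            measure_mono hsub
        _ ≤ μ (closedBall (0 : E) (t ^ (-b⁻¹))) := Measure.restrict_le_self _
        _ = ENNReal.ofReal ((t ^ (-b⁻¹)) ^ finrank ℝ E) * μ (ball 0 1) :=
            Measure.addHaar_closedBall μ 0 (by positivity)
    have hνle : ∀ t : ℝ, ν {a : E | t ≤ ‖a‖ ^ (-b)} ≤ μ (ball 0 1) := fun t => by
      calc ν {a : E | t ≤ ‖a‖ ^ (-b)} ≤ ν univ := measure_mono (subset_univ _)
        _ = μ (ball 0 1) := Measure.restrict_apply_univ _
    calc ∫⁻ t in Ioi (0:ℝ), ν {a : E | t ≤ ‖a‖ ^ (-b)}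
        ≤ ∫⁻ t in Ioc (0:ℝ) 1 ∪ Ioi 1, ν {a : E | t ≤ ‖a‖ ^ (-b)} :=
          lintegral_mono_set Ioi_subset_Ioc_union_Ioi
      _ ≤ (∫⁻ t in Ioc (0:ℝ) 1, ν {a : E | t ≤ ‖a‖ ^ (-b)})
            + ∫⁻ t in Ioi (1:ℝ), ν {a : E | t ≤ ‖a‖ ^ (-b)} := lintegral_union_le _ _ _
      _ < ⊤ := by
          refine ENNReal.add_lt_top.2 ⟨?_, ?_⟩
          · calc (∫⁻ t in Ioc (0:ℝ) 1, ν {a : E | t ≤ ‖a‖ ^ (-b)})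
                ≤ ∫⁻ _ in Ioc (0:ℝ) 1, μ (ball (0:E) 1) :=
                  setLIntegral_mono' measurableSet_Ioc (fun t _ => hνle t)
              _ = μ (ball (0:E) 1) * volume (Ioc (0:ℝ) 1) := setLIntegral_const _ _
              _ < ⊤ := ENNReal.mul_lt_top measure_ball_lt_top (by simp)
          · calc (∫⁻ t in Ioi (1:ℝ), ν {a : E | t ≤ ‖a‖ ^ (-b)})
                ≤ ∫⁻ t in Ioi (1:ℝ),
                    ENNReal.ofReal ((t ^ (-b⁻¹)) ^ finrank ℝ E) * μ (ball 0 1) :=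
                  setLIntegral_mono' measurableSet_Ioi (fun t ht => key t ht)
              _ = (∫⁻ t in Ioi (1:ℝ), ENNReal.ofReal ((t ^ (-b⁻¹)) ^ finrank ℝ E))
                    * μ (ball 0 1) := lintegral_mul_const' _ _ measure_ball_lt_top.ne
              _ < ⊤ := by
                  refine ENNReal.mul_lt_top ?_ measure_ball_lt_top
                  have hexp : (-b⁻¹) * (finrank ℝ E : ℝ) < -1 := by
                    rw [neg_mul, neg_lt_neg_iff, inv_mul_eq_div, lt_div_iff₀ hb0, one_mul]
                    exact hbN
                  have heq : ∀ t ∈ Ioi (1:ℝ), ENNReal.ofReal ((t ^ (-b⁻¹)) ^ finrank ℝ E)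
                      = ENNReal.ofReal (t ^ ((-b⁻¹) * (finrank ℝ E : ℝ))) := by
                    intro t ht
                    rw [← Real.rpow_natCast (t ^ (-b⁻¹)), ← Real.rpow_mul
                      (le_of_lt (lt_trans one_pos ht))]
                  rw [setLIntegral_congr_fun measurableSet_Ioi heq]
                  exact (integrableOn_Ioi_rpow_of_lt hexp one_pos).setLIntegral_lt_top

end AuxBall

noncomputable def gg (k₀ β γ t : ℝ) : ℝ := k₀ * (1 + t ^ β) ^ (-γ)
noncomputable def gg1 (k₀ β γ t : ℝ) : ℝ :=
  (k₀ * -γ * β) * (t ^ (β - 1) * (1 + t ^ β) ^ (-γ - 1))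
noncomputable def gg2 (k₀ β γ t : ℝ) : ℝ :=
  (k₀ * -γ * β) * ((β - 1) * t ^ (β - 2) * ((1 + t ^ β) ^ (-γ - 1)) +
    t ^ (β - 1) * ((β * t ^ (β - 1)) * (-γ - 1) * (1 + t ^ β) ^ (-γ - 2)))

lemma one_add_rpow_pos {t : ℝ} (β : ℝ) (ht : 0 < t) : (0:ℝ) < 1 + t ^ β := by positivity

lemma hasDerivAt_gg (k₀ β γ : ℝ) {t : ℝ} (ht : 0 < t) :
    HasDerivAt (gg k₀ β γ) (gg1 k₀ β γ t) t := by
  have h1 : HasDerivAt (fun u : ℝ => 1 + u ^ β) (β * t ^ (β - 1)) t :=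
    (Real.hasDerivAt_rpow_const (Or.inl ht.ne')).const_add 1
  have h2 := (h1.rpow_const (p := -γ) (Or.inl (one_add_rpow_pos β ht).ne')).const_mul k₀
  refine h2.congr_deriv ?_
  simp only [gg1]
  ring

lemma hasDerivAt_gg1 (k₀ β γ : ℝ) {t : ℝ} (ht : 0 < t) :
    HasDerivAt (gg1 k₀ β γ) (gg2 k₀ β γ t) t := by
  have hu : HasDerivAt (fun u : ℝ => u ^ (β - 1)) ((β - 1) * t ^ (β - 1 - 1)) t :=
    Real.hasDerivAt_rpow_const (Or.inl ht.ne')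
  have h1 : HasDerivAt (fun u : ℝ => 1 + u ^ β) (β * t ^ (β - 1)) t :=
    (Real.hasDerivAt_rpow_const (Or.inl ht.ne')).const_add 1
  have hv := h1.rpow_const (Or.inl (one_add_rpow_pos β ht).ne') (p := -γ - 1)
  have h2 := (hu.mul hv).const_mul (k₀ * -γ * β)
  refine h2.congr_deriv ?_
  simp only [gg2]
  rw [show β - 1 - 1 = β - 2 by ring, show -γ - 1 - 1 = -γ - 2 by ring]

lemma abs_gg1_eq {k₀ β γ t : ℝ} (hk : 0 ≤ k₀) (hγ : 0 ≤ γ) (hβ : 0 ≤ β) (ht : 0 < t) :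
    |gg1 k₀ β γ t| = (k₀ * γ * β) * (t ^ (β - 1) * (1 + t ^ β) ^ (-γ - 1)) := by
  have hP : (0:ℝ) < 1 + t ^ β := by positivity
  rw [gg1, abs_mul, abs_of_nonneg (by positivity : (0:ℝ) ≤ t ^ (β - 1) * (1 + t ^ β) ^ (-γ - 1))]
  congr 1
  rw [abs_mul, abs_mul, abs_of_nonneg hk, abs_neg, abs_of_nonneg hγ, abs_of_nonneg hβ]

lemma abs_gg2_mul_le {k₀ β γ t : ℝ} (hk : 0 ≤ k₀) (hγ : 0 ≤ γ) (hβ : 0 ≤ β) (ht : 0 < t) :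
    |gg2 k₀ β γ t| * t ≤
      (k₀ * γ * β) * (|β - 1| + (γ + 1) * β) * (t ^ (β - 1) * (1 + t ^ β) ^ (-γ - 1)) := by
  have hP : (0:ℝ) < 1 + t ^ β := by positivity
  set X : ℝ := (β - 1) * t ^ (β - 2) * ((1 + t ^ β) ^ (-γ - 1)) with hXdef
  set Y : ℝ := t ^ (β - 1) * ((β * t ^ (β - 1)) * (-γ - 1) * (1 + t ^ β) ^ (-γ - 2)) with hYdef
  have habsC : |k₀ * -γ * β| = k₀ * γ * β := by
    rw [abs_mul, abs_mul, abs_of_nonneg hk, abs_neg, abs_of_nonneg hγ, abs_of_nonneg hβ]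
  have hX : |X| = |β - 1| * t ^ (β - 2) * ((1 + t ^ β) ^ (-γ - 1)) := by
    rw [hXdef, abs_mul, abs_mul, abs_of_nonneg (by positivity : (0:ℝ) ≤ t ^ (β - 2)),
      abs_of_nonneg (by positivity : (0:ℝ) ≤ (1 + t ^ β) ^ (-γ - 1))]
  have hYneg : Y ≤ 0 := by
    have h5 : (0:ℝ) ≤ t ^ (β - 1) * (β * t ^ (β - 1)) * (1 + t ^ β) ^ (-γ - 2) := by positivity
    nlinarith [h5, hγ]
  have hY : |Y| = t ^ (β - 1) * ((β * t ^ (β - 1)) * (γ + 1) * (1 + t ^ β) ^ (-γ - 2)) := by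
    rw [abs_of_nonpos hYneg, hYdef]; ring
  have e1 : t ^ (β - 2) * t = t ^ (β - 1) := by
    rw [← Real.rpow_add_one ht.ne' (β - 2)]; congr 1; ring
  have e2 : t ^ (β - 1) * t = t ^ β := by
    rw [← Real.rpow_add_one ht.ne' (β - 1)]; congr 1; ring
  have e3 : (1 + t ^ β) ^ (-γ - 2) = (1 + t ^ β) ^ (-γ - 1) * (1 + t ^ β)⁻¹ := by
    rw [show -γ - 2 = (-γ - 1) + (-1) by ring, Real.rpow_add hP, Real.rpow_neg_one]
  have e4 : t ^ β * (1 + t ^ β)⁻¹ ≤ 1 := by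
    rw [← div_eq_mul_inv, div_le_one hP]
    nlinarith [Real.rpow_nonneg ht.le β]
  have e5 : t ^ β * (1 + t ^ β) ^ (-γ - 2) ≤ (1 + t ^ β) ^ (-γ - 1) := by
    rw [e3]
    calc t ^ β * ((1 + t ^ β) ^ (-γ - 1) * (1 + t ^ β)⁻¹)
        = (t ^ β * (1 + t ^ β)⁻¹) * (1 + t ^ β) ^ (-γ - 1) := by ring
      _ ≤ 1 * (1 + t ^ β) ^ (-γ - 1) :=
          mul_le_mul_of_nonneg_right e4 (Real.rpow_nonneg hP.le _)
      _ = (1 + t ^ β) ^ (-γ - 1) := one_mul _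
  calc |gg2 k₀ β γ t| * t = |k₀ * -γ * β| * |X + Y| * t := by rw [gg2, abs_mul]
    _ ≤ (k₀ * γ * β) * (|X| + |Y|) * t := by
        rw [habsC]
        have hC : (0:ℝ) ≤ k₀ * γ * β := by positivity
        nlinarith [mul_le_mul_of_nonneg_left (abs_add_le X Y) hC, ht.le,
          mul_le_mul_of_nonneg_right (mul_le_mul_of_nonneg_left (abs_add_le X Y) hC) ht.le]
    _ = (k₀ * γ * β) * (|β - 1| * (t ^ (β - 2) * t) * ((1 + t ^ β) ^ (-γ - 1)) +
          (γ + 1) * β * t ^ (β - 1) * ((t ^ (β - 1) * t) * (1 + t ^ β) ^ (-γ - 2))) := by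
        rw [hX, hY]; ring
    _ = (k₀ * γ * β) * (|β - 1| * (t ^ (β - 1) * ((1 + t ^ β) ^ (-γ - 1))) +
          (γ + 1) * β * t ^ (β - 1) * (t ^ β * (1 + t ^ β) ^ (-γ - 2))) := by
        rw [e1, e2]; ring
    _ ≤ (k₀ * γ * β) * (|β - 1| * (t ^ (β - 1) * ((1 + t ^ β) ^ (-γ - 1))) +
          (γ + 1) * β * t ^ (β - 1) * ((1 + t ^ β) ^ (-γ - 1))) := by
        gcongr
    _ = (k₀ * γ * β) * (|β - 1| + (γ + 1) * β) * (t ^ (β - 1) * (1 + t ^ β) ^ (-γ - 1)) := by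
        ring

section FDerivPart

variable {E : Type*} [NormedAddCommGroup E] [InnerProductSpace ℝ E]

noncomputable def BB (E : Type*) [NormedAddCommGroup E] [InnerProductSpace ℝ E] :
    E →L[ℝ] E →L[ℝ] ℝ := innerSL ℝ

noncomputable def FF (k₀ β γ : ℝ) (y : E) : E →L[ℝ] ℝ :=
  (2 * gg1 k₀ β γ (‖y‖ ^ 2)) • innerSL ℝ y

noncomputable def FF' (k₀ β γ : ℝ) (x : E) : E →L[ℝ] (E →L[ℝ] ℝ) :=
  (2 * gg1 k₀ β γ (‖x‖ ^ 2)) • (BB E) +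
    ((2 * gg2 k₀ β γ (‖x‖ ^ 2)) • (2 • innerSL ℝ x)).smulRight (innerSL ℝ x)

lemma hasFDerivAt_f (k₀ β γ : ℝ) {y : E} (hy : y ≠ 0) :
    HasFDerivAt (fun z : E => gg k₀ β γ (‖z‖ ^ 2)) (FF k₀ β γ y) y := by
  have hs : (0:ℝ) < ‖y‖ ^ 2 := pow_pos (norm_pos_iff.2 hy) 2
  have h1 : HasFDerivAt (fun z : E => ‖z‖ ^ 2) (2 • innerSL ℝ y) y :=
    (hasStrictFDerivAt_norm_sq y).hasFDerivAt
  have h2 := (hasDerivAt_gg k₀ β γ hs).comp_hasFDerivAt y h1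
  refine h2.congr_fderiv ?_
  ext v
  simp [FF, smul_smul, two_smul]
  ring

lemma hasFDerivAt_FF (k₀ β γ : ℝ) {x : E} (hx : x ≠ 0) :
    HasFDerivAt (FF k₀ β γ) (FF' k₀ β γ x) x := by
  have hs : (0:ℝ) < ‖x‖ ^ 2 := pow_pos (norm_pos_iff.2 hx) 2
  have h1 : HasFDerivAt (fun z : E => ‖z‖ ^ 2) (2 • innerSL ℝ x) x :=
    (hasStrictFDerivAt_norm_sq x).hasFDerivAt
  have hc : HasFDerivAt (fun y : E => 2 * gg1 k₀ β γ (‖y‖ ^ 2))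
      ((2 * gg2 k₀ β γ (‖x‖ ^ 2)) • (2 • innerSL ℝ x)) x := by
    have := ((hasDerivAt_gg1 k₀ β γ hs).const_mul (2:ℝ)).comp_hasFDerivAt x h1
    exact this
  have hlin : HasFDerivAt (fun y : E => BB E y) (BB E) x :=
    (BB E).hasFDerivAt
  exact hc.smul hlin

lemma norm_FF'_le (k₀ β γ : ℝ) (x : E) :
    ‖FF' k₀ β γ x‖ ≤ 2 * |gg1 k₀ β γ (‖x‖ ^ 2)| + 4 * |gg2 k₀ β γ (‖x‖ ^ 2)| * ‖x‖ ^ 2 := by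
  have hBBle : ‖BB E‖ ≤ 1 := norm_innerSL_le ℝ
  have habs2 : ‖(2 * gg1 k₀ β γ (‖x‖ ^ 2) : ℝ)‖ = 2 * |gg1 k₀ β γ (‖x‖ ^ 2)| := by
    rw [Real.norm_eq_abs, abs_mul, abs_two]
  have habs2' : ‖(2 * gg2 k₀ β γ (‖x‖ ^ 2) : ℝ)‖ = 2 * |gg2 k₀ β γ (‖x‖ ^ 2)| := by
    rw [Real.norm_eq_abs, abs_mul, abs_two]
  have h2smul : ‖(2 : ℕ) • innerSL ℝ x‖ ≤ 2 * ‖x‖ := by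
    rw [← Nat.cast_smul_eq_nsmul ℝ]
    refine le_trans (ContinuousLinearMap.opNorm_smul_le _ _) ?_
    rw [innerSL_apply_norm]
    norm_num
  have n1 : ‖(2 * gg1 k₀ β γ (‖x‖ ^ 2)) • (BB E)‖ ≤ 2 * |gg1 k₀ β γ (‖x‖ ^ 2)| := by
    refine le_trans (ContinuousLinearMap.opNorm_smul_le _ _) ?_
    rw [habs2]
    nlinarith [hBBle, abs_nonneg (gg1 k₀ β γ (‖x‖ ^ 2))]
  have n2 : ‖((2 * gg2 k₀ β γ (‖x‖ ^ 2)) • (2 • innerSL ℝ x)).smulRight (innerSL ℝ x)‖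
      ≤ (2 * |gg2 k₀ β γ (‖x‖ ^ 2)| * (2 * ‖x‖)) * ‖x‖ := by
    rw [ContinuousLinearMap.norm_smulRight_apply, innerSL_apply_norm]
    refine mul_le_mul_of_nonneg_right ?_ (norm_nonneg x)
    refine le_trans (ContinuousLinearMap.opNorm_smul_le _ _) ?_
    rw [habs2']
    have := abs_nonneg (gg2 k₀ β γ (‖x‖ ^ 2))
    nlinarith [h2smul, this]
  have hpow : ‖x‖ ^ 2 = ‖x‖ * ‖x‖ := pow_two ‖x‖
  calc ‖FF' k₀ β γ x‖
      ≤ ‖(2 * gg1 k₀ β γ (‖x‖ ^ 2)) • (BB E)‖ +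
        ‖((2 * gg2 k₀ β γ (‖x‖ ^ 2)) • (2 • innerSL ℝ x)).smulRight (innerSL ℝ x)‖ := by
        unfold FF'
        exact ContinuousLinearMap.opNorm_add_le _ _
    _ ≤ 2 * |gg1 k₀ β γ (‖x‖ ^ 2)| + 4 * |gg2 k₀ β γ (‖x‖ ^ 2)| * ‖x‖ ^ 2 := by
        nlinarith [n1, n2, abs_nonneg (gg2 k₀ β γ (‖x‖ ^ 2)), hpow, norm_nonneg x]

end FDerivPart

open Real MeasureTheory

/-- The Hessian of the Aubin–Talenti profile `U(x) = k₀(1 + |x|^{p/(p−1)})^{−(N−p)/p}`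
belongs to `L^p(ℝ^N)` for `N ≥ 2`, `1 < p < N`: `∫_{ℝ^N} |D²U(x)|^p dx < ∞`. -/
theorem stmt_10 (N : ℕ) (hN : 2 ≤ N) (p : ℝ) (hp1 : 1 < p) (hpN : p < N)
    (k₀ : ℝ) (hk : 0 < k₀) :
    Integrable (fun x : EuclideanSpace ℝ (Fin N) =>
      ‖iteratedFDeriv ℝ 2
          (fun y : EuclideanSpace ℝ (Fin N) =>
            k₀ * (1 + ‖y‖ ^ (p / (p - 1))) ^ (-((N : ℝ) - p) / p)) x‖ ^ p) := by
  have hp0 : (0:ℝ) < p := lt_trans one_pos hp1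
  have hpm : (0:ℝ) < p - 1 := by linarith
  set β : ℝ := p / (2 * (p - 1)) with hβ
  set γ : ℝ := ((N:ℝ) - p) / p with hγ
  set q : ℝ := p / (p - 1) with hq
  have hNp : p < (N:ℝ) := hpN
  have hβpos : 0 < β := by positivity
  have hγpos : 0 < γ := div_pos (by linarith) hp0
  have hq2β : q = 2 * β := by rw [hq, hβ]; field_simp
  have hq1 : 1 < q := (one_lt_div hpm).2 (by linarith)
  -- the function agrees with the `gg` profile
  have feq : (fun y : EuclideanSpace ℝ (Fin N) => k₀ * (1 + ‖y‖ ^ (p / (p - 1))) ^ (-((N : ℝ) - p) / p))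
      = fun y : EuclideanSpace ℝ (Fin N) => gg k₀ β γ (‖y‖ ^ 2) := by
    funext y
    have h2b : ((‖y‖ : ℝ) ^ 2) ^ β = ‖y‖ ^ (p / (p - 1)) := by
      rw [← Real.rpow_natCast ‖y‖ 2, ← Real.rpow_mul (norm_nonneg y)]
      congr 1
      push_cast
      rw [hβ]
      field_simp
    rw [gg, h2b, neg_div]
  rw [feq]
  set G : EuclideanSpace ℝ (Fin N) → ℝ := fun y : EuclideanSpace ℝ (Fin N) => gg k₀ β γ (‖y‖ ^ 2) with hG
  -- reduce the iterated derivative norm to fderiv of fderiv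
  have hnorm : ∀ x : EuclideanSpace ℝ (Fin N), ‖iteratedFDeriv ℝ 2 G x‖ = ‖fderiv ℝ (fderiv ℝ G) x‖ := by
    intro x
    have e1 := norm_iteratedFDeriv_fderiv (𝕜 := ℝ) (f := fderiv ℝ G) (n := 0) (x := x)
    have e2 := norm_iteratedFDeriv_fderiv (𝕜 := ℝ) (f := G) (n := 1) (x := x)
    rw [norm_iteratedFDeriv_zero] at e1
    exact (e1.trans e2).symm
  have hfun : (fun x : EuclideanSpace ℝ (Fin N) => ‖iteratedFDeriv ℝ 2 G x‖ ^ p)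
      = fun x : EuclideanSpace ℝ (Fin N) => ‖fderiv ℝ (fderiv ℝ G) x‖ ^ p := funext fun x => by rw [hnorm x]
  rw [hfun]
  -- measurability
  have hmeas : AEStronglyMeasurable (fun x : EuclideanSpace ℝ (Fin N) => ‖fderiv ℝ (fderiv ℝ G) x‖ ^ p)
      (volume : Measure (EuclideanSpace ℝ (Fin N))) :=
    (((measurable_fderiv ℝ (fderiv ℝ G)).norm).pow_const p).aestronglyMeasurable
  -- a.e. nonvanishing
  haveI : Nontrivial (EuclideanSpace ℝ (Fin N)) := by
    have : 0 < finrank ℝ (EuclideanSpace ℝ (Fin N)) := by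
      rw [finrank_euclideanSpace_fin]; omega
    exact nontrivial_of_finrank_pos (R := ℝ) this
  have h0 : ∀ᵐ x : EuclideanSpace ℝ (Fin N) ∂(volume : Measure (EuclideanSpace ℝ (Fin N))), x ≠ 0 := by
    rw [ae_iff]
    have : {x : EuclideanSpace ℝ (Fin N) | ¬ x ≠ 0} = {0} := by ext x; simp
    rw [this]
    exact measure_singleton 0
  -- pointwise derivative identification and bound
  set K : ℝ := k₀ * γ * β with hK
  set D : ℝ := 2 * K + 4 * (K * (|β - 1| + (γ + 1) * β)) with hD
  have hKpos : 0 < K := by positivity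
  have hDpos : 0 < D := by positivity
  have hbound : ∀ x : EuclideanSpace ℝ (Fin N), x ≠ 0 →
      ‖fderiv ℝ (fderiv ℝ G) x‖ ≤
        D * ((‖x‖ ^ 2) ^ (β - 1) * (1 + (‖x‖ ^ 2) ^ β) ^ (-γ - 1)) := by
    intro x hx
    have hs : (0:ℝ) < ‖x‖ ^ 2 := pow_pos (norm_pos_iff.2 hx) 2
    have hev : fderiv ℝ G =ᶠ[nhds x] FF k₀ β γ := by
      filter_upwards [IsOpen.mem_nhds isOpen_compl_singleton
        (Set.mem_compl_singleton_iff.2 hx)] with y hy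
      exact (hasFDerivAt_f k₀ β γ (Set.mem_compl_singleton_iff.1 hy)).fderiv
    have h2d : HasFDerivAt (fderiv ℝ G) (FF' k₀ β γ x) x :=
      (hasFDerivAt_FF k₀ β γ hx).congr_of_eventuallyEq hev
    rw [h2d.fderiv]
    have h1 := norm_FF'_le k₀ β γ x
    have hg1 := abs_gg1_eq (t := ‖x‖ ^ 2) hk.le hγpos.le hβpos.le hs
    have hg2 := abs_gg2_mul_le (t := ‖x‖ ^ 2) hk.le hγpos.le hβpos.le hs
    calc ‖FF' k₀ β γ x‖ ≤ 2 * |gg1 k₀ β γ (‖x‖ ^ 2)| + 4 * |gg2 k₀ β γ (‖x‖ ^ 2)| * ‖x‖ ^ 2 := h1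
      _ ≤ 2 * (K * ((‖x‖ ^ 2) ^ (β - 1) * (1 + (‖x‖ ^ 2) ^ β) ^ (-γ - 1))) +
          4 * (K * (|β - 1| + (γ + 1) * β) *
            ((‖x‖ ^ 2) ^ (β - 1) * (1 + (‖x‖ ^ 2) ^ β) ^ (-γ - 1))) := by
          rw [← hK] at hg1 hg2
          rw [hg1]
          nlinarith [hg2]
      _ = D * ((‖x‖ ^ 2) ^ (β - 1) * (1 + (‖x‖ ^ 2) ^ β) ^ (-γ - 1)) := by rw [hD]; ring
  -- exponents
  set a : ℝ := (q - 2) * p with ha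
  set e : ℝ := q * (γ + 1) * p - a with he
  have hae : e = q * ((N:ℝ) - p) + 2 * p := by
    have hγp : γ * p = (N:ℝ) - p := by rw [hγ]; field_simp
    rw [he, ha]
    nlinarith [hγp]
  have hNe : (N:ℝ) < e := by
    rw [hae]
    nlinarith [mul_pos (sub_pos.2 hq1) (sub_pos.2 hNp)]
  have hepos : 0 < e := lt_trans (by positivity) hNe
  have haN : -(N:ℝ) < a := by
    have haa : a = (2 - p) * p / (p - 1) := by
      rw [ha, hq]; field_simp; ring_nf
    rw [haa, lt_div_iff₀ hpm]
    nlinarith [mul_pos (sub_pos.2 hNp) hpm, hp0]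
  -- the majorant
  set Gmaj : EuclideanSpace ℝ (Fin N) → ℝ := fun x : EuclideanSpace ℝ (Fin N) =>
    D ^ p * (Set.indicator (Metric.ball (0:EuclideanSpace ℝ (Fin N)) 1) (fun y : EuclideanSpace ℝ (Fin N) => ‖y‖ ^ a) x +
      2 ^ e * (1 + ‖x‖) ^ (-e)) with hGmaj
  have hind : IntegrableOn (fun y : EuclideanSpace ℝ (Fin N) => ‖y‖ ^ a) (Metric.ball (0:EuclideanSpace ℝ (Fin N)) 1) volume := by
    by_cases hc : 0 ≤ a
    · refine Measure.integrableOn_of_bounded (M := 1) (measure_ball_lt_top).ne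
        ((measurable_norm.pow_const a).aestronglyMeasurable) ?_
      filter_upwards [ae_restrict_mem measurableSet_ball] with y hy
      rw [Real.norm_eq_abs, abs_of_nonneg (rpow_nonneg (norm_nonneg _) _)]
      exact Real.rpow_le_one (norm_nonneg _) (le_of_lt (mem_ball_zero_iff.1 hy)) hc
    · push_neg at hc
      have hb0 : 0 < -a := by linarith
      have hbN : -a < finrank ℝ (EuclideanSpace ℝ (Fin N)) := by
        rw [finrank_euclideanSpace_fin]; linarith
      have := aux_integrableOn_rpow_ball (E := EuclideanSpace ℝ (Fin N)) (μ := volume) hb0 hbN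
      simpa [neg_neg] using this
  have hGint : Integrable Gmaj (volume : Measure (EuclideanSpace ℝ (Fin N))) := by
    refine Integrable.const_mul ?_ _
    refine Integrable.add ?_ ?_
    · exact (hind.integrable_indicator measurableSet_ball)
    · refine Integrable.const_mul ?_ _
      apply integrable_one_add_norm
      rw [finrank_euclideanSpace_fin]
      exact hNe
  -- final comparison
  refine Integrable.mono' hGint hmeas ?_
  filter_upwards [h0] with x hx
  have hr : (0:ℝ) < ‖x‖ := norm_pos_iff.2 hx
  have hs : (0:ℝ) < ‖x‖ ^ 2 := pow_pos hr 2
  have hA : (0:ℝ) ≤ (‖x‖ ^ 2) ^ (β - 1) * (1 + (‖x‖ ^ 2) ^ β) ^ (-γ - 1) := by positivity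
  have hq_pow : ((‖x‖ : ℝ) ^ 2) ^ β = ‖x‖ ^ q := by
    rw [← Real.rpow_natCast ‖x‖ 2, ← Real.rpow_mul (norm_nonneg x), hq2β]
    norm_num
  have hstep1 : ‖fderiv ℝ (fderiv ℝ G) x‖ ^ p ≤
      D ^ p * (‖x‖ ^ a * (1 + ‖x‖ ^ q) ^ ((-γ - 1) * p)) := by
    have h1 := hbound x hx
    have h2 : ‖fderiv ℝ (fderiv ℝ G) x‖ ^ p ≤
        (D * ((‖x‖ ^ 2) ^ (β - 1) * (1 + (‖x‖ ^ 2) ^ β) ^ (-γ - 1))) ^ p :=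
      Real.rpow_le_rpow (by positivity) h1 hp0.le
    refine le_trans h2 (le_of_eq ?_)
    rw [Real.mul_rpow hDpos.le hA, Real.mul_rpow (by positivity) (by positivity)]
    congr 1
    congr 1
    · -- ((‖x‖^2)^(β-1))^p = ‖x‖^a
      rw [← Real.rpow_natCast ‖x‖ 2, ← Real.rpow_mul (norm_nonneg x),
        ← Real.rpow_mul (norm_nonneg x), ha, hq2β]
      congr 1
      push_cast
      ring
    · rw [hq_pow, ← Real.rpow_mul (by positivity : (0:ℝ) ≤ 1 + ‖x‖ ^ q)]
  have hlhs_nonneg : (0:ℝ) ≤ ‖fderiv ℝ (fderiv ℝ G) x‖ ^ p :=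
    by positivity
  rw [Real.norm_eq_abs, abs_of_nonneg hlhs_nonneg]
  rcases lt_or_ge ‖x‖ 1 with hlt | hge
  · -- inside the ball
    have hfac : (1 + ‖x‖ ^ q) ^ ((-γ - 1) * p) ≤ 1 :=
      Real.rpow_le_one_of_one_le_of_nonpos
        (by nlinarith [Real.rpow_nonneg (norm_nonneg x) q])
        (by nlinarith)
    have h3 : ‖fderiv ℝ (fderiv ℝ G) x‖ ^ p ≤ D ^ p * ‖x‖ ^ a := by
      refine le_trans hstep1 ?_
      have := mul_le_mul_of_nonneg_left
        (mul_le_mul_of_nonneg_left hfac (rpow_nonneg (norm_nonneg x) a))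
        (le_of_lt (by positivity : (0:ℝ) < D ^ p))
      simpa [mul_one] using this
    refine le_trans h3 ?_
    show _ ≤ D ^ p * (Set.indicator (Metric.ball (0:EuclideanSpace ℝ (Fin N)) 1)
      (fun y : EuclideanSpace ℝ (Fin N) => ‖y‖ ^ a) x + 2 ^ e * (1 + ‖x‖) ^ (-e))
    have hmem : x ∈ Metric.ball (0:EuclideanSpace ℝ (Fin N)) 1 := mem_ball_zero_iff.2 hlt
    rw [Set.indicator_of_mem hmem]
    have : (0:ℝ) ≤ 2 ^ e * (1 + ‖x‖) ^ (-e) := by positivity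
    nlinarith [this, (by positivity : (0:ℝ) < D ^ p)]
  · -- outside the ball
    have hxq : (0:ℝ) < ‖x‖ ^ q := Real.rpow_pos_of_pos hr q
    have hfac : (1 + ‖x‖ ^ q) ^ ((-γ - 1) * p) ≤ (‖x‖ ^ q) ^ ((-γ - 1) * p) :=
      Real.rpow_le_rpow_of_nonpos hxq (by linarith) (by nlinarith)
    have h4 : ‖x‖ ^ a * (1 + ‖x‖ ^ q) ^ ((-γ - 1) * p) ≤ ‖x‖ ^ (-e) := by
      calc ‖x‖ ^ a * (1 + ‖x‖ ^ q) ^ ((-γ - 1) * p)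
          ≤ ‖x‖ ^ a * (‖x‖ ^ q) ^ ((-γ - 1) * p) :=
            mul_le_mul_of_nonneg_left hfac (rpow_nonneg (norm_nonneg x) a)
        _ = ‖x‖ ^ (-e) := by
            rw [← Real.rpow_mul (norm_nonneg x), ← Real.rpow_add hr]
            congr 1
            rw [he]
            ring
    have h5 : ‖x‖ ^ (-e) ≤ 2 ^ e * (1 + ‖x‖) ^ (-e) := by
      have h2x : 1 + ‖x‖ ≤ 2 * ‖x‖ := by linarith
      have h6 : (1 + ‖x‖) ^ (-e) ≥ (2 * ‖x‖) ^ (-e) :=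
        Real.rpow_le_rpow_of_nonpos (by linarith) h2x (by linarith)
      have h7 : (2 * ‖x‖ : ℝ) ^ (-e) = 2 ^ (-e) * ‖x‖ ^ (-e) :=
        Real.mul_rpow (by norm_num) (norm_nonneg x)
      have h8 : (2:ℝ) ^ e * (2:ℝ) ^ (-e) = 1 := by
        rw [← Real.rpow_add two_pos]; simp
      calc ‖x‖ ^ (-e) = 2 ^ e * (2 ^ (-e) * ‖x‖ ^ (-e)) := by
            rw [← mul_assoc, h8, one_mul]
        _ = 2 ^ e * (2 * ‖x‖) ^ (-e) := by rw [h7]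
        _ ≤ 2 ^ e * (1 + ‖x‖) ^ (-e) := by
            have : (0:ℝ) ≤ (2:ℝ) ^ e := by positivity
            nlinarith [h6, this]
    refine le_trans hstep1 ?_
    show _ ≤ D ^ p * (Set.indicator (Metric.ball (0:EuclideanSpace ℝ (Fin N)) 1)
      (fun y : EuclideanSpace ℝ (Fin N) => ‖y‖ ^ a) x + 2 ^ e * (1 + ‖x‖) ^ (-e))
    have hindnn : (0:ℝ) ≤ Set.indicator (Metric.ball (0:EuclideanSpace ℝ (Fin N)) 1) (fun y : EuclideanSpace ℝ (Fin N) => ‖y‖ ^ a) x :=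
      Set.indicator_nonneg (fun y _ => rpow_nonneg (norm_nonneg y) a) x
    have hchain : ‖x‖ ^ a * (1 + ‖x‖ ^ q) ^ ((-γ - 1) * p) ≤ 2 ^ e * (1 + ‖x‖) ^ (-e) :=
      le_trans h4 h5
    nlinarith [hchain, hindnn, (by positivity : (0:ℝ) < D ^ p),
      mul_le_mul_of_nonneg_left hchain (le_of_lt (by positivity : (0:ℝ) < D ^ p))]
end

section
/- Let N ≥ 2 and 1 < p < N. There exist constants c₁, c₂ > 0 depending only on N and p such that for every x₀ with |x₀| < 1 and every 0 < λ < 1, c₁ λ^{(p/(N−p))(N + p/(p−1))} ≤ ∫_{|x|<1} |D U_{λ,x₀}(x)|^p dx ≤ c₂ λ^{(p/(N−p))(N + p/(p−1))}, where U_{λ,x₀}(x) = λ U(λ^{p/(N−p)}(x − x₀)) and U is the Aubin–Talenti minimizer normalized so that ‖DU‖_{L^p(ℝ^N)} = 1. -/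
set_option maxHeartbeats 1000000

open Real MeasureTheory

theorem grad_norm_eq {E : Type*} [NormedAddCommGroup E] [InnerProductSpace ℝ E]
    [CompleteSpace E] (x₀ : E) (lam k₀ μ q c : ℝ) (hlam : 0 < lam) (hk : 0 < k₀) (hμ : 0 < μ)
    (hq : 1 < q) (hc : c < 0) (x : E) (hx : x ≠ x₀) :
    ‖gradient (fun y : E => lam * (k₀ * (1 + ‖μ • (y - x₀)‖ ^ q) ^ c)) x‖
      = lam * k₀ * (-c) * q * μ ^ q * ‖x - x₀‖ ^ (q - 1)
          * (1 + μ ^ q * ‖x - x₀‖ ^ q) ^ (c - 1) := by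
  set z := x - x₀ with hz
  have hz0 : z ≠ 0 := sub_ne_zero.mpr hx
  have hzn : (0:ℝ) < ‖z‖ := norm_pos_iff.mpr hz0
  set t₀ : ℝ := ‖z‖ ^ 2 with ht₀
  have ht₀pos : 0 < t₀ := by positivity
  set P : ℝ := 1 + μ ^ q * t₀ ^ (q / 2) with hP
  have hPpos : 0 < P := by positivity
  -- inner function
  have h1 : HasFDerivAt (fun y : E => ‖y - x₀‖ ^ 2) (2 • innerSL ℝ z) x := by
    have h := (hasStrictFDerivAt_norm_sq z).hasFDerivAt
    have h2 := HasFDerivAt.comp (f := fun y : E => y - x₀) x h (hasFDerivAt_sub_const x₀)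
    exact h2
  -- outer scalar function
  set D : ℝ := lam * (k₀ * (c * P ^ (c - 1) * (μ ^ q * (q / 2 * t₀ ^ (q / 2 - 1)))))
    with hD
  have hH : HasDerivAt (fun t : ℝ => lam * (k₀ * (1 + μ ^ q * t ^ (q / 2)) ^ c)) D t₀ := by
    have h₁ : HasDerivAt (fun t : ℝ => t ^ (q / 2)) (q / 2 * t₀ ^ (q / 2 - 1)) t₀ :=
      Real.hasDerivAt_rpow_const (Or.inl ht₀pos.ne')
    have h₂ := ((h₁.const_mul (μ ^ q)).const_add 1).rpow_const (p := c) (Or.inl hPpos.ne')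
    have h₃ := ((h₂.const_mul k₀).const_mul lam)
    refine h₃.congr_deriv ?_
    rw [hD]; ring
  have hcomp := hH.comp_hasFDerivAt x h1
  -- rewrite the target function as this composition
  have hns : ∀ w : E, ‖μ • w‖ ^ q = μ ^ q * (‖w‖ ^ 2 : ℝ) ^ (q / 2) := by
    intro w
    rw [norm_smul, Real.norm_eq_abs, abs_of_pos hμ,
      Real.mul_rpow hμ.le (norm_nonneg _), ← Real.rpow_natCast ‖w‖ 2,
      ← Real.rpow_mul (norm_nonneg _)]
    congr 2
    push_cast; ring
  have hgrad : HasGradientAt (fun y : E => lam * (k₀ * (1 + ‖μ • (y - x₀)‖ ^ q) ^ c))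
      ((2 * D) • z) x := by
    have hfun : (fun y : E => lam * (k₀ * (1 + ‖μ • (y - x₀)‖ ^ q) ^ c))
        = fun y : E => lam * (k₀ * (1 + μ ^ q * ((‖y - x₀‖ ^ 2 : ℝ)) ^ (q / 2)) ^ c) := by
      funext y; rw [hns]
    rw [hfun, hasGradientAt_iff_hasFDerivAt]
    refine hcomp.congr_fderiv ?_
    ext w
    simp [real_inner_smul_left, two_smul]
    ring
  rw [hgrad.gradient, norm_smul, Real.norm_eq_abs]
  -- now compute
  have hpow1 : t₀ ^ (q / 2 - 1) = ‖z‖ ^ (q - 2) := by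
    rw [ht₀, ← Real.rpow_natCast ‖z‖ 2, ← Real.rpow_mul (norm_nonneg _)]
    congr 1; push_cast; ring
  have hpow2 : t₀ ^ (q / 2) = ‖z‖ ^ q := by
    rw [ht₀, ← Real.rpow_natCast ‖z‖ 2, ← Real.rpow_mul (norm_nonneg _)]
    congr 1; push_cast; ring
  have hkey : ‖z‖ ^ (q - 2) * ‖z‖ = ‖z‖ ^ (q - 1) := by
    nth_rewrite 2 [← Real.rpow_one ‖z‖]
    rw [← Real.rpow_add hzn]; congr 1; ring
  have hDneg : D < 0 := by
    rw [hD]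
    have h3 : 0 < P ^ (c - 1) := Real.rpow_pos_of_pos hPpos _
    have h4 : 0 < t₀ ^ (q / 2 - 1) := Real.rpow_pos_of_pos ht₀pos _
    have h5 : 0 < μ ^ q := Real.rpow_pos_of_pos hμ _
    have h6 : 0 < μ ^ q * (q / 2 * t₀ ^ (q / 2 - 1)) := by positivity
    nlinarith [mul_pos hlam hk, mul_pos (mul_pos (mul_pos hlam hk) (neg_pos.mpr hc))
      (mul_pos h3 h6)]
  rw [abs_of_neg (by linarith : 2 * D < 0)]
  rw [hD, hpow1, hP, hpow2]
  linear_combination (-(2 * lam * k₀ * c * (q/2) * μ ^ q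
    * (1 + μ ^ q * ‖z‖ ^ q) ^ (c - 1))) * hkey

/-- Energy of the rescaled Aubin–Talenti minimizer inside the unit ball for small `λ`:
with `U(x) = k₀(1+|x|^{p/(p−1)})^{−(N−p)/p}` normalized so `‖DU‖_{L^p(ℝ^N)} = 1`, and
`U_{λ,x₀}(x) = λ U(λ^{p/(N−p)}(x−x₀))`, there are `c₁, c₂ > 0` (depending only on `N, p`)
with `c₁ λ^{(p/(N−p))(N+p/(p−1))} ≤ ∫_{|x|<1} |DU_{λ,x₀}|^p ≤ c₂ λ^{(p/(N−p))(N+p/(p−1))}`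
for all `|x₀| < 1` and `0 < λ < 1`. -/
theorem stmt_12 (N : ℕ) (hN : 2 ≤ N) (p : ℝ) (hp1 : 1 < p) (hpN : p < N)
    (k₀ : ℝ) (hk : 0 < k₀)
    (hnorm : ∫ x : EuclideanSpace ℝ (Fin N),
        ‖gradient (fun y : EuclideanSpace ℝ (Fin N) =>
            k₀ * (1 + ‖y‖ ^ (p / (p - 1))) ^ (-((N : ℝ) - p) / p)) x‖ ^ p = 1) :
    ∃ c₁ c₂ : ℝ, 0 < c₁ ∧ 0 < c₂ ∧
      ∀ x₀ : EuclideanSpace ℝ (Fin N), ‖x₀‖ < 1 →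
      ∀ lam : ℝ, 0 < lam → lam < 1 →
        c₁ * lam ^ ((p / ((N : ℝ) - p)) * ((N : ℝ) + p / (p - 1))) ≤
          (∫ x in Metric.ball (0 : EuclideanSpace ℝ (Fin N)) 1,
            ‖gradient (fun y : EuclideanSpace ℝ (Fin N) =>
                lam * (k₀ * (1 + ‖lam ^ (p / ((N : ℝ) - p)) • (y - x₀)‖ ^ (p / (p - 1))) ^
                  (-((N : ℝ) - p) / p))) x‖ ^ p) ∧
        (∫ x in Metric.ball (0 : EuclideanSpace ℝ (Fin N)) 1,
            ‖gradient (fun y : EuclideanSpace ℝ (Fin N) =>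
                lam * (k₀ * (1 + ‖lam ^ (p / ((N : ℝ) - p)) • (y - x₀)‖ ^ (p / (p - 1))) ^
                  (-((N : ℝ) - p) / p))) x‖ ^ p) ≤
          c₂ * lam ^ ((p / ((N : ℝ) - p)) * ((N : ℝ) + p / (p - 1))) := by
  classical
  have hF : True := trivial
  have hFin : Nonempty (Fin N) := ⟨⟨0, by omega⟩⟩
  have hp0 : (0:ℝ) < p := by linarith
  have hNp : (0:ℝ) < (N:ℝ) - p := by linarith
  have hNp' : ((N:ℝ) - p) ≠ 0 := hNp.ne'
  have hp1' : p - 1 ≠ 0 := by linarith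
  set q : ℝ := p / (p - 1) with hqdef
  set c : ℝ := -((N:ℝ) - p) / p with hcdef
  set a : ℝ := p / ((N:ℝ) - p) with hadef
  have hq1 : 1 < q := by
    rw [hqdef, lt_div_iff₀ (by linarith)]; linarith
  have hcneg : c < 0 := by
    rw [hcdef]
    apply div_neg_of_neg_of_pos (by linarith) hp0
  have ha0 : 0 < a := div_pos hp0 hNp
  have hcq : 0 < -c := by linarith
  -- the two base constants
  set K₁ : ℝ := k₀ * -c * q * ((5/8 : ℝ) ^ (q-1) * (1 + 2 ^ q) ^ (c-1)) with hK₁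
  set K₂ : ℝ := k₀ * -c * q * ((2:ℝ) ^ (q-1) * 1) with hK₂
  have hK₁pos : 0 < K₁ := by
    have h1 := Real.rpow_pos_of_pos (show (0:ℝ) < 5/8 by norm_num) (q-1)
    have h2 : (0:ℝ) < (1 + 2 ^ q) ^ (c-1) :=
      Real.rpow_pos_of_pos (by positivity) _
    positivity
  have hK₂pos : 0 < K₂ := by
    have h1 := Real.rpow_pos_of_pos (show (0:ℝ) < 2 by norm_num) (q-1)
    positivity
  refine ⟨K₁ ^ p * (volume (Metric.ball (0 : EuclideanSpace ℝ (Fin N)) (1/8))).toReal,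
    K₂ ^ p * (volume (Metric.ball (0 : EuclideanSpace ℝ (Fin N)) 1)).toReal, ?_, ?_, ?_⟩
  · have h1 : 0 < (volume (Metric.ball (0 : EuclideanSpace ℝ (Fin N)) (1/8))).toReal :=
      ENNReal.toReal_pos (Metric.measure_ball_pos _ _ (by norm_num)).ne'
        (measure_ball_lt_top).ne
    have := Real.rpow_pos_of_pos hK₁pos p
    positivity
  · have h1 : 0 < (volume (Metric.ball (0 : EuclideanSpace ℝ (Fin N)) 1)).toReal :=
      ENNReal.toReal_pos (Metric.measure_ball_pos _ _ (by norm_num)).ne'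
        (measure_ball_lt_top).ne
    have := Real.rpow_pos_of_pos hK₂pos p
    positivity
  intro x₀ hx₀ lam hlam hlam1
  set μ : ℝ := lam ^ a with hμdef
  have hμ : 0 < μ := Real.rpow_pos_of_pos hlam _
  have hμ1 : μ ≤ 1 := Real.rpow_le_one hlam.le hlam1.le ha0.le
  have hμq : 0 < μ ^ q := Real.rpow_pos_of_pos hμ _
  set Gp : EuclideanSpace ℝ (Fin N) → ℝ := fun x =>
    (lam * k₀ * -c * q * μ ^ q * (‖x - x₀‖ ^ (q-1) * (1 + μ ^ q * ‖x - x₀‖ ^ q) ^ (c-1))) ^ p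
    with hGpdef
  -- scaling identity
  have key : ∀ C : ℝ, 0 ≤ C →
      (lam * k₀ * -c * q * μ ^ q * C) ^ p
        = (k₀ * -c * q * C) ^ p * lam ^ (a * ((N:ℝ) + q)) := by
    intro C hC
    have h1 : lam * k₀ * -c * q * μ ^ q * C = (k₀ * -c * q * C) * (lam * μ ^ q) := by
      ring
    rw [h1, Real.mul_rpow (by positivity) (by positivity)]
    congr 1
    rw [Real.mul_rpow hlam.le hμq.le]
    have h2 : μ ^ q = lam ^ (a * q) := by
      rw [hμdef, ← Real.rpow_mul hlam.le]
    have h3 : (μ ^ q) ^ p = lam ^ (a * q * p) := by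
      rw [h2, ← Real.rpow_mul hlam.le]
    rw [h3, ← Real.rpow_add hlam]
    congr 1
    rw [hadef, hqdef]
    field_simp
    ring
  -- a.e. rewriting of the integrand
  have hae : ∀ᵐ x : EuclideanSpace ℝ (Fin N) ∂volume, x ≠ x₀ := by
    rw [ae_iff]
    have h : {x : EuclideanSpace ℝ (Fin N) | ¬ x ≠ x₀} = {x₀} := by ext w; simp
    rw [h]
    exact measure_singleton _
  have hIeq : (∫ x in Metric.ball (0 : EuclideanSpace ℝ (Fin N)) 1,
        ‖gradient (fun y : EuclideanSpace ℝ (Fin N) => lam * (k₀ * (1 + ‖μ • (y - x₀)‖ ^ q) ^ c)) x‖ ^ p)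
      = ∫ x in Metric.ball (0 : EuclideanSpace ℝ (Fin N)) 1, Gp x := by
    refine setIntegral_congr_ae measurableSet_ball ?_
    filter_upwards [hae] with x hx _
    rw [grad_norm_eq x₀ lam k₀ μ q c hlam hk hμ hq1 hcneg x hx, hGpdef]
    congr 1
    ring
  rw [hIeq]
  -- continuity, nonnegativity and integrability of Gp
  have hnc : Continuous fun x : EuclideanSpace ℝ (Fin N) => ‖x - x₀‖ := (continuous_id.sub continuous_const).norm
  have hGc : Continuous Gp := by
    have h2 : Continuous fun x : EuclideanSpace ℝ (Fin N) => ‖x - x₀‖ ^ (q-1) :=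
      hnc.rpow_const (fun x => Or.inr (by linarith))
    have h3 : Continuous fun x : EuclideanSpace ℝ (Fin N) => (1 + μ ^ q * ‖x - x₀‖ ^ q) ^ (c-1) := by
      refine Continuous.rpow_const ?_ (fun x => Or.inl ?_)
      · exact continuous_const.add (continuous_const.mul
          (hnc.rpow_const (fun x => Or.inr (by linarith))))
      · have h4 : (0:ℝ) ≤ μ ^ q * ‖x - x₀‖ ^ q := by
          have := Real.rpow_nonneg (norm_nonneg (x - x₀)) q
          positivity
        positivity
    exact (continuous_const.mul (h2.mul h3)).rpow_const (fun x => Or.inr hp0.le)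
  have hGnonneg : ∀ x : EuclideanSpace ℝ (Fin N), 0 ≤ Gp x := by
    intro x
    apply Real.rpow_nonneg
    have h1 : (0:ℝ) ≤ ‖x - x₀‖ ^ (q-1) := Real.rpow_nonneg (norm_nonneg _) _
    have h2 : (0:ℝ) ≤ (1 + μ ^ q * ‖x - x₀‖ ^ q) ^ (c-1) := by
      apply Real.rpow_nonneg
      have := Real.rpow_nonneg (norm_nonneg (x - x₀)) q
      positivity
    positivity
  have hGint : IntegrableOn Gp (Metric.ball (0 : EuclideanSpace ℝ (Fin N)) 1) volume :=
    (hGc.continuousOn.integrableOn_compact (isCompact_closedBall (0 : EuclideanSpace ℝ (Fin N)) 1)).mono_set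
      Metric.ball_subset_closedBall
  have hub : ∀ x ∈ Metric.ball (0 : EuclideanSpace ℝ (Fin N)) 1, ‖x - x₀‖ ≤ 2 := by
    intro x hx
    rw [Metric.mem_ball, dist_zero_right] at hx
    calc ‖x - x₀‖ ≤ ‖x‖ + ‖x₀‖ := norm_sub_le _ _
      _ ≤ 2 := by linarith
  constructor
  · -- LOWER BOUND
    obtain ⟨e₀, he₀, hie⟩ : ∃ e₀ : EuclideanSpace ℝ (Fin N), ‖e₀‖ = 1 ∧ (inner ℝ x₀ e₀ : ℝ) ≤ 0 := by
      by_cases hx0 : x₀ = 0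
      · refine ⟨EuclideanSpace.single ⟨0, by omega⟩ 1, ?_, ?_⟩
        · simp [EuclideanSpace.norm_single]
        · simp [hx0]
      · refine ⟨-(‖x₀‖⁻¹ • x₀), ?_, ?_⟩
        · rw [norm_neg, norm_smul, norm_inv, norm_norm,
            inv_mul_cancel₀ (norm_ne_zero_iff.mpr hx0)]
        · rw [inner_neg_right, real_inner_smul_right, real_inner_self_eq_norm_sq]
          have h5 : 0 < ‖x₀‖ := norm_pos_iff.mpr hx0
          have h6 : 0 < ‖x₀‖⁻¹ * ‖x₀‖ ^ 2 := by positivity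
          linarith
    have hee : (inner ℝ e₀ e₀ : ℝ) = 1 := by
      rw [real_inner_self_eq_norm_sq, he₀]; norm_num
    set S : Set (EuclideanSpace ℝ (Fin N)) := Metric.ball ((3/4 : ℝ) • e₀) (1/8) with hS
    have h34 : ‖(3/4 : ℝ) • e₀‖ = 3/4 := by
      rw [norm_smul, he₀, Real.norm_eq_abs]; norm_num
    have hS_sub : S ⊆ Metric.ball (0 : EuclideanSpace ℝ (Fin N)) 1 := by
      intro x hx
      rw [hS, Metric.mem_ball, dist_eq_norm] at hx
      rw [Metric.mem_ball, dist_zero_right]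
      calc ‖x‖ = ‖(x - (3/4:ℝ) • e₀) + (3/4:ℝ) • e₀‖ := by rw [sub_add_cancel]
        _ ≤ ‖x - (3/4:ℝ) • e₀‖ + ‖(3/4:ℝ) • e₀‖ := norm_add_le _ _
        _ < 1 := by rw [h34]; linarith
    have hS_lb : ∀ x ∈ S, (5/8 : ℝ) ≤ ‖x - x₀‖ := by
      intro x hx
      rw [hS, Metric.mem_ball, dist_eq_norm] at hx
      have h1 : (inner ℝ (x - x₀) e₀ : ℝ) ≤ ‖x - x₀‖ := by
        calc (inner ℝ (x - x₀) e₀ : ℝ) ≤ ‖x - x₀‖ * ‖e₀‖ := real_inner_le_norm _ _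
          _ = ‖x - x₀‖ := by rw [he₀, mul_one]
      have h2 : -(1/8 : ℝ) ≤ (inner ℝ (x - (3/4:ℝ) • e₀) e₀ : ℝ) := by
        have h3 := abs_real_inner_le_norm (x - (3/4:ℝ) • e₀) e₀
        rw [he₀, mul_one] at h3
        have h4 := (abs_le.mp (h3.trans hx.le)).1
        linarith
      have hsplit : (inner ℝ (x - x₀) e₀ : ℝ)
          = (inner ℝ (x - (3/4:ℝ) • e₀) e₀ : ℝ) + (3/4) * (inner ℝ e₀ e₀ : ℝ)
            - (inner ℝ x₀ e₀ : ℝ) := by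
        rw [inner_sub_left, inner_sub_left, real_inner_smul_left]
        ring
      rw [hsplit, hee] at h1
      linarith
    have hGp_ge : ∀ x ∈ S, K₁ ^ p * lam ^ (a * ((N:ℝ) + q)) ≤ Gp x := by
      intro x hx
      have hxball := hS_sub hx
      have hb1 : (5/8:ℝ) ^ (q-1) ≤ ‖x - x₀‖ ^ (q-1) :=
        Real.rpow_le_rpow (by norm_num) (hS_lb x hx) (by linarith)
      have hmul : μ ^ q * ‖x - x₀‖ ^ q ≤ 2 ^ q := by
        rw [← Real.mul_rpow hμ.le (norm_nonneg _)]
        apply Real.rpow_le_rpow (by positivity) ?_ (by linarith)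
        calc μ * ‖x - x₀‖ ≤ 1 * 2 :=
            mul_le_mul hμ1 (hub x hxball) (norm_nonneg _) zero_le_one
          _ = 2 := by norm_num
      have hb2 : (1 + (2:ℝ) ^ q) ^ (c-1) ≤ (1 + μ ^ q * ‖x - x₀‖ ^ q) ^ (c-1) := by
        apply Real.rpow_le_rpow_of_nonpos ?_ (by linarith) (by linarith)
        have : (0:ℝ) ≤ μ ^ q * ‖x - x₀‖ ^ q := by positivity
        linarith
      have hCle : (5/8:ℝ) ^ (q-1) * (1 + 2 ^ q) ^ (c-1)
          ≤ ‖x - x₀‖ ^ (q-1) * (1 + μ ^ q * ‖x - x₀‖ ^ q) ^ (c-1) := by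
        apply mul_le_mul hb1 hb2 (Real.rpow_nonneg (by positivity) _)
          (Real.rpow_nonneg (norm_nonneg _) _)
      have h0 : (0:ℝ) ≤ (5/8:ℝ) ^ (q-1) * (1 + 2 ^ q) ^ (c-1) := by
        have := Real.rpow_nonneg (show (0:ℝ) ≤ 5/8 by norm_num) (q-1)
        have := Real.rpow_nonneg (show (0:ℝ) ≤ 1 + (2:ℝ)^q by positivity) (c-1)
        positivity
      calc K₁ ^ p * lam ^ (a * ((N:ℝ) + q))
          = (lam * k₀ * -c * q * μ ^ q * ((5/8:ℝ) ^ (q-1) * (1 + 2 ^ q) ^ (c-1))) ^ p :=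
            (key _ h0).symm
        _ ≤ Gp x := by
            rw [hGpdef]
            apply Real.rpow_le_rpow (by positivity)
              (mul_le_mul_of_nonneg_left hCle (by positivity)) hp0.le
    calc K₁ ^ p * (volume (Metric.ball (0 : EuclideanSpace ℝ (Fin N)) (1/8))).toReal * lam ^ (a * ((N:ℝ) + q))
        = (K₁ ^ p * lam ^ (a * ((N:ℝ) + q))) * (volume S).toReal := by
          rw [hS, show volume (Metric.ball ((3/4 : ℝ) • e₀) (1/8))
            = volume (Metric.ball (0 : EuclideanSpace ℝ (Fin N)) (1/8)) from
            Measure.addHaar_ball_center _ _ _]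
          ring
      _ ≤ ∫ x in S, Gp x :=
          setIntegral_ge_of_const_le_real measurableSet_ball (measure_ball_lt_top).ne
            hGp_ge (hGint.mono_set hS_sub)
      _ ≤ ∫ x in Metric.ball (0 : EuclideanSpace ℝ (Fin N)) 1, Gp x :=
          setIntegral_mono_set hGint
            (Filter.Eventually.of_forall fun x => hGnonneg x)
            (HasSubset.Subset.eventuallyLE hS_sub)
  · -- UPPER BOUND
    have hGp_le : ∀ x ∈ Metric.ball (0 : EuclideanSpace ℝ (Fin N)) 1,
        ‖Gp x‖ ≤ K₂ ^ p * lam ^ (a * ((N:ℝ) + q)) := by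
      intro x hx
      rw [Real.norm_eq_abs, abs_of_nonneg (hGnonneg x)]
      have hb1 : ‖x - x₀‖ ^ (q-1) ≤ (2:ℝ) ^ (q-1) :=
        Real.rpow_le_rpow (norm_nonneg _) (hub x hx) (by linarith)
      have hb2 : (1 + μ ^ q * ‖x - x₀‖ ^ q) ^ (c-1) ≤ 1 := by
        apply Real.rpow_le_one_of_one_le_of_nonpos ?_ (by linarith)
        have : (0:ℝ) ≤ μ ^ q * ‖x - x₀‖ ^ q := by positivity
        linarith
      have hCle : ‖x - x₀‖ ^ (q-1) * (1 + μ ^ q * ‖x - x₀‖ ^ q) ^ (c-1)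
          ≤ (2:ℝ) ^ (q-1) * 1 := by
        apply mul_le_mul hb1 hb2 (Real.rpow_nonneg (by positivity) _)
          (Real.rpow_nonneg (by norm_num) _)
      have h0 : (0:ℝ) ≤ (2:ℝ) ^ (q-1) * 1 := by
        have := Real.rpow_nonneg (show (0:ℝ) ≤ 2 by norm_num) (q-1)
        positivity
      calc Gp x ≤ (lam * k₀ * -c * q * μ ^ q * ((2:ℝ) ^ (q-1) * 1)) ^ p := by
            rw [hGpdef]
            apply Real.rpow_le_rpow ?_ (mul_le_mul_of_nonneg_left hCle (by positivity)) hp0.le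
            have h1 : (0:ℝ) ≤ ‖x - x₀‖ ^ (q-1) := Real.rpow_nonneg (norm_nonneg _) _
            have h2 : (0:ℝ) ≤ (1 + μ ^ q * ‖x - x₀‖ ^ q) ^ (c-1) := by
              apply Real.rpow_nonneg
              have := Real.rpow_nonneg (norm_nonneg (x - x₀)) q
              positivity
            positivity
        _ = K₂ ^ p * lam ^ (a * ((N:ℝ) + q)) := key _ h0
    calc (∫ x in Metric.ball (0 : EuclideanSpace ℝ (Fin N)) 1, Gp x)
        ≤ ‖∫ x in Metric.ball (0 : EuclideanSpace ℝ (Fin N)) 1, Gp x‖ := le_abs_self _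
      _ ≤ (K₂ ^ p * lam ^ (a * ((N:ℝ) + q)))
            * (volume (Metric.ball (0 : EuclideanSpace ℝ (Fin N)) 1)).toReal :=
          norm_setIntegral_le_of_norm_le_const (measure_ball_lt_top) hGp_le
      _ = K₂ ^ p * (volume (Metric.ball (0 : EuclideanSpace ℝ (Fin N)) 1)).toReal * lam ^ (a * ((N:ℝ) + q)) := by
          ring
end

section
/- Let N ≥ 2 and 1 < p < N. There exist constants c₁, c₂ > 0 depending only on N and p such that for every x₀ with |x₀| < 1 and every λ > 1: 1 − c₂ λ^{−p/(p−1)} / (1 − |x₀|)^{(N−p)/(p−1)} ≤ ∫_{|x|<1} |D U_{λ,x₀}(x)|^p dx ≤ 1 − c₁ λ^{−p/(p−1)}. -/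
open Real MeasureTheory InnerProductSpace Metric Set

section AuxGradient

variable {E : Type*} [NormedAddCommGroup E] [InnerProductSpace ℝ E] [CompleteSpace E]

theorem aux_gradU (Np p k₀ : ℝ) (hp1 : 1 < p) (x : E) :
    HasGradientAt (fun y : E => k₀ * (1 + ‖y‖ ^ (p / (p - 1))) ^ (-(Np - p) / p))
      ((k₀ * (-(Np - p) / p) * (1 + ‖x‖ ^ (p / (p - 1))) ^ (-(Np - p) / p - 1) *
        ((p / (p - 1)) * ‖x‖ ^ (p / (p - 1) - 2))) • x) x := by
  have hp0 : 0 < p := by linarith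
  set q : ℝ := p / (p - 1) with hq_def
  have hq : 1 < q := by
    rw [hq_def, lt_div_iff₀ (by linarith)]
    linarith
  set e : ℝ := -(Np - p) / p with he_def
  have h1 : HasFDerivAt (fun y : E => ‖y‖ ^ q) ((q * ‖x‖ ^ (q - 2)) • innerSL ℝ x) x :=
    hasFDerivAt_norm_rpow x hq
  have hpos : (0:ℝ) < 1 + ‖x‖ ^ q := by positivity
  have h2 : HasDerivAt (fun t : ℝ => k₀ * (1 + t) ^ e)
      (k₀ * (e * (1 + ‖x‖ ^ q) ^ (e - 1))) (‖x‖ ^ q) := by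
    have ha : HasDerivAt (fun t : ℝ => 1 + t) 1 (‖x‖ ^ q) := (hasDerivAt_id _).const_add 1
    have hb : HasDerivAt (fun s : ℝ => s ^ e) (e * (1 + ‖x‖ ^ q) ^ (e - 1)) (1 + ‖x‖ ^ q) :=
      Real.hasDerivAt_rpow_const (Or.inl hpos.ne')
    have := (hb.comp _ ha).const_mul k₀
    simpa using this
  have h3 := h2.comp_hasFDerivAt x h1
  rw [hasGradientAt_iff_hasFDerivAt]
  convert h3 using 1
  · rfl
  · rfl
  ext v
  simp only [toDual_apply_apply, ContinuousLinearMap.smul_apply, innerSL_apply_apply, smul_eq_mul,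
    real_inner_smul_left]
  ring

theorem aux_gradResc (Np p k₀ lam c : ℝ) (hp1 : 1 < p) (x₀ x : E) :
    HasGradientAt (fun y : E => lam * (k₀ * (1 + ‖c • (y - x₀)‖ ^ (p / (p - 1))) ^ (-(Np - p) / p)))
      ((lam * c) • ((k₀ * (-(Np - p) / p) *
          (1 + ‖c • (x - x₀)‖ ^ (p / (p - 1))) ^ (-(Np - p) / p - 1) *
        ((p / (p - 1)) * ‖c • (x - x₀)‖ ^ (p / (p - 1) - 2))) • (c • (x - x₀)))) x := by
  set z : E := c • (x - x₀) with hz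
  have hU := (aux_gradU Np p k₀ hp1 z).hasFDerivAt
  have hm : HasFDerivAt (fun y : E => c • (y - x₀)) (c • ContinuousLinearMap.id ℝ E) x :=
    ((hasFDerivAt_id x).sub_const x₀).const_smul c
  have h3 := (hU.comp x hm).const_mul lam
  rw [hasGradientAt_iff_hasFDerivAt]
  convert h3 using 1
  · rfl
  · rfl
  ext v
  simp only [toDual_apply_apply, ContinuousLinearMap.smul_apply, ContinuousLinearMap.coe_comp',
    Function.comp_apply, ContinuousLinearMap.coe_id', id_eq, smul_eq_mul,
    real_inner_smul_left, inner_smul_right]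
  ring

theorem aux_norm (Np p k₀ lam c : ℝ) (hp1 : 1 < p) (hpN : p < Np) (hk : 0 < k₀)
    (hl : 0 < lam) (hc : 0 < c) (z : E) :
    ‖(lam * c) • ((k₀ * (-(Np - p) / p) *
          (1 + ‖z‖ ^ (p / (p - 1))) ^ (-(Np - p) / p - 1) *
        ((p / (p - 1)) * ‖z‖ ^ (p / (p - 1) - 2))) • z)‖ ^ p
    = (lam * c) ^ p * ((k₀ * ((Np - p) / p) * (p / (p - 1))) * ‖z‖ ^ (p / (p - 1) - 1) *
        (1 + ‖z‖ ^ (p / (p - 1))) ^ (-(Np - p) / p - 1)) ^ p := by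
  have hp0 : 0 < p := by linarith
  set q : ℝ := p / (p - 1) with hq_def
  have hq : 1 < q := by
    rw [hq_def, lt_div_iff₀ (by linarith)]; linarith
  set A : ℝ := (1 + ‖z‖ ^ q) ^ (-(Np - p) / p - 1) with hA
  have hApos : 0 < A := by positivity
  have hzz : ‖z‖ ^ (q - 2) * ‖z‖ = ‖z‖ ^ (q - 1) := by
    rcases eq_or_ne z 0 with rfl | hz
    · rw [norm_zero, mul_zero, Real.zero_rpow (by linarith)]
    · have h0 : (0:ℝ) < ‖z‖ := norm_pos_iff.mpr hz
      rw [← Real.rpow_add_one h0.ne']; ring_nf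
  have h1 : ‖(lam * c) • ((k₀ * (-(Np - p) / p) * A * (q * ‖z‖ ^ (q - 2))) • z)‖
      = (lam * c) * ((k₀ * ((Np - p) / p) * q) * ‖z‖ ^ (q - 1) * A) := by
    rw [norm_smul, norm_smul, Real.norm_eq_abs, Real.norm_eq_abs,
      abs_of_pos (mul_pos hl hc)]
    have hX : k₀ * (-(Np - p) / p) * A * (q * ‖z‖ ^ (q - 2)) ≤ 0 := by
      have h1' : k₀ * (-(Np - p) / p) ≤ 0 :=
        mul_nonpos_of_nonneg_of_nonpos hk.le
          (div_nonpos_of_nonpos_of_nonneg (by linarith) hp0.le)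
      have h2' : k₀ * (-(Np - p) / p) * A ≤ 0 := mul_nonpos_of_nonpos_of_nonneg h1' hApos.le
      exact mul_nonpos_of_nonpos_of_nonneg h2'
        (mul_nonneg (by positivity) (Real.rpow_nonneg (norm_nonneg z) _))
    rw [abs_of_nonpos hX]
    rw [← hzz]
    ring
  have hK : (0:ℝ) ≤ k₀ * ((Np - p) / p) * q :=
    mul_nonneg (mul_nonneg hk.le (div_nonneg (by linarith) hp0.le)) (by linarith)
  rw [h1, Real.mul_rpow (mul_pos hl hc).le
    (mul_nonneg (mul_nonneg hK (Real.rpow_nonneg (norm_nonneg z) _)) hApos.le)]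

end AuxGradient

noncomputable def psi (Np p K : ℝ) (r : ℝ) : ℝ :=
  (K * r ^ (p / (p - 1) - 1) * (1 + r ^ (p / (p - 1))) ^ (-(Np - p) / p - 1)) ^ p

lemma psi_nonneg (Np p K : ℝ) (hK : 0 ≤ K) (r : ℝ) (hr : 0 ≤ r) : 0 ≤ psi Np p K r :=
  Real.rpow_nonneg (by positivity) p

lemma psi_meas (Np p K : ℝ) : Measurable (psi Np p K) := by unfold psi; fun_prop

lemma aux_scale {N : ℕ} (g : EuclideanSpace ℝ (Fin N) → ℝ) (c : ℝ) (hc : 0 < c)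
    (x₀ : EuclideanSpace ℝ (Fin N)) :
    ∫ x : EuclideanSpace ℝ (Fin N), g (c • (x - x₀)) = ((c : ℝ) ^ N)⁻¹ * ∫ x, g x := by
  have h1 : ∫ x : EuclideanSpace ℝ (Fin N), g (c • (x - x₀))
      = ∫ x : EuclideanSpace ℝ (Fin N), (fun w => g (c • w)) (x - x₀) := rfl
  rw [h1, integral_sub_right_eq_self (fun w => g (c • w)) x₀,
    Measure.integral_comp_smul volume g c, finrank_euclideanSpace_fin,
    abs_of_nonneg (inv_nonneg.2 (pow_nonneg hc.le N)), smul_eq_mul]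
lemma tail_eq (N : ℕ) (hN : 2 ≤ N) (Np p K : ℝ) (R : ℝ) (hR : 0 < R) :
    ∫ x in (ball (0 : EuclideanSpace ℝ (Fin N)) R)ᶜ, psi Np p K ‖x‖ =
      (N : ℝ) * (volume (ball (0 : EuclideanSpace ℝ (Fin N)) 1)).toReal *
        ∫ r in Ioi R, r ^ (N - 1) * psi Np p K r := by
  have hfr : Module.finrank ℝ (EuclideanSpace ℝ (Fin N)) = N := finrank_euclideanSpace_fin
  have hnt : Nontrivial (EuclideanSpace ℝ (Fin N)) :=
    Module.nontrivial_of_finrank_pos (R := ℝ) (by omega : 0 < Module.finrank ℝ _)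
  have h1 : ∫ x in (ball (0 : EuclideanSpace ℝ (Fin N)) R)ᶜ, psi Np p K ‖x‖ =
      ∫ x : EuclideanSpace ℝ (Fin N), (Ici R).indicator (psi Np p K) ‖x‖ := by
    rw [← integral_indicator (measurableSet_ball.compl)]
    congr 1
    ext x
    classical
    rw [Set.indicator_apply, Set.indicator_apply]
    have : x ∈ (ball (0 : EuclideanSpace ℝ (Fin N)) R)ᶜ ↔ ‖x‖ ∈ Ici R := by
      simp [mem_ball_zero_iff, not_lt]
    simp [this]
  rw [h1, MeasureTheory.integral_fun_norm_addHaar volume ((Ici R).indicator (psi Np p K))]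
  rw [hfr]
  have h2 : ∀ r : ℝ, r ^ (N - 1) • (Ici R).indicator (psi Np p K) r =
      (Ici R).indicator (fun r => r ^ (N - 1) * psi Np p K r) r := by
    intro r
    rw [Set.indicator_apply, Set.indicator_apply]
    by_cases h : r ∈ Ici R <;> simp [h]
  simp_rw [h2]
  rw [setIntegral_indicator measurableSet_Ici]
  have h3 : Ioi (0:ℝ) ∩ Ici R = Ici R :=
    inter_eq_self_of_subset_right (fun r hr' => lt_of_lt_of_le hR hr')
  rw [h3, integral_Ici_eq_integral_Ioi]
  rw [nsmul_eq_mul, smul_eq_mul]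
  rw [measureReal_def]
  ring
lemma tail_upper_1d (N : ℕ) (hN : 2 ≤ N) (p K : ℝ) (hp1 : 1 < p) (hpN : p < N)
    (hK : 0 ≤ K) (R : ℝ) (hR : 1 ≤ R) :
    ∫ r in Ioi R, r ^ (N - 1) * psi (N : ℝ) p K r ≤
      K ^ p * (R ^ ((N : ℝ) - p * ((N : ℝ) - 1) / (p - 1)) / (p * ((N : ℝ) - 1) / (p - 1) - N)) := by
  have hp0 : 0 < p := by linarith
  have hp1' : (0:ℝ) < p - 1 := by linarith
  set q : ℝ := p / (p - 1) with hq_def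
  set e : ℝ := -((N : ℝ) - p) / p with he_def
  set β : ℝ := p * ((N : ℝ) - 1) / (p - 1) with hβ_def
  have hβN : (N : ℝ) < β := by
    rw [hβ_def, lt_div_iff₀ hp1']
    have hN2 : (2:ℝ) ≤ (N:ℝ) := by exact_mod_cast hN
    nlinarith
  have hexp : ((N:ℝ) - 1) - β < -1 := by linarith
  have hRpos : (0:ℝ) < R := by linarith
  -- pointwise bound
  have key : ∀ r ∈ Ioi R, r ^ (N - 1) * psi (N:ℝ) p K r ≤ K ^ p * r ^ (((N:ℝ) - 1) - β) := by
    intro r hr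
    have hr1 : (1:ℝ) ≤ r := le_trans hR (le_of_lt hr)
    have hr0 : (0:ℝ) < r := by linarith
    have hrq : (0:ℝ) < r ^ q := Real.rpow_pos_of_pos hr0 _
    have h1 : (1 + r ^ q) ^ (e - 1) ≤ (r ^ q) ^ (e - 1) := by
      apply Real.rpow_le_rpow_of_nonpos hrq (by linarith)
      have : e < 0 := by
        rw [he_def]; apply div_neg_of_neg_of_pos (by push_cast; linarith [hpN]) hp0
      linarith
    have hbase : K * r ^ (q - 1) * (1 + r ^ q) ^ (e - 1) ≤ K * r ^ ((q - 1) + q * (e - 1)) := by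
      rw [Real.rpow_add hr0, Real.rpow_mul hr0.le, ← mul_assoc]
      exact mul_le_mul_of_nonneg_left h1
        (mul_nonneg hK (Real.rpow_nonneg hr0.le _))
    have hψ : psi (N:ℝ) p K r ≤ K ^ p * r ^ (((q - 1) + q * (e - 1)) * p) := by
      unfold psi
      calc (K * r ^ (q - 1) * (1 + r ^ q) ^ (e - 1)) ^ p
          ≤ (K * r ^ ((q - 1) + q * (e - 1))) ^ p := by
            apply Real.rpow_le_rpow (by positivity) hbase hp0.le
        _ = K ^ p * r ^ (((q - 1) + q * (e - 1)) * p) := by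
            rw [Real.mul_rpow hK (Real.rpow_nonneg hr0.le _), Real.rpow_mul hr0.le]
    have hexp2 : ((q - 1) + q * (e - 1)) * p = -β := by
      rw [hq_def, he_def, hβ_def]; field_simp; ring
    rw [hexp2] at hψ
    calc r ^ (N - 1) * psi (N:ℝ) p K r ≤ r ^ (N - 1) * (K ^ p * r ^ (-β)) := by
          apply mul_le_mul_of_nonneg_left hψ (by positivity)
      _ = K ^ p * r ^ (((N:ℝ) - 1) - β) := by
          rw [← Real.rpow_natCast r (N - 1)]
          rw [← mul_assoc, mul_comm (r ^ ((N - 1 : ℕ) : ℝ)) (K ^ p), mul_assoc,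
            ← Real.rpow_add hr0]
          congr 2
          have : ((N - 1 : ℕ) : ℝ) = (N : ℝ) - 1 := by
            have : 1 ≤ N := by omega
            push_cast [this]; ring
          rw [this]; ring
  -- integrability
  have hint_bound : IntegrableOn (fun r : ℝ => K ^ p * r ^ (((N:ℝ) - 1) - β)) (Ioi R) := by
    exact (integrableOn_Ioi_rpow_of_lt hexp hRpos).const_mul _
  have hint_f : IntegrableOn (fun r : ℝ => r ^ (N - 1) * psi (N:ℝ) p K r) (Ioi R) := by
    apply Integrable.mono' hint_bound
    · exact ((measurable_id.pow_const _).mul (psi_meas _ _ _)).aestronglyMeasurable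
    · filter_upwards [ae_restrict_mem measurableSet_Ioi] with r hr
      rw [Real.norm_eq_abs, abs_of_nonneg]
      · exact key r hr
      · have hr0 : (0:ℝ) < r := lt_trans hRpos hr
        have : (0:ℝ) ≤ psi (N:ℝ) p K r := Real.rpow_nonneg (by positivity) _
        positivity
  calc ∫ r in Ioi R, r ^ (N - 1) * psi (N:ℝ) p K r
      ≤ ∫ r in Ioi R, K ^ p * r ^ (((N:ℝ) - 1) - β) :=
        setIntegral_mono_on hint_f hint_bound measurableSet_Ioi key
    _ = K ^ p * ∫ r in Ioi R, r ^ (((N:ℝ) - 1) - β) := integral_const_mul _ _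
    _ = K ^ p * (R ^ ((N : ℝ) - β) / (β - N)) := by
        rw [integral_Ioi_rpow_of_lt hexp hRpos]
        congr 1
        have h1 : ((N:ℝ) - 1) - β + 1 = (N:ℝ) - β := by ring
        rw [h1]
        rw [div_eq_div_iff (by linarith) (by linarith)]
        ring
lemma psi_lower (N : ℕ) (hN : 2 ≤ N) (p K : ℝ) (hp1 : 1 < p) (hpN : p < N) (hK : 0 < K)
    (s r : ℝ) (hs : 1 ≤ s) (h1 : s ≤ r) (h2 : r ≤ 2 * s) :
    (K * 2 ^ ((p / (p - 1) + 1) * (-((N:ℝ) - p) / p - 1))) ^ p *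
        s ^ (-(p * ((N : ℝ) - 1) / (p - 1))) ≤ psi (N : ℝ) p K r := by
  have hp0 : 0 < p := by linarith
  have hp1' : (0:ℝ) < p - 1 := by linarith
  set q : ℝ := p / (p - 1) with hq_def
  have hq1 : 1 < q := by rw [hq_def, lt_div_iff₀ hp1']; linarith
  set e : ℝ := -((N : ℝ) - p) / p with he_def
  have he0 : e - 1 ≤ 0 := by
    have : e < 0 := div_neg_of_neg_of_pos (by linarith) hp0
    linarith
  have hs0 : (0:ℝ) < s := by linarith
  have hr0 : (0:ℝ) < r := by linarith
  have hrq_le : r ^ q ≤ (2 * s) ^ q := Real.rpow_le_rpow hr0.le h2 (by linarith)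
  have h2sq : (1:ℝ) ≤ (2 * s) ^ q := Real.one_le_rpow (by linarith) (by linarith)
  have hsum : 1 + r ^ q ≤ 2 * (2 * s) ^ q := by nlinarith
  have hA : (2 * (2 * s) ^ q) ^ (e - 1) ≤ (1 + r ^ q) ^ (e - 1) :=
    Real.rpow_le_rpow_of_nonpos (by positivity) hsum he0
  have hB : s ^ (q - 1) ≤ r ^ (q - 1) := Real.rpow_le_rpow hs0.le h1 (by linarith)
  have hbase : K * 2 ^ ((q + 1) * (e - 1)) * s ^ (q * e - 1) ≤
      K * r ^ (q - 1) * (1 + r ^ q) ^ (e - 1) := by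
    have heq : K * 2 ^ ((q + 1) * (e - 1)) * s ^ (q * e - 1) =
        K * s ^ (q - 1) * (2 * (2 * s) ^ q) ^ (e - 1) := by
      rw [Real.mul_rpow (by norm_num) (by positivity),
        Real.mul_rpow (by norm_num : (0:ℝ) ≤ 2) hs0.le,
        Real.mul_rpow (Real.rpow_nonneg (by norm_num) _) (Real.rpow_nonneg hs0.le _),
        ← Real.rpow_mul (by norm_num : (0:ℝ) ≤ 2), ← Real.rpow_mul hs0.le,
        show (q + 1) * (e - 1) = (e - 1) + q * (e - 1) from by ring,
        show q * e - 1 = (q - 1) + q * (e - 1) from by ring,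
        Real.rpow_add (by norm_num : (0:ℝ) < 2), Real.rpow_add hs0]
      ring
    rw [heq]
    calc K * s ^ (q - 1) * (2 * (2 * s) ^ q) ^ (e - 1)
        ≤ K * s ^ (q - 1) * (1 + r ^ q) ^ (e - 1) :=
          mul_le_mul_of_nonneg_left hA (mul_nonneg hK.le (Real.rpow_nonneg hs0.le _))
      _ ≤ K * r ^ (q - 1) * (1 + r ^ q) ^ (e - 1) := by
          apply mul_le_mul_of_nonneg_right _ (Real.rpow_nonneg (by positivity) _)
          exact mul_le_mul_of_nonneg_left hB hK.le
  have hfinal : ((K * 2 ^ ((q + 1) * (e - 1))) * s ^ (q * e - 1)) ^ p ≤ psi (N:ℝ) p K r := by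
    unfold psi
    exact Real.rpow_le_rpow (by positivity) hbase hp0.le
  calc (K * 2 ^ ((q + 1) * (e - 1))) ^ p * s ^ (-(p * ((N : ℝ) - 1) / (p - 1)))
      = ((K * 2 ^ ((q + 1) * (e - 1))) * s ^ (q * e - 1)) ^ p := by
        rw [Real.mul_rpow (by positivity) (Real.rpow_nonneg hs0.le _),
          ← Real.rpow_mul hs0.le]
        congr 2
        rw [hq_def, he_def]; field_simp; ring
    _ ≤ psi (N:ℝ) p K r := hfinal
/-- Energy concentration of the rescaled Aubin–Talenti minimizer inside the unit ball
for large `λ`: with `U` normalized so `‖DU‖_{L^p(ℝ^N)} = 1` and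
`U_{λ,x₀}(x) = λ U(λ^{p/(N−p)}(x−x₀))`, there are `c₁, c₂ > 0` such that for `|x₀| < 1`,
`λ > 1`: `1 − c₂λ^{−p/(p−1)}/(1−|x₀|)^{(N−p)/(p−1)} ≤ ∫_{|x|<1}|DU_{λ,x₀}|^p ≤ 1 − c₁λ^{−p/(p−1)}`. -/
theorem stmt_13 (N : ℕ) (hN : 2 ≤ N) (p : ℝ) (hp1 : 1 < p) (hpN : p < N)
    (k₀ : ℝ) (hk : 0 < k₀)
    (hnorm : ∫ x : EuclideanSpace ℝ (Fin N),
        ‖gradient (fun y : EuclideanSpace ℝ (Fin N) =>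
            k₀ * (1 + ‖y‖ ^ (p / (p - 1))) ^ (-((N : ℝ) - p) / p)) x‖ ^ p = 1) :
    ∃ c₁ c₂ : ℝ, 0 < c₁ ∧ 0 < c₂ ∧
      ∀ x₀ : EuclideanSpace ℝ (Fin N), ‖x₀‖ < 1 →
      ∀ lam : ℝ, 1 < lam →
        1 - c₂ * lam ^ (-p / (p - 1)) / (1 - ‖x₀‖) ^ (((N : ℝ) - p) / (p - 1)) ≤
          (∫ x in Metric.ball (0 : EuclideanSpace ℝ (Fin N)) 1,
            ‖gradient (fun y : EuclideanSpace ℝ (Fin N) =>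
                lam * (k₀ * (1 + ‖lam ^ (p / ((N : ℝ) - p)) • (y - x₀)‖ ^ (p / (p - 1))) ^
                  (-((N : ℝ) - p) / p))) x‖ ^ p) ∧
        (∫ x in Metric.ball (0 : EuclideanSpace ℝ (Fin N)) 1,
            ‖gradient (fun y : EuclideanSpace ℝ (Fin N) =>
                lam * (k₀ * (1 + ‖lam ^ (p / ((N : ℝ) - p)) • (y - x₀)‖ ^ (p / (p - 1))) ^
                  (-((N : ℝ) - p) / p))) x‖ ^ p) ≤
          1 - c₁ * lam ^ (-p / (p - 1)) := by
  classical
  have hp0 : (0:ℝ) < p := lt_trans one_pos hp1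
  have hp1' : (0:ℝ) < p - 1 := by linarith
  have hN2 : (2:ℝ) ≤ (N:ℝ) := by exact_mod_cast hN
  have hpN' : p < (N:ℝ) := hpN
  have hNpp : (0:ℝ) < (N:ℝ) - p := by linarith
  set K : ℝ := k₀ * (((N:ℝ) - p) / p) * (p / (p - 1)) with hKdef
  have hKpos : 0 < K := by
    apply mul_pos (mul_pos hk (div_pos hNpp hp0)) (div_pos hp0 hp1')
  set β : ℝ := p * ((N:ℝ) - 1) / (p - 1) with hβdef
  have hβN : (N:ℝ) < β := by
    rw [hβdef, lt_div_iff₀ hp1']; nlinarith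
  -- pointwise formula for the norm of the gradient of U
  have hGpsi : ∀ x : EuclideanSpace ℝ (Fin N),
      ‖gradient (fun y : EuclideanSpace ℝ (Fin N) =>
          k₀ * (1 + ‖y‖ ^ (p / (p - 1))) ^ (-((N : ℝ) - p) / p)) x‖ ^ p
        = psi (N:ℝ) p K ‖x‖ := by
    intro x
    rw [(aux_gradU ((N:ℝ)) p k₀ hp1 x).gradient]
    have h := aux_norm ((N:ℝ)) p k₀ 1 1 hp1 hpN' hk one_pos one_pos x
    rw [one_mul, one_smul] at h
    rw [h, Real.one_rpow, one_mul]
    unfold psi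
    rw [hKdef]
  simp only [hGpsi] at hnorm
  have hGint : Integrable (fun x : EuclideanSpace ℝ (Fin N) => psi (N:ℝ) p K ‖x‖) := by
    by_contra h
    rw [integral_undef h] at hnorm
    exact zero_ne_one hnorm
  have hGnonneg : ∀ x : EuclideanSpace ℝ (Fin N), 0 ≤ psi (N:ℝ) p K ‖x‖ :=
    fun x => psi_nonneg _ _ _ hKpos.le _ (norm_nonneg x)
  set vB : ℝ := (volume (Metric.ball (0 : EuclideanSpace ℝ (Fin N)) 1)).toReal with hvBdef
  have hvB : 0 < vB := by
    rw [hvBdef]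
    exact ENNReal.toReal_pos (measure_ball_pos _ _ one_pos).ne' measure_ball_lt_top.ne
  set e : ℝ := -((N:ℝ) - p) / p with hedef
  set q : ℝ := p / (p - 1) with hqdef
  set aLow : ℝ := (K * 2 ^ ((q + 1) * (e - 1))) ^ p with haLowdef
  have haLow : 0 < aLow := Real.rpow_pos_of_pos (by positivity) p
  have h2N1 : (0:ℝ) < 2 ^ N - 1 := by
    have : (1:ℝ) < 2 ^ N := one_lt_pow₀ (by norm_num) (by omega)
    linarith
  set c₁ : ℝ := aLow * (2 ^ N - 1) * vB * 2 ^ ((N:ℝ) - β) with hc₁def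
  have hc₁ : 0 < c₁ := by positivity
  set D : ℝ := (N:ℝ) * vB * (K ^ p / (β - (N:ℝ))) with hDdef
  set c₂ : ℝ := max D 1 with hc₂def
  have hc₂ : 0 < c₂ := lt_of_lt_of_le one_pos (le_max_right _ _)
  refine ⟨c₁, c₂, hc₁, hc₂, ?_⟩
  intro x₀ hx₀ lam hlam
  have hlam0 : (0:ℝ) < lam := lt_trans one_pos hlam
  set c : ℝ := lam ^ (p / ((N:ℝ) - p)) with hcdef
  have hc1 : 1 < c := by
    rw [hcdef]
    exact (Real.one_lt_rpow_iff_of_pos hlam0).2 (Or.inl ⟨hlam, div_pos hp0 hNpp⟩)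
  have hc0 : (0:ℝ) < c := lt_trans one_pos hc1
  -- gradient formula for the rescaled function
  have hF : ∀ x : EuclideanSpace ℝ (Fin N),
      ‖gradient (fun y : EuclideanSpace ℝ (Fin N) =>
          lam * (k₀ * (1 + ‖c • (y - x₀)‖ ^ (p / (p - 1))) ^ (-((N : ℝ) - p) / p))) x‖ ^ p
        = (lam * c) ^ p * psi (N:ℝ) p K ‖c • (x - x₀)‖ := by
    intro x
    rw [(aux_gradResc ((N:ℝ)) p k₀ lam c hp1 x₀ x).gradient]
    rw [aux_norm ((N:ℝ)) p k₀ lam c hp1 hpN' hk hlam0 hc0 (c • (x - x₀))]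
    congr 1
  -- scaling identity
  have hscale : (lam * c) ^ p = (c : ℝ) ^ (N : ℕ) := by
    rw [hcdef, mul_comm, ← Real.rpow_add_one hlam0.ne',
      ← Real.rpow_natCast (lam ^ (p / ((N:ℝ) - p))) N,
      ← Real.rpow_mul hlam0.le, ← Real.rpow_mul hlam0.le]
    congr 1
    field_simp
    ring
  have hcN : (0:ℝ) < (c:ℝ) ^ (N:ℕ) := pow_pos hc0 N
  set S : Set (EuclideanSpace ℝ (Fin N)) := Metric.ball (-(c • x₀)) c with hSdef
  set J : ℝ := ∫ x in Sᶜ, psi (N:ℝ) p K ‖x‖ with hJdef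
  have hmem : ∀ x : EuclideanSpace ℝ (Fin N),
      x ∈ Metric.ball (0 : EuclideanSpace ℝ (Fin N)) 1 ↔ c • (x - x₀) ∈ S := by
    intro x
    rw [hSdef, Metric.mem_ball, Metric.mem_ball, dist_eq_norm, dist_eq_norm, sub_zero]
    have h1 : c • (x - x₀) - -(c • x₀) = c • x := by
      rw [smul_sub]; abel
    rw [h1, norm_smul, Real.norm_eq_abs, abs_of_pos hc0]
    exact (mul_lt_iff_lt_one_right hc0).symm
  -- main identity : the integral over the unit ball equals 1 - J
  have hMain : (∫ x in Metric.ball (0 : EuclideanSpace ℝ (Fin N)) 1,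
      ‖gradient (fun y : EuclideanSpace ℝ (Fin N) =>
          lam * (k₀ * (1 + ‖c • (y - x₀)‖ ^ (p / (p - 1))) ^ (-((N : ℝ) - p) / p))) x‖ ^ p)
      = 1 - J := by
    have hTot : ∫ x : EuclideanSpace ℝ (Fin N), psi ((N:ℝ)) p K ‖c • (x - x₀)‖
        = ((c:ℝ) ^ (N:ℕ))⁻¹ := by
      rw [aux_scale (fun w => psi ((N:ℝ)) p K ‖w‖) c hc0 x₀, hnorm, mul_one]
    have hInt2 : Integrable (fun x : EuclideanSpace ℝ (Fin N) =>
        psi ((N:ℝ)) p K ‖c • (x - x₀)‖) :=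
      (hGint.comp_smul hc0.ne').comp_sub_right x₀
    have hCompl : ∫ x in (Metric.ball (0 : EuclideanSpace ℝ (Fin N)) 1)ᶜ,
        psi ((N:ℝ)) p K ‖c • (x - x₀)‖ = ((c:ℝ) ^ (N:ℕ))⁻¹ * J := by
      rw [← integral_indicator measurableSet_ball.compl]
      have hpt : ∀ x : EuclideanSpace ℝ (Fin N),
          ((Metric.ball (0 : EuclideanSpace ℝ (Fin N)) 1)ᶜ).indicator
            (fun x => psi ((N:ℝ)) p K ‖c • (x - x₀)‖) x
          = (Sᶜ.indicator (fun y => psi ((N:ℝ)) p K ‖y‖)) (c • (x - x₀)) := by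
        intro x
        by_cases hx : x ∈ Metric.ball (0 : EuclideanSpace ℝ (Fin N)) 1
        · rw [Set.indicator_of_notMem (by simpa using hx),
            Set.indicator_of_notMem (by simpa using (hmem x).1 hx)]
        · rw [Set.indicator_of_mem (by simpa using hx),
            Set.indicator_of_mem (by simpa using fun h => hx ((hmem x).2 h))]
      simp_rw [hpt]
      rw [aux_scale (Sᶜ.indicator fun y => psi ((N:ℝ)) p K ‖y‖) c hc0 x₀,
        integral_indicator measurableSet_ball.compl]
    have hadd := integral_add_compl (measurableSet_ball :
        MeasurableSet (Metric.ball (0 : EuclideanSpace ℝ (Fin N)) 1)) hInt2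
    have hBall : ∫ x in Metric.ball (0 : EuclideanSpace ℝ (Fin N)) 1,
        psi ((N:ℝ)) p K ‖c • (x - x₀)‖
        = ((c:ℝ) ^ (N:ℕ))⁻¹ - ((c:ℝ) ^ (N:ℕ))⁻¹ * J := by
      rw [hCompl, hTot] at hadd
      linarith
    simp_rw [hF]
    rw [integral_const_mul, hscale, hBall, mul_sub, mul_inv_cancel₀ hcN.ne', ← mul_assoc,
      mul_inv_cancel₀ hcN.ne', one_mul]
  rw [hMain]
  constructor
  · -- lower bound
    set R : ℝ := c * (1 - ‖x₀‖) with hRdef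
    have hx₀' : (0:ℝ) < 1 - ‖x₀‖ := by linarith
    have hR0 : 0 < R := mul_pos hc0 hx₀'
    have hsub : Sᶜ ⊆ (Metric.ball (0 : EuclideanSpace ℝ (Fin N)) R)ᶜ := by
      intro x hx
      simp only [hSdef, Set.mem_compl_iff, Metric.mem_ball, dist_eq_norm, sub_zero, not_lt,
        sub_neg_eq_add] at hx ⊢
      have h1 : ‖x + c • x₀‖ ≤ ‖x‖ + c * ‖x₀‖ := by
        calc ‖x + c • x₀‖ ≤ ‖x‖ + ‖c • x₀‖ := norm_add_le _ _
          _ = ‖x‖ + c * ‖x₀‖ := by rw [norm_smul, Real.norm_eq_abs, abs_of_pos hc0]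
      rw [hRdef, mul_sub, mul_one]
      linarith only [h1, hx]
    have h1 : J ≤ ∫ x in (Metric.ball (0 : EuclideanSpace ℝ (Fin N)) R)ᶜ,
        psi ((N:ℝ)) p K ‖x‖ := by
      rw [hJdef]
      exact setIntegral_mono_set hGint.integrableOn
        (Filter.Eventually.of_forall hGnonneg) (HasSubset.Subset.eventuallyLE hsub)
    have h2 : ∫ x in (Metric.ball (0 : EuclideanSpace ℝ (Fin N)) R)ᶜ, psi ((N:ℝ)) p K ‖x‖
        ≤ c₂ * R ^ ((N:ℝ) - β) := by
      rcases le_or_gt 1 R with hR1 | hR1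
      · rw [tail_eq N hN ((N:ℝ)) p K R hR0]
        have ht := tail_upper_1d N hN p K hp1 hpN' hKpos.le R hR1
        rw [← hβdef] at ht
        calc (N:ℝ) * vB * ∫ r in Set.Ioi R, r ^ (N - 1) * psi ((N:ℝ)) p K r
            ≤ (N:ℝ) * vB * (K ^ p * (R ^ ((N:ℝ) - β) / (β - (N:ℝ)))) := by
              apply mul_le_mul_of_nonneg_left ht (by positivity)
          _ = D * R ^ ((N:ℝ) - β) := by rw [hDdef]; ring
          _ ≤ c₂ * R ^ ((N:ℝ) - β) :=
              mul_le_mul_of_nonneg_right (le_max_left _ _) (Real.rpow_nonneg hR0.le _)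
      · calc ∫ x in (Metric.ball (0 : EuclideanSpace ℝ (Fin N)) R)ᶜ, psi ((N:ℝ)) p K ‖x‖
            ≤ ∫ x : EuclideanSpace ℝ (Fin N), psi ((N:ℝ)) p K ‖x‖ :=
              setIntegral_le_integral hGint (Filter.Eventually.of_forall hGnonneg)
          _ = 1 := hnorm
          _ ≤ R ^ ((N:ℝ) - β) :=
              Real.one_le_rpow_of_pos_of_le_one_of_nonpos hR0 hR1.le (by linarith)
          _ ≤ c₂ * R ^ ((N:ℝ) - β) :=
              le_mul_of_one_le_left (Real.rpow_nonneg hR0.le _) (le_max_right _ _)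
    have h3 : R ^ ((N:ℝ) - β) =
        lam ^ (-p / (p - 1)) / (1 - ‖x₀‖) ^ (((N:ℝ) - p) / (p - 1)) := by
      rw [hRdef, Real.mul_rpow hc0.le hx₀'.le, hcdef, ← Real.rpow_mul hlam0.le, div_eq_mul_inv]
      congr 1
      · congr 1
        rw [hβdef]
        field_simp
        ring
      · rw [← Real.rpow_neg hx₀'.le]
        congr 1
        rw [hβdef]
        field_simp
        ring
    have h4 : J ≤ c₂ * (lam ^ (-p / (p - 1)) / (1 - ‖x₀‖) ^ (((N:ℝ) - p) / (p - 1))) := by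
      rw [← h3]
      exact le_trans h1 h2
    have h5 : c₂ * lam ^ (-p / (p - 1)) / (1 - ‖x₀‖) ^ (((N:ℝ) - p) / (p - 1))
        = c₂ * (lam ^ (-p / (p - 1)) / (1 - ‖x₀‖) ^ (((N:ℝ) - p) / (p - 1))) :=
      mul_div_assoc _ _ _
    rw [h5]
    linarith only [h4]
  · -- upper bound
    have hnt : Nontrivial (EuclideanSpace ℝ (Fin N)) :=
      Module.nontrivial_of_finrank_pos (R := ℝ)
        (by rw [finrank_euclideanSpace_fin]; omega : 0 < Module.finrank ℝ _)
    set A : Set (EuclideanSpace ℝ (Fin N)) :=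
      Metric.ball (0 : EuclideanSpace ℝ (Fin N)) (2*(2*c)) \
        Metric.ball (0 : EuclideanSpace ℝ (Fin N)) (2*c) with hAdef
    have hAsub : A ⊆ Sᶜ := by
      intro x hx
      obtain ⟨hx1, hx2⟩ := hx
      rw [Metric.mem_ball, dist_eq_norm, sub_zero] at hx1
      rw [Metric.mem_ball, dist_eq_norm, sub_zero] at hx2
      have h2c : 2*c ≤ ‖x‖ := not_lt.1 hx2
      simp only [hSdef, Set.mem_compl_iff, Metric.mem_ball, dist_eq_norm, sub_neg_eq_add, not_lt]
      have h1 : ‖x‖ ≤ ‖x + c • x₀‖ + c * ‖x₀‖ := by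
        have h := norm_add_le (x + c • x₀) (-(c • x₀))
        simp only [add_neg_cancel_right, norm_neg] at h
        rwa [norm_smul, Real.norm_eq_abs, abs_of_pos hc0] at h
      have h2 : c * ‖x₀‖ ≤ c * 1 := mul_le_mul_of_nonneg_left hx₀.le hc0.le
      linarith only [h1, h2, h2c]
    have hconst : ∀ x ∈ A,
        (K * 2 ^ ((p / (p - 1) + 1) * (-((N:ℝ) - p) / p - 1))) ^ p *
          (2*c) ^ (-(p * ((N : ℝ) - 1) / (p - 1))) ≤ psi ((N:ℝ)) p K ‖x‖ := by
      intro x hx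
      obtain ⟨hx1, hx2⟩ := hx
      rw [Metric.mem_ball, dist_eq_norm, sub_zero] at hx1
      rw [Metric.mem_ball, dist_eq_norm, sub_zero] at hx2
      exact psi_lower N hN p K hp1 hpN' hKpos (2*c) ‖x‖ (by linarith) (not_lt.1 hx2) hx1.le
    have hAmeas : MeasurableSet A := measurableSet_ball.diff measurableSet_ball
    have hAfin : volume A ≠ ⊤ :=
      (lt_of_le_of_lt (measure_mono Set.diff_subset) measure_ball_lt_top).ne
    have hvolA : (volume A).toReal = ((2*(2*c)) ^ (N:ℕ) - (2*c) ^ (N:ℕ)) * vB := by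
      rw [hAdef, measure_diff (Metric.ball_subset_ball (by linarith))
        measurableSet_ball.nullMeasurableSet measure_ball_lt_top.ne,
        Measure.addHaar_ball volume _ (by positivity : (0:ℝ) ≤ 2*(2*c)),
        Measure.addHaar_ball volume _ (by positivity : (0:ℝ) ≤ 2*c),
        finrank_euclideanSpace_fin]
      rw [ENNReal.toReal_sub_of_le
        (mul_le_mul_left (ENNReal.ofReal_le_ofReal
          (pow_le_pow_left₀ (by positivity) (by linarith) N)) _)
        (ENNReal.mul_ne_top ENNReal.ofReal_ne_top measure_ball_lt_top.ne),
        ENNReal.toReal_mul, ENNReal.toReal_mul,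
        ENNReal.toReal_ofReal (by positivity), ENNReal.toReal_ofReal (by positivity),
        ← hvBdef]
      ring
    have h4 := setIntegral_ge_of_const_le hAmeas hAfin hconst hGint.integrableOn
    rw [smul_eq_mul, measureReal_def, mul_comm] at h4
    have h5 : ∫ x in A, psi ((N:ℝ)) p K ‖x‖ ≤ J := by
      rw [hJdef]
      exact setIntegral_mono_set hGint.integrableOn
        (Filter.Eventually.of_forall hGnonneg) (HasSubset.Subset.eventuallyLE hAsub)
    have hXY : (2*c) ^ (-(p * ((N : ℝ) - 1) / (p - 1))) * ((2*c) ^ (N:ℕ) : ℝ)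
        = 2 ^ ((N:ℝ) - β) * lam ^ (-p / (p - 1)) := by
      rw [← Real.rpow_natCast (2*c) N, ← Real.rpow_add (by positivity)]
      have e2 : -(p * ((N : ℝ) - 1) / (p - 1)) + (N:ℕ) = (N:ℝ) - β := by
        rw [hβdef]; push_cast; ring
      rw [e2, Real.mul_rpow (by norm_num) hc0.le]
      congr 1
      rw [hcdef, ← Real.rpow_mul hlam0.le]
      congr 1
      rw [hβdef]
      field_simp
      ring
    have haLow' : (K * 2 ^ ((p / (p - 1) + 1) * (-((N:ℝ) - p) / p - 1))) ^ p = aLow := by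
      rw [haLowdef, hqdef, hedef]
    have h6 : (K * 2 ^ ((p / (p - 1) + 1) * (-((N:ℝ) - p) / p - 1))) ^ p *
          (2*c) ^ (-(p * ((N : ℝ) - 1) / (p - 1))) * (volume A).toReal
        = c₁ * lam ^ (-p / (p - 1)) := by
      rw [haLow', hvolA, hc₁def]
      have e3 : ((2*(2*c)) ^ (N:ℕ) : ℝ) = 2 ^ (N:ℕ) * (2*c) ^ (N:ℕ) := by
        rw [← mul_pow]
      rw [e3]
      calc aLow * (2*c) ^ (-(p * ((N : ℝ) - 1) / (p - 1))) *
            ((2 ^ (N:ℕ) * (2*c) ^ (N:ℕ) - (2*c) ^ (N:ℕ)) * vB)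
          = aLow * ((2:ℝ) ^ (N:ℕ) - 1) * vB *
              ((2*c) ^ (-(p * ((N : ℝ) - 1) / (p - 1))) * ((2*c) ^ (N:ℕ) : ℝ)) := by ring
        _ = aLow * ((2:ℝ) ^ (N:ℕ) - 1) * vB * (2 ^ ((N:ℝ) - β) * lam ^ (-p / (p - 1))) := by
            rw [hXY]
        _ = aLow * (2 ^ N - 1) * vB * 2 ^ ((N:ℝ) - β) * lam ^ (-p / (p - 1)) := by ring
    linarith only [h4, h5, le_of_eq h6.symm, h6.symm.le.trans (le_trans h4 h5)]
end
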